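/- arXiv:1901.06096 — 14 statements merged into one kernel-verified Lean document; each statement's English description precedes it below -/
import Mathlib

section
/- Let N and d be positive integers with N ≥ d+1, let 1 ≤ p ≤ 2, and let A be a real N×N matrix of rank d with all diagonal entries equal to 1. Then E_p(A) ≥ M(1/(N−d), p, N), where M(c, p, N) is the infimum of ∑_{i=1}^N (t_i/(c − t_i))^{p/2} over all tuples (t_1, …, t_N) with t_i ∈ [0, c) for each i and ∑_{i=1}^N t_i = 1. -/
/-!
Let `Q` be the orthogonal projection onto `ker A`, so that `A * Q = 0` and `tr Q = N - d`.
Since `A i i = 1`, the `(i, i)` entry of `A * Q = 0` reads `Q i i = -∑_{j ≠ i} A i j * Q i j`;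
Cauchy–Schwarz together with `∑_{j ≠ i} Q i j ^ 2 = Q i i - Q i i ^ 2` then gives
`Q i i / (1 - Q i i) ≤ ∑_{j ≠ i} A i j ^ 2`. As `x ↦ x ^ (p / 2)` is subadditive for `p ≤ 2`,
the right side raised to `p / 2` is at most the `i`-th row's share of the energy. Finally the
tuple `t i = Q i i / (N - d)` is admissible for `M(1 / (N - d), p, N)` and has
`t i / (1 / (N - d) - t i) = Q i i / (1 - Q i i)`.
-/

open Finset Module

theorem Real.rpow_sum_le_sum_rpow {ι : Type*} (s : Finset ι) {f : ι → ℝ}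
    (hf : ∀ i ∈ s, 0 ≤ f i) {r : ℝ} (hr0 : 0 < r) (hr1 : r ≤ 1) :
    (∑ i ∈ s, f i) ^ r ≤ ∑ i ∈ s, f i ^ r := by
  classical
  induction s using Finset.induction with
  | empty => simp [Real.zero_rpow hr0.ne']
  | insert a s ha ih =>
    rw [sum_insert ha, sum_insert ha]
    have hs := forall_mem_insert .. |>.mp hf
    exact (Real.rpow_add_le_add_rpow hs.1 (sum_nonneg hs.2) hr0.le hr1).trans
      (add_le_add_right (ih hs.2) _)

theorem nonneg_and_lt_one_of_sq_le_mul_sub_sq {q T : ℝ} (hT : 0 ≤ T)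
    (h : q ^ 2 ≤ T * (q - q ^ 2)) : 0 ≤ q ∧ q < 1 := by
  have hq0 : 0 ≤ q := by nlinarith
  refine ⟨hq0, ?_⟩
  by_contra! hq1
  nlinarith [mul_nonneg hT (mul_nonneg hq0 (sub_nonneg.mpr hq1))]

theorem div_one_sub_le_of_sq_le_mul_sub_sq {q T : ℝ} (hT : 0 ≤ T)
    (h : q ^ 2 ≤ T * (q - q ^ 2)) : q / (1 - q) ≤ T := by
  obtain ⟨hq0, hq1⟩ := nonneg_and_lt_one_of_sq_le_mul_sub_sq hT h
  rw [div_le_iff₀ (by linarith)]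
  rcases hq0.eq_or_lt with rfl | hq
  · simpa using hT
  · nlinarith

namespace Matrix

variable {n : Type*} [Fintype n]

theorem exists_isStarProjection_mul_eq_zero {m : Type*} (A : Matrix m n ℝ) :
    ∃ Q : Matrix n n ℝ, IsStarProjection Q ∧ A * Q = 0 ∧
      Q.trace = Fintype.card n - A.rank := by
  let e := (WithLp.linearEquiv 2 ℝ (n → ℝ)).symm
  let K := (LinearMap.ker A.mulVecLin).map e.toLinearMap
  have hK : finrank ℝ K + A.rank = Fintype.card n := by
    rw [LinearEquiv.finrank_map_eq, add_comm, ← finrank_fintype_fun_eq_card (R := ℝ)]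
    exact LinearMap.finrank_range_add_finrank_ker A.mulVecLin
  let b := stdOrthonormalBasis ℝ K
  let V : Matrix n (Fin (finrank ℝ K)) ℝ := of fun i k => (b k : EuclideanSpace ℝ n) i
  have hVV : Vᵀ * V = 1 := by
    ext k l
    have h := orthonormal_iff_ite.mp b.orthonormal k l
    rw [Submodule.coe_inner, PiLp.inner_apply] at h
    simp only [RCLike.inner_apply, conj_trivial] at h
    rw [mul_apply, one_apply, ← h]
    exact sum_congr rfl fun i _ => mul_comm _ _
  have hAV : A * V = 0 := by
    ext i k
    exact congrFun (LinearMap.mem_ker.mp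
      ((Submodule.mem_map_equiv (p := LinearMap.ker A.mulVecLin)).1 (b k).2)) i
  refine ⟨V * Vᵀ, ⟨?_, ?_⟩, by rw [← Matrix.mul_assoc, hAV, Matrix.zero_mul], ?_⟩
  · rw [IsIdempotentElem, Matrix.mul_assoc, ← Matrix.mul_assoc Vᵀ, hVV, Matrix.one_mul]
  · exact isHermitian_iff_isSymm.mpr (by rw [IsSymm, transpose_mul, transpose_transpose])
  · rw [trace_mul_comm, hVV, trace_one, Fintype.card_fin, ← hK]
    push_cast
    ring

variable [DecidableEq n]

theorem sq_diag_le_of_mul_eq_zero {A Q : Matrix n n ℝ} (hQ : IsStarProjection Q)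
    (hAQ : A * Q = 0) {i : n} (hAi : A i i = 1) :
    Q i i ^ 2 ≤ (∑ j ∈ univ.erase i, A i j ^ 2) * (Q i i - Q i i ^ 2) := by
  have hsymm : ∀ j, Q j i = Q i j :=
    (isHermitian_iff_isSymm.mp hQ.isSelfAdjoint.isHermitian).apply i
  have hdiag : Q i i = Q i i ^ 2 + ∑ j ∈ univ.erase i, Q i j ^ 2 := by
    conv_lhs => rw [← hQ.isIdempotentElem.eq]
    rw [mul_apply, ← add_sum_erase _ _ (mem_univ i)]
    simp only [hsymm, sq]
  have hrow : Q i i + ∑ j ∈ univ.erase i, A i j * Q i j = 0 := by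
    have := congrFun (congrFun hAQ i) i
    rw [mul_apply, ← add_sum_erase _ _ (mem_univ i)] at this
    simpa only [hAi, one_mul, hsymm, zero_apply] using this
  calc Q i i ^ 2 = (∑ j ∈ univ.erase i, A i j * Q i j) ^ 2 := by
        rw [eq_neg_of_add_eq_zero_left hrow, neg_sq]
    _ ≤ (∑ j ∈ univ.erase i, A i j ^ 2) * ∑ j ∈ univ.erase i, Q i j ^ 2 :=
        sum_mul_sq_le_sq_mul_sq _ _ _
    _ = (∑ j ∈ univ.erase i, A i j ^ 2) * (Q i i - Q i i ^ 2) := by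
        rw [eq_sub_of_add_eq' hdiag.symm]

theorem rpow_div_one_sub_diag_le_sum_erase {A Q : Matrix n n ℝ} (hQ : IsStarProjection Q)
    (hAQ : A * Q = 0) {i : n} (hAi : A i i = 1) {p : ℝ} (hp0 : 0 < p) (hp2 : p ≤ 2) :
    (Q i i / (1 - Q i i)) ^ (p / 2) ≤ ∑ j ∈ univ.erase i, |A i j| ^ p := by
  have hT : 0 ≤ ∑ j ∈ univ.erase i, A i j ^ 2 := sum_nonneg fun j _ => sq_nonneg _
  have hsq := sq_diag_le_of_mul_eq_zero hQ hAQ hAi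
  obtain ⟨hq0, hq1⟩ := nonneg_and_lt_one_of_sq_le_mul_sub_sq hT hsq
  calc (Q i i / (1 - Q i i)) ^ (p / 2) ≤ (∑ j ∈ univ.erase i, A i j ^ 2) ^ (p / 2) :=
        Real.rpow_le_rpow (div_nonneg hq0 (by linarith))
          (div_one_sub_le_of_sq_le_mul_sub_sq hT hsq) (by positivity)
    _ ≤ ∑ j ∈ univ.erase i, (A i j ^ 2) ^ (p / 2) :=
        Real.rpow_sum_le_sum_rpow _ (fun j _ => sq_nonneg _) (by positivity) (by linarith)
    _ = ∑ j ∈ univ.erase i, |A i j| ^ p := by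
        refine sum_congr rfl fun j _ => ?_
        rw [← sq_abs, ← Real.rpow_two, ← Real.rpow_mul (abs_nonneg _)]
        ring_nf

end Matrix

theorem csInf_le_sum_rpow_div_sub {ι : Type*} [Fintype ι] {c p : ℝ} {t : ι → ℝ}
    (ht : ∀ i, 0 ≤ t i ∧ t i < c) (hsum : ∑ i, t i = 1) :
    sInf {s : ℝ | ∃ t : ι → ℝ, (∀ i, 0 ≤ t i ∧ t i < c) ∧ (∑ i, t i = 1) ∧
        s = ∑ i, (t i / (c - t i)) ^ (p / 2)} ≤ ∑ i, (t i / (c - t i)) ^ (p / 2) := by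
  refine csInf_le ⟨0, ?_⟩ ⟨t, ht, hsum, rfl⟩
  rintro s ⟨u, hu, -, rfl⟩
  exact sum_nonneg fun i _ =>
    Real.rpow_nonneg (div_nonneg (hu i).1 (sub_nonneg.mpr (hu i).2.le)) _

theorem pFrameEnergy_ge_M_of_le_two_general (N d : ℕ) (hN : d + 1 ≤ N)
    (p : ℝ) (hp1 : 1 ≤ p) (hp2 : p ≤ 2)
    (A : Matrix (Fin N) (Fin N) ℝ) (hrank : A.rank = d) (hdiag : ∀ i, A i i = 1) :
    sInf {s : ℝ | ∃ t : Fin N → ℝ,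
        (∀ i, 0 ≤ t i ∧ t i < 1 / ((N : ℝ) - (d : ℝ))) ∧ (∑ i, t i = 1) ∧
        s = ∑ i, (t i / (1 / ((N : ℝ) - (d : ℝ)) - t i)) ^ (p / 2)} ≤
      ∑ i, ∑ j, if i = j then 0 else |A i j| ^ p := by
  obtain ⟨Q, hQ, hAQ, htrace⟩ := A.exists_isStarProjection_mul_eq_zero
  have hNd : (0 : ℝ) < N - d := by
    have : (d : ℝ) + 1 ≤ N := by exact_mod_cast hN
    linarith
  set c := 1 / ((N : ℝ) - d)
  have hc : 0 < c := one_div_pos.mpr hNd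
  have hQdiag i : 0 ≤ Q i i ∧ Q i i < 1 :=
    nonneg_and_lt_one_of_sq_le_mul_sub_sq (sum_nonneg fun j _ => sq_nonneg _)
      (Matrix.sq_diag_le_of_mul_eq_zero hQ hAQ (hdiag i))
  calc _ ≤ ∑ i, (Q i i * c / (c - Q i i * c)) ^ (p / 2) := by
        refine csInf_le_sum_rpow_div_sub (fun i => ⟨mul_nonneg (hQdiag i).1 hc.le,
          mul_lt_of_lt_one_left hc (hQdiag i).2⟩) ?_
        rw [← sum_mul]
        change Q.trace * c = 1
        rw [htrace, Fintype.card_fin, hrank, mul_one_div_cancel hNd.ne']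
    _ = ∑ i, (Q i i / (1 - Q i i)) ^ (p / 2) := by
        refine sum_congr rfl fun i _ => ?_
        rw [← one_sub_mul, mul_div_mul_right _ _ hc.ne']
    _ ≤ ∑ i, ∑ j ∈ univ.erase i, |A i j| ^ p := sum_le_sum fun i _ =>
        Matrix.rpow_div_one_sub_diag_le_sum_erase hQ hAQ (hdiag i) (by linarith) hp2
    _ = ∑ i, ∑ j, if i = j then 0 else |A i j| ^ p := by
        simp [sum_ite, filter_ne]

/-- For `1 ≤ p ≤ 2` and any real `N × N` matrix `A` of rank `d`, `N ≥ d + 1`, with unit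
diagonal entries, the `p`-frame energy `E_p(A) = ∑_{i ≠ j} |A_{ij}|^p` is at least
`M(1/(N-d), p, N)`, the infimum of `∑ᵢ (tᵢ/(c - tᵢ))^{p/2}` over all tuples with
`tᵢ ∈ [0, c)` and `∑ tᵢ = 1`, where `c = 1/(N-d)`. -/
theorem pFrameEnergy_ge_M_of_le_two (N d : ℕ) (hd : 0 < d) (hN : d + 1 ≤ N)
    (p : ℝ) (hp1 : 1 ≤ p) (hp2 : p ≤ 2)
    (A : Matrix (Fin N) (Fin N) ℝ) (hrank : A.rank = d) (hdiag : ∀ i, A i i = 1) :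
    sInf {s : ℝ | ∃ t : Fin N → ℝ,
        (∀ i, 0 ≤ t i ∧ t i < 1 / ((N : ℝ) - (d : ℝ))) ∧ (∑ i, t i = 1) ∧
        s = ∑ i, (t i / (1 / ((N : ℝ) - (d : ℝ)) - t i)) ^ (p / 2)} ≤
      ∑ i, ∑ j, if i = j then 0 else |A i j| ^ p :=
  pFrameEnergy_ge_M_of_le_two_general N d hN p hp1 hp2 A hrank hdiag
end

section
/- Let N and d be positive integers with N ≥ d+1, let p ≥ 2, and let A be a real N×N matrix of rank d with all diagonal entries equal to 1. Then E_p(A) ≥ (N−1)^{1−p/2} · M(1/(N−d), p, N), where M(c, p, N) is the infimum of ∑_{i=1}^N (t_i/(c − t_i))^{p/2} over all tuples (t_1, …, t_N) with t_i ∈ [0, c) for each i and ∑_{i=1}^N t_i = 1. -/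
/-!
Write `a i` for the rows of `A` and `r i = ∑_{j ≠ i} A i j ^ 2`, so `‖a i‖² = 1 + r i`. The rows
span a `d`-dimensional space `V`, and since `⟪a i, e i⟫ = 1` Cauchy–Schwarz gives
`(1 + r i)⁻¹ ≤ ‖P_V e i‖²`; summing, `∑ (1 + r i)⁻¹ ≤ trace P_V = d`. Hence
`∑ r i / (1 + r i) ≥ N - d`, and the tuple `t i ∝ r i / (1 + r i)` is admissible for
`M(c, p, N)`, `c = 1/(N-d)`, with `t i / (c - t i) ≤ r i`, so `M ≤ ∑ r i ^ (p/2)`. The power mean inequality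
on each row, `(N-1)^{1-p/2} r i ^ (p/2) ≤ ∑_{j ≠ i} |A i j| ^ p`, finishes the proof.
-/

open scoped RealInnerProductSpace
open Finset Module

theorem sum_inv_norm_sq_le_finrank {ι E : Type*} [Fintype ι] [NormedAddCommGroup E]
    [InnerProductSpace ℝ E] [FiniteDimensional ℝ E] (b : OrthonormalBasis ι ℝ E)
    (V : Submodule ℝ E) (a : ι → E) (ha : ∀ i, a i ∈ V) (hab : ∀ i, ⟪a i, b i⟫ = 1) :
    ∑ i, (‖a i‖ ^ 2)⁻¹ ≤ finrank ℝ V := by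
  set P := V.starProjection
  have hP : ∀ i, (‖a i‖ ^ 2)⁻¹ ≤ ⟪b i, P (b i)⟫ := by
    intro i
    have hcs : 1 ≤ ‖a i‖ * ‖P (b i)‖ :=
      calc (1 : ℝ) = ⟪a i, P (b i)⟫ := by
            rw [← hab i, ← V.inner_starProjection_left_eq_right,
              V.starProjection_eq_self_iff.mpr (ha i)]
        _ ≤ ‖a i‖ * ‖P (b i)‖ := real_inner_le_norm _ _
    have hai : 0 < ‖a i‖ := by
      by_contra! h
      nlinarith [norm_nonneg (a i), norm_nonneg (P (b i))]
    -- `⟪b i, P (b i)⟫ = ⟪b i, P (P (b i))⟫ = ‖P (b i)‖ ^ 2`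
    rw [← V.starProjection_eq_self_iff.mpr (V.starProjection_apply_mem (b i)),
      ← V.inner_starProjection_left_eq_right, real_inner_self_eq_norm_sq,
      inv_le_iff_one_le_mul₀ (by positivity)]
    nlinarith
  have hproj : LinearMap.IsProj V (P : E →ₗ[ℝ] E) :=
    ⟨V.starProjection_apply_mem, fun x hx => V.starProjection_eq_self_iff.mpr hx⟩
  calc ∑ i, (‖a i‖ ^ 2)⁻¹ ≤ ∑ i, ⟪b i, P (b i)⟫ := sum_le_sum fun i _ => hP i
    _ = LinearMap.trace ℝ E P := (LinearMap.trace_eq_sum_inner _ b).symm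
    _ = finrank ℝ V := hproj.trace

namespace Matrix

variable {ι : Type*} [Fintype ι] [DecidableEq ι]

theorem sum_inv_sum_row_sq_le_rank (A : Matrix ι ι ℝ) (hA : ∀ i, A i i = 1) :
    ∑ i, (∑ j, A i j ^ 2)⁻¹ ≤ A.rank := by
  let a i := WithLp.toLp 2 (A i)
  have hrank : finrank ℝ (Submodule.span ℝ (Set.range a)) = A.rank := by
    rw [A.rank_eq_finrank_span_row, ← (WithLp.linearEquiv 2 ℝ (ι → ℝ)).finrank_map_eq,
      Submodule.map_span, ← Set.range_comp]
    rfl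
  have hnorm : ∀ i, ‖a i‖ ^ 2 = ∑ j, A i j ^ 2 := fun i => by
    simp [a, EuclideanSpace.norm_sq_eq]
  have hinner : ∀ i, ⟪a i, EuclideanSpace.basisFun ι ℝ i⟫ = 1 := fun i => by
    simp [a, EuclideanSpace.inner_single_right, hA i]
  simpa only [hnorm, hrank] using sum_inv_norm_sq_le_finrank (EuclideanSpace.basisFun ι ℝ)
    _ a (fun i => Submodule.subset_span (Set.mem_range_self i)) hinner

theorem card_sub_rank_le_sum_div_one_add (A : Matrix ι ι ℝ) (hA : ∀ i, A i i = 1) :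
    (Fintype.card ι : ℝ) - A.rank ≤
      ∑ i, (∑ j ∈ univ.erase i, A i j ^ 2) / (1 + ∑ j ∈ univ.erase i, A i j ^ 2) := by
  have hrow : ∀ i, ∑ j, A i j ^ 2 = 1 + ∑ j ∈ univ.erase i, A i j ^ 2 := fun i => by
    rw [← add_sum_erase _ _ (mem_univ i), hA, one_pow]
  have hfrac : ∀ i, (∑ j ∈ univ.erase i, A i j ^ 2) / (1 + ∑ j ∈ univ.erase i, A i j ^ 2) =
      1 - (∑ j, A i j ^ 2)⁻¹ := fun i => by
    have : 0 ≤ ∑ j ∈ univ.erase i, A i j ^ 2 := sum_nonneg fun j _ => sq_nonneg _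
    rw [hrow]
    field_simp [(by linarith : 1 + ∑ j ∈ univ.erase i, A i j ^ 2 ≠ 0)]
    ring
  have key := A.sum_inv_sum_row_sq_le_rank hA
  simp only [hfrac, sum_sub_distrib, sum_const, card_univ, nsmul_eq_mul, mul_one]
  linarith

end Matrix

theorem Real.card_rpow_mul_sum_rpow_le {ι : Type*} (s : Finset ι) (x : ι → ℝ) {q : ℝ}
    (hq : 1 ≤ q) (hx : ∀ i ∈ s, 0 ≤ x i) :
    (#s : ℝ) ^ (1 - q) * (∑ i ∈ s, x i) ^ q ≤ ∑ i ∈ s, x i ^ q := by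
  rcases s.eq_empty_or_nonempty with rfl | hs
  · simp [Real.zero_rpow (by linarith : q ≠ 0)]
  have hcard : (0 : ℝ) < #s := by exact_mod_cast hs.card_pos
  calc (#s : ℝ) ^ (1 - q) * (∑ i ∈ s, x i) ^ q
      ≤ (#s : ℝ) ^ (1 - q) * ((#s : ℝ) ^ (q - 1) * ∑ i ∈ s, x i ^ q) := by
        gcongr; exact Real.rpow_sum_le_const_mul_sum_rpow_of_nonneg s hq hx
    _ = ∑ i ∈ s, x i ^ q := by
        rw [← mul_assoc, ← Real.rpow_add hcard]; norm_num

theorem card_sub_one_rpow_mul_sum_erase_sq_le {ι : Type*} [Fintype ι] [DecidableEq ι] (i : ι)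
    (f : ι → ℝ) {p : ℝ} (hp : 2 ≤ p) :
    ((Fintype.card ι : ℝ) - 1) ^ (1 - p / 2) * (∑ j ∈ univ.erase i, f j ^ 2) ^ (p / 2) ≤
      ∑ j ∈ univ.erase i, |f j| ^ p := by
  have hcard : ((univ.erase i).card : ℝ) = Fintype.card ι - 1 := by
    rw [card_erase_of_mem (mem_univ i), card_univ, Nat.cast_pred (Fintype.card_pos_iff.mpr ⟨i⟩)]
  have hsq : ∀ j, (f j ^ 2) ^ (p / 2) = |f j| ^ p := fun j => by
    rw [← sq_abs, ← Real.rpow_natCast, ← Real.rpow_mul (abs_nonneg _), Nat.cast_ofNat,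
      mul_div_cancel₀ p two_ne_zero]
  simpa only [hcard, hsq] using Real.card_rpow_mul_sum_rpow_le (univ.erase i) (f · ^ 2) (q := p / 2)
    (by linarith) (fun _ _ => sq_nonneg _)

/-- The constant `M(c, p, N)` of the paper, with `N = card ι`. -/
noncomputable def ratioPowSumInf (ι : Type*) [Fintype ι] (c p : ℝ) : ℝ :=
  sInf {s : ℝ | ∃ t : ι → ℝ, (∀ i, 0 ≤ t i ∧ t i < c) ∧ (∑ i, t i = 1) ∧
    s = ∑ i, (t i / (c - t i)) ^ (p / 2)}

section ratioPowSumInf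

variable {ι : Type*} [Fintype ι] {c : ℝ}

theorem ratioPowSumInf_le (p : ℝ) {t : ι → ℝ} (ht : ∀ i, 0 ≤ t i ∧ t i < c)
    (hsum : ∑ i, t i = 1) :
    ratioPowSumInf ι c p ≤ ∑ i, (t i / (c - t i)) ^ (p / 2) := by
  refine csInf_le ⟨0, ?_⟩ ⟨t, ht, hsum, rfl⟩
  rintro _ ⟨u, hu, -, rfl⟩
  exact sum_nonneg fun i _ => Real.rpow_nonneg (div_nonneg (hu i).1 (by linarith [hu i])) _

theorem exists_sum_eq_one_div_sub_le (hc : 0 < c) {r : ι → ℝ} (hr : ∀ i, 0 ≤ r i)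
    (hS : c⁻¹ ≤ ∑ i, r i / (1 + r i)) :
    ∃ t : ι → ℝ, (∀ i, 0 ≤ t i ∧ t i < c) ∧ ∑ i, t i = 1 ∧ ∀ i, t i / (c - t i) ≤ r i := by
  set S := ∑ i, r i / (1 + r i)
  have hS0 : 0 < S := (inv_pos.mpr hc).trans_le hS
  have hcS : 1 ≤ c * S := ((inv_le_iff_one_le_mul₀ hc).mp hS).trans_eq (mul_comm _ _)
  set t : ι → ℝ := fun i => r i / (1 + r i) / S with ht
  have ht0 : ∀ i, 0 ≤ t i := fun i => by have := hr i; positivity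
  have htr : ∀ i, t i * (1 + r i) ≤ c * r i := fun i => by
    rw [ht, div_mul_eq_mul_div, div_mul_cancel₀ _ (by linarith [hr i]), div_le_iff₀ hS0]
    nlinarith [hr i]
  have htc : ∀ i, t i < c := fun i => by nlinarith [htr i, hr i, ht0 i]
  refine ⟨t, fun i => ⟨ht0 i, htc i⟩, by rw [← sum_div, div_self hS0.ne'], fun i => ?_⟩
  rw [div_le_iff₀ (sub_pos.mpr (htc i))]
  linarith [htr i]

theorem ratioPowSumInf_le_sum_rpow (hc : 0 < c) {p : ℝ} (hp : 0 ≤ p) {r : ι → ℝ}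
    (hr : ∀ i, 0 ≤ r i) (hS : c⁻¹ ≤ ∑ i, r i / (1 + r i)) :
    ratioPowSumInf ι c p ≤ ∑ i, r i ^ (p / 2) := by
  obtain ⟨t, ht, hsum, htr⟩ := exists_sum_eq_one_div_sub_le hc hr hS
  refine (ratioPowSumInf_le p ht hsum).trans (sum_le_sum fun i _ => ?_)
  exact Real.rpow_le_rpow (div_nonneg (ht i).1 (sub_nonneg.mpr (ht i).2.le)) (htr i)
    (by positivity)

end ratioPowSumInf

theorem pFrameEnergy_ge_M_of_two_le_general (N d : ℕ) (hN : d + 1 ≤ N)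
    (p : ℝ) (hp : 2 ≤ p)
    (A : Matrix (Fin N) (Fin N) ℝ) (hrank : A.rank = d) (hdiag : ∀ i, A i i = 1) :
    ((N : ℝ) - 1) ^ (1 - p / 2) *
      sInf {s : ℝ | ∃ t : Fin N → ℝ,
        (∀ i, 0 ≤ t i ∧ t i < 1 / ((N : ℝ) - (d : ℝ))) ∧ (∑ i, t i = 1) ∧
        s = ∑ i, (t i / (1 / ((N : ℝ) - (d : ℝ)) - t i)) ^ (p / 2)} ≤
      ∑ i, ∑ j, if i = j then 0 else |A i j| ^ p := by
  set r : Fin N → ℝ := fun i => ∑ j ∈ univ.erase i, A i j ^ 2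
  have hr : ∀ i, 0 ≤ r i := fun i => sum_nonneg fun j _ => sq_nonneg _
  have hNd : (d : ℝ) + 1 ≤ N := by exact_mod_cast hN
  have hc : 0 < 1 / ((N : ℝ) - d) := by rw [one_div_pos]; linarith
  have hS : (1 / ((N : ℝ) - d))⁻¹ ≤ ∑ i, r i / (1 + r i) := by
    rw [one_div, inv_inv]
    simpa only [hrank, Fintype.card_fin] using A.card_sub_rank_le_sum_div_one_add hdiag
  calc _ ≤ ((N : ℝ) - 1) ^ (1 - p / 2) * ∑ i, r i ^ (p / 2) :=
        mul_le_mul_of_nonneg_left (ratioPowSumInf_le_sum_rpow hc (by linarith) hr hS)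
          (Real.rpow_nonneg (by linarith) _)
    _ = ∑ i, ((N : ℝ) - 1) ^ (1 - p / 2) * r i ^ (p / 2) := mul_sum _ _ _
    _ ≤ ∑ i, ∑ j, if i = j then 0 else |A i j| ^ p := sum_le_sum fun i _ => by
      simpa only [sum_ite, sum_const_zero, zero_add, filter_ne, Fintype.card_fin] using
        card_sub_one_rpow_mul_sum_erase_sq_le i (A i) hp

/-- For `p ≥ 2` and any real `N × N` matrix `A` of rank `d`, `N ≥ d + 1`, with unit
diagonal entries, the `p`-frame energy `E_p(A) = ∑_{i ≠ j} |A_{ij}|^p` is at least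
`(N-1)^{1-p/2} · M(1/(N-d), p, N)`, where `M(c, p, N)` is the infimum of
`∑ᵢ (tᵢ/(c - tᵢ))^{p/2}` over all tuples with `tᵢ ∈ [0, c)` and `∑ tᵢ = 1`. -/
theorem pFrameEnergy_ge_M_of_two_le (N d : ℕ) (hd : 0 < d) (hN : d + 1 ≤ N)
    (p : ℝ) (hp : 2 ≤ p)
    (A : Matrix (Fin N) (Fin N) ℝ) (hrank : A.rank = d) (hdiag : ∀ i, A i i = 1) :
    ((N : ℝ) - 1) ^ (1 - p / 2) *
      sInf {s : ℝ | ∃ t : Fin N → ℝ,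
        (∀ i, 0 ≤ t i ∧ t i < 1 / ((N : ℝ) - (d : ℝ))) ∧ (∑ i, t i = 1) ∧
        s = ∑ i, (t i / (1 / ((N : ℝ) - (d : ℝ)) - t i)) ^ (p / 2)} ≤
      ∑ i, ∑ j, if i = j then 0 else |A i j| ^ p :=
  pFrameEnergy_ge_M_of_two_le_general N d hN p hp A hrank hdiag
end

section
/- Let p ≥ 2, let N ≥ 2 and d ≥ 1 be integers, and let A be a real N×N matrix of rank d with all diagonal entries equal to 1. Then E_p(A) ≥ N(N−1) · ((N−d)/(d(N−1)))^{p/2}. -/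
/-!
Let `P` be the orthogonal projection onto the column space of `A`. Then `tr A = tr (P A)`, and
Cauchy–Schwarz for the Frobenius inner product gives `(tr A)² ≤ ‖P‖_F² ‖A‖_F² = d ‖A‖_F²`. With a
unit diagonal this reads `N² ≤ d (N + S)`, where `S` is the sum of the squared off-diagonal entries.
Since `x ↦ x^{p/2}` is convex for `p ≥ 2`, the power mean inequality over the `N(N-1)` off-diagonal
entries gives `E_p(A) ≥ N(N-1) (S / (N(N-1)))^{p/2}`, and the bound on `S` finishes.
-/

open Finset

theorem Finset.sum_offDiag_univ_eq_sum_sum_ite {ι M : Type*} [Fintype ι] [DecidableEq ι]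
    [AddCommMonoid M] (f : ι → ι → M) :
    ∑ x ∈ univ.offDiag, f x.1 x.2 = ∑ i, ∑ j, if i = j then 0 else f i j := by
  rw [← Fintype.sum_prod_type', sum_ite, sum_const_zero, zero_add]
  congr 1
  ext
  simp

theorem Real.card_mul_rpow_le_sum_rpow {ι : Type*} (s : Finset ι) {f : ι → ℝ}
    (hf : ∀ i ∈ s, 0 ≤ f i) {q t : ℝ} (hq : 1 ≤ q) (ht : 0 ≤ t)
    (hts : #s * t ≤ ∑ i ∈ s, f i) : #s * t ^ q ≤ ∑ i ∈ s, f i ^ q := by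
  rcases s.eq_empty_or_nonempty with rfl | hs
  · simp
  have hn : (0 : ℝ) < #s := by exact_mod_cast hs.card_pos
  have jensen := Real.rpow_arith_mean_le_arith_mean_rpow s (fun _ => (#s : ℝ)⁻¹) f
    (fun _ _ => by positivity) (by simp [hn.ne']) hf hq
  rw [← mul_sum, ← mul_sum] at jensen
  have ht_le_mean : t ≤ (#s : ℝ)⁻¹ * ∑ i ∈ s, f i := by
    rwa [← div_eq_inv_mul, le_div_iff₀' hn]
  calc #s * t ^ q ≤ #s * ((#s : ℝ)⁻¹ * ∑ i ∈ s, f i ^ q) := by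
        gcongr
        exact (Real.rpow_le_rpow ht ht_le_mean (by linarith)).trans jensen
    _ = ∑ i ∈ s, f i ^ q := by field_simp

namespace Matrix

variable {n : Type*} [Fintype n] [DecidableEq n]

theorem exists_isHermitian_isIdempotentElem_mul_eq_trace_eq_rank (A : Matrix n n ℝ) :
    ∃ P : Matrix n n ℝ, P.IsHermitian ∧ IsIdempotentElem P ∧ P * A = A ∧ P.trace = A.rank := by
  let b := (EuclideanSpace.basisFun n ℝ).toBasis
  let K := LinearMap.range (toEuclideanLin A)
  let π : EuclideanSpace ℝ n →ₗ[ℝ] EuclideanSpace ℝ n := K.starProjection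
  have hπ : LinearMap.IsProj K π :=
    ⟨fun x => (K.orthogonalProjectionOnto x).2, fun _ hx => K.starProjection_eq_self_iff.2 hx⟩
  have hA : LinearMap.toMatrix b b (toEuclideanLin A) = A := by
    rw [toEuclideanLin_eq_toLin_orthonormal]
    exact LinearMap.toMatrix_toLin _ _ _
  refine ⟨LinearMap.toMatrix b b π, ?_, ?_, ?_, ?_⟩
  · exact (LinearMap.isHermitian_toMatrix_iff _).2 K.starProjection_isSymmetric
  · rw [IsIdempotentElem, ← LinearMap.toMatrix_mul]
    congr 1
    exact LinearMap.ext fun x => hπ.map_id _ (hπ.map_mem x)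
  · rw [← hA, ← LinearMap.toMatrix_comp]
    congr 1
    exact LinearMap.ext fun x => hπ.map_id _ ⟨x, rfl⟩
  · rw [← LinearMap.trace_eq_matrix_trace, hπ.trace,
      rank_eq_finrank_range_toLin A (PiLp.basisFun 2 ℝ n) (PiLp.basisFun 2 ℝ n)]
    rfl

theorem trace_sq_le_rank_mul_sum_sq (A : Matrix n n ℝ) :
    A.trace ^ 2 ≤ A.rank * ∑ i, ∑ j, A i j ^ 2 := by
  obtain ⟨P, hPherm, hPidem, hPA, hPtr⟩ :=
    A.exists_isHermitian_isIdempotentElem_mul_eq_trace_eq_rank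
  have hPsymm : ∀ i j, P j i = P i j := fun i j => by simpa using hPherm.apply i j
  have hPfrob : ∑ i, ∑ j, P i j ^ 2 = A.rank := by
    rw [← hPtr]
    conv_rhs => rw [← hPidem.eq]
    simp only [trace, diag, mul_apply, sq, hPsymm]
  have cauchySchwarz := sum_mul_sq_le_sq_mul_sq (univ : Finset (n × n))
    (fun x => P x.1 x.2) (fun x => A x.2 x.1)
  simp only [Fintype.sum_prod_type] at cauchySchwarz
  calc A.trace ^ 2 = (∑ i, ∑ j, P i j * A j i) ^ 2 := by
        conv_lhs => rw [← hPA]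
        simp only [trace, diag, mul_apply]
    _ ≤ _ := cauchySchwarz
    _ = A.rank * ∑ i, ∑ j, A i j ^ 2 := by rw [hPfrob, sum_comm]

theorem card_mul_sub_rank_le_rank_mul_sum_offDiag_sq (A : Matrix n n ℝ) (hA : ∀ i, A i i = 1) :
    Fintype.card n * (Fintype.card n - A.rank) ≤
      A.rank * ∑ x ∈ univ.offDiag, A x.1 x.2 ^ 2 := by
  have htrace : A.trace = Fintype.card n := by simp [trace, hA]
  have hsplit : ∑ i, ∑ j, A i j ^ 2 = Fintype.card n + ∑ x ∈ univ.offDiag, A x.1 x.2 ^ 2 := by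
    rw [← sum_product', ← diag_union_offDiag,
      sum_union (disjoint_diag_offDiag _), sum_diag]
    simp [hA]
  have := A.trace_sq_le_rank_mul_sum_sq
  rw [htrace, hsplit] at this
  linear_combination this

end Matrix

/-- For `p ≥ 2` and any real `N × N` matrix `A` of rank `d`, `N ≥ 2`, with unit diagonal
entries, `E_p(A) ≥ N(N-1) ((N-d)/(d(N-1)))^{p/2}`. -/
theorem pFrameEnergy_welch_bound (N d : ℕ) (hN : 2 ≤ N) (hd : 1 ≤ d)
    (p : ℝ) (hp : 2 ≤ p)
    (A : Matrix (Fin N) (Fin N) ℝ) (hrank : A.rank = d) (hdiag : ∀ i, A i i = 1) :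
    (N : ℝ) * ((N : ℝ) - 1) *
        (((N : ℝ) - (d : ℝ)) / ((d : ℝ) * ((N : ℝ) - 1))) ^ (p / 2) ≤
      ∑ i, ∑ j, if i = j then 0 else |A i j| ^ p := by
  have hN1 : (0 : ℝ) < N - 1 := sub_pos.2 (by exact_mod_cast hN)
  have hd0 : (0 : ℝ) < d := by exact_mod_cast hd
  have hdN : (d : ℝ) ≤ N := by exact_mod_cast hrank ▸ A.rank_le_width
  have hcard : (#(univ : Finset (Fin N)).offDiag : ℝ) = N * (N - 1) := by
    rw [offDiag_card, card_univ, Fintype.card_fin, Nat.cast_sub (Nat.le_mul_self N)]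
    push_cast
    ring
  have habs : ∀ a : ℝ, |a| ^ p = (a ^ 2) ^ (p / 2) := fun a => by
    rw [← sq_abs, ← Real.rpow_natCast, ← Real.rpow_mul (abs_nonneg a)]
    congr 1
    ring
  have hoffDiag := A.card_mul_sub_rank_le_rank_mul_sum_offDiag_sq hdiag
  rw [Fintype.card_fin, hrank] at hoffDiag
  simp_rw [← sum_offDiag_univ_eq_sum_sum_ite, habs, ← hcard]
  refine Real.card_mul_rpow_le_sum_rpow _ (fun _ _ => sq_nonneg _) (by linarith)
    (div_nonneg (by linarith) (by positivity)) ?_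
  rw [hcard, mul_div_assoc', div_le_iff₀ (by positivity)]
  linarith [mul_le_mul_of_nonneg_left hoffDiag hN1.le]
end

section
/- Let 1 ≤ p < 2, let N and d be positive integers, and let A be a real N×N matrix of rank d with all diagonal entries equal to 1. Then E_p(A) ≥ 2(N−d) / (p^{p/2} · (2−p)^{(2−p)/2}). -/
/-!
Let `P` be the orthogonal projection onto `ker A`, so that `P = Pᵀ = P²`, `A P = 0` and
`tr P = N - d`. Fix a row `j` and put `x = P_jj`. Then `∑_{k ≠ j} P_jk² = x (1 - x)`, so
`0 ≤ x ≤ 1`, and the diagonal entry `(A P)_jj = 0` reads `x = -∑_{k ≠ j} A_jk P_jk`.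
Cauchy–Schwarz gives `x ≤ s (1 - x)` with `s = ∑_{k ≠ j} A_jk²`, and weighted AM–GM with
weights `(2 - p)/2` and `p/2` turns this into
`x = x^{(2-p)/2} x^{p/2} ≤ s^{p/2} x^{(2-p)/2} (1 - x)^{p/2}
   ≤ s^{p/2} ((2-p)/2)^{(2-p)/2} (p/2)^{p/2}`.
Finally `s^{p/2} ≤ ∑_{k ≠ j} |A_jk|^p` because `p ≤ 2`, and
`2 ((2-p)/2)^{(2-p)/2} (p/2)^{p/2} = p^{p/2} (2-p)^{(2-p)/2}`; summing over `j` gives the bound.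
-/

open Finset Matrix

namespace Real

theorem rpow_mul_rpow_le_mul_add {w₁ w₂ x y : ℝ} (hw₁ : 0 < w₁) (hw₂ : 0 < w₂)
    (hw : w₁ + w₂ = 1) (hx : 0 ≤ x) (hy : 0 ≤ y) :
    x ^ w₁ * y ^ w₂ ≤ w₁ ^ w₁ * w₂ ^ w₂ * (x + y) := by
  have h := geom_mean_le_arith_mean2_weighted hw₁.le hw₂.le (div_nonneg hx hw₁.le)
    (div_nonneg hy hw₂.le) hw
  rw [div_rpow hx hw₁.le, div_rpow hy hw₂.le, div_mul_div_comm,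
    div_le_iff₀ (by positivity), mul_div_cancel₀ _ hw₁.ne', mul_div_cancel₀ _ hw₂.ne'] at h
  linarith

theorem rpow_sum_le_sum_rpow_s4 {ι : Type*} (s : Finset ι) {f : ι → ℝ} (hf : ∀ i ∈ s, 0 ≤ f i)
    {r : ℝ} (hr0 : 0 < r) (hr1 : r ≤ 1) :
    (∑ i ∈ s, f i) ^ r ≤ ∑ i ∈ s, f i ^ r := by
  induction s using Finset.cons_induction with
  | empty => simp [zero_rpow hr0.ne']
  | cons a s ha ih =>
    rw [sum_cons, sum_cons]
    have hs := fun i hi => hf i (mem_cons_of_mem hi)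
    calc (f a + ∑ i ∈ s, f i) ^ r ≤ f a ^ r + (∑ i ∈ s, f i) ^ r :=
          rpow_add_le_add_rpow (hf a (mem_cons_self a s)) (sum_nonneg hs) hr0.le hr1
      _ ≤ f a ^ r + ∑ i ∈ s, f i ^ r := by gcongr; exact ih hs

theorem rpow_sum_sq_le_sum_abs_rpow {ι : Type*} (s : Finset ι) (f : ι → ℝ) {p : ℝ}
    (hp0 : 0 < p) (hp2 : p ≤ 2) :
    (∑ i ∈ s, f i ^ 2) ^ (p / 2) ≤ ∑ i ∈ s, |f i| ^ p := by
  refine (rpow_sum_le_sum_rpow_s4 s (fun i _ => sq_nonneg (f i)) (by positivity) (by linarith)).trans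
    (sum_le_sum fun i _ => ?_)
  rw [← sq_abs, ← rpow_natCast, ← rpow_mul (abs_nonneg _), Nat.cast_ofNat,
    mul_div_cancel₀ p two_ne_zero]

theorem two_mul_rpow_self_mul_rpow_self {p : ℝ} (hp0 : 0 < p) (hp2 : p < 2) :
    2 * (((2 - p) / 2) ^ ((2 - p) / 2) * (p / 2) ^ (p / 2)) =
      p ^ (p / 2) * (2 - p) ^ ((2 - p) / 2) := by
  have h2 : (2 : ℝ) ^ ((2 - p) / 2) * 2 ^ (p / 2) = 2 := by
    rw [← rpow_add two_pos, show (2 - p) / 2 + p / 2 = 1 by ring, rpow_one]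
  rw [div_rpow (by linarith) zero_le_two, div_rpow hp0.le zero_le_two, div_mul_div_comm, h2,
    mul_div_cancel₀ _ two_ne_zero, mul_comm]

theorem two_mul_le_mul_rpow_of_sq_le {p x s : ℝ} (hp0 : 0 < p) (hp2 : p < 2) (hx0 : 0 ≤ x)
    (hx1 : x ≤ 1) (hs : 0 ≤ s) (h : x ^ 2 ≤ s * (x * (1 - x))) :
    2 * x ≤ p ^ (p / 2) * (2 - p) ^ ((2 - p) / 2) * s ^ (p / 2) := by
  rcases hx0.eq_or_lt with rfl | hx0
  · simp only [mul_zero]; positivity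
  have hxs : x ≤ s * (1 - x) := by nlinarith
  have hw₁ : 0 < (2 - p) / 2 := by linarith
  have hw₂ : 0 < p / 2 := by linarith
  have hw : (2 - p) / 2 + p / 2 = 1 := by ring
  calc 2 * x = 2 * (x ^ ((2 - p) / 2) * x ^ (p / 2)) := by rw [← rpow_add hx0, hw, rpow_one]
    _ ≤ 2 * (x ^ ((2 - p) / 2) * (s * (1 - x)) ^ (p / 2)) := by gcongr
    _ = 2 * (x ^ ((2 - p) / 2) * (1 - x) ^ (p / 2)) * s ^ (p / 2) := by
        rw [mul_rpow hs (by linarith)]; ring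
    _ ≤ 2 * (((2 - p) / 2) ^ ((2 - p) / 2) * (p / 2) ^ (p / 2) * (x + (1 - x))) *
          s ^ (p / 2) := by
        gcongr 2 * ?_ * _; exact rpow_mul_rpow_le_mul_add hw₁ hw₂ hw hx0.le (by linarith)
    _ = _ := by rw [add_sub_cancel, mul_one, two_mul_rpow_self_mul_rpow_self hp0 hp2]

end Real

variable {n : Type*} [Fintype n]

noncomputable def pFrameEnergy [DecidableEq n] (p : ℝ) (A : Matrix n n ℝ) : ℝ :=
  ∑ i, ∑ j, if i = j then 0 else |A i j| ^ p

theorem pFrameEnergy_eq_sum_sum_erase [DecidableEq n] (p : ℝ) (A : Matrix n n ℝ) :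
    pFrameEnergy p A = ∑ i, ∑ j ∈ univ.erase i, |A i j| ^ p := by
  refine sum_congr rfl fun i _ => ?_
  rw [← add_sum_erase _ _ (mem_univ i), if_pos rfl, zero_add]
  exact sum_congr rfl fun j hj => if_neg (ne_of_mem_erase hj).symm

namespace Matrix

variable {P : Matrix n n ℝ}

theorem sum_sq_eq_diag_of_mul_self (hPs : P.IsSymm) (hPP : P * P = P) (j : n) :
    ∑ k, P j k ^ 2 = P j j := by
  conv_rhs => rw [← hPP]
  simp only [mul_apply, hPs.apply, sq]

theorem sum_erase_sq_eq_of_mul_self [DecidableEq n] (hPs : P.IsSymm) (hPP : P * P = P)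
    (j : n) :
    ∑ k ∈ univ.erase j, P j k ^ 2 = P j j * (1 - P j j) := by
  have h := sum_sq_eq_diag_of_mul_self hPs hPP j
  rw [← add_sum_erase _ _ (mem_univ j)] at h
  linear_combination h

theorem diag_mem_Icc_of_mul_self [DecidableEq n] (hPs : P.IsSymm) (hPP : P * P = P) (j : n) :
    P j j ∈ Set.Icc 0 1 := by
  have h0 : 0 ≤ P j j :=
    sum_sq_eq_diag_of_mul_self hPs hPP j ▸ sum_nonneg fun k _ => sq_nonneg _
  have h1 : 0 ≤ P j j * (1 - P j j) :=
    sum_erase_sq_eq_of_mul_self hPs hPP j ▸ sum_nonneg fun k _ => sq_nonneg _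
  exact ⟨h0, by nlinarith⟩

theorem diag_sq_le_of_mul_eq_zero [DecidableEq n] {A : Matrix n n ℝ} (hA : ∀ i, A i i = 1)
    (hAP : A * P = 0) (hPs : P.IsSymm) (hPP : P * P = P) (j : n) :
    P j j ^ 2 ≤ (∑ k ∈ univ.erase j, A j k ^ 2) * (P j j * (1 - P j j)) := by
  have h : ∑ k, A j k * P k j = 0 := by simpa [mul_apply] using congrFun₂ hAP j j
  rw [← add_sum_erase _ _ (mem_univ j), hA, one_mul] at h
  rw [← sum_erase_sq_eq_of_mul_self hPs hPP j, eq_neg_of_add_eq_zero_left h, neg_sq]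
  simp only [hPs.apply]
  exact sum_mul_sq_le_sq_mul_sq _ _ _

theorem two_mul_diag_le_mul_sum_erase_abs_rpow [DecidableEq n] {A : Matrix n n ℝ} {p : ℝ}
    (hp0 : 0 < p) (hp2 : p < 2) (hA : ∀ i, A i i = 1) (hAP : A * P = 0) (hPs : P.IsSymm)
    (hPP : P * P = P) (j : n) :
    2 * P j j ≤ p ^ (p / 2) * (2 - p) ^ ((2 - p) / 2) * ∑ k ∈ univ.erase j, |A j k| ^ p := by
  obtain ⟨h0, h1⟩ := diag_mem_Icc_of_mul_self hPs hPP j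
  have hc : 0 ≤ p ^ (p / 2) * (2 - p) ^ ((2 - p) / 2) :=
    mul_nonneg (Real.rpow_nonneg hp0.le _) (Real.rpow_nonneg (by linarith) _)
  exact (Real.two_mul_le_mul_rpow_of_sq_le hp0 hp2 h0 h1 (sum_nonneg fun _ _ => sq_nonneg _)
    (diag_sq_le_of_mul_eq_zero hA hAP hPs hPP j)).trans
    (mul_le_mul_of_nonneg_left (Real.rpow_sum_sq_le_sum_abs_rpow _ _ hp0 hp2.le) hc)

theorem two_mul_trace_le_mul_pFrameEnergy [DecidableEq n] {A : Matrix n n ℝ} {p : ℝ}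
    (hp0 : 0 < p) (hp2 : p < 2) (hA : ∀ i, A i i = 1) (hAP : A * P = 0) (hPs : P.IsSymm)
    (hPP : P * P = P) :
    2 * P.trace ≤ p ^ (p / 2) * (2 - p) ^ ((2 - p) / 2) * pFrameEnergy p A := by
  rw [pFrameEnergy_eq_sum_sum_erase, trace, mul_sum, mul_sum]
  exact sum_le_sum fun j _ => two_mul_diag_le_mul_sum_erase_abs_rpow hp0 hp2 hA hAP hPs hPP j

theorem exists_isSymm_mul_self_mul_eq_zero_trace (A : Matrix n n ℝ) :
    ∃ P : Matrix n n ℝ, P.IsSymm ∧ P * P = P ∧ A * P = 0 ∧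
      P.trace = Fintype.card n - A.rank := by
  let e := WithLp.linearEquiv 2 ℝ (n → ℝ)
  let K := (LinearMap.ker A.mulVecLin).comap e.toLinearMap
  let b := stdOrthonormalBasis ℝ K
  let V : Matrix (Fin (Module.finrank ℝ K)) n ℝ := of fun t i => (b t : EuclideanSpace ℝ n) i
  have hVV : V * Vᵀ = 1 := by
    ext t s
    have h := orthonormal_iff_ite.mp b.orthonormal t s
    rw [Submodule.coe_inner, PiLp.inner_apply] at h
    rw [mul_apply, one_apply, ← h]
    refine sum_congr rfl fun j _ => ?_
    rw [transpose_apply, RCLike.inner_apply', conj_trivial]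
    rfl
  have hAV : A * Vᵀ = 0 := by
    ext i t
    simpa [mulVec, dotProduct, V, e, mul_apply] using congrFun (b t).2 i
  have hK : Module.finrank ℝ K = Fintype.card n - A.rank := by
    have h := LinearMap.finrank_range_add_finrank_ker A.mulVecLin
    rw [Module.finrank_fintype_fun_eq_card] at h
    rw [LinearEquiv.finrank_eq (e.ofSubmodule' _), rank]
    omega
  refine ⟨Vᵀ * V, by simp [IsSymm, transpose_mul], ?_, ?_, ?_⟩
  · rw [Matrix.mul_assoc, ← Matrix.mul_assoc V, hVV, Matrix.one_mul]
  · rw [← Matrix.mul_assoc, hAV, Matrix.zero_mul]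
  · rw [trace_mul_comm, hVV, trace_one, Fintype.card_fin, hK, Nat.cast_sub A.rank_le_card_width]

end Matrix

theorem pFrameEnergy_lower_bound_general (N d : ℕ)
    (p : ℝ) (hp1 : 1 ≤ p) (hp2 : p < 2)
    (A : Matrix (Fin N) (Fin N) ℝ) (hrank : A.rank = d) (hdiag : ∀ i, A i i = 1) :
    2 * ((N : ℝ) - (d : ℝ)) / (p ^ (p / 2) * (2 - p) ^ ((2 - p) / 2)) ≤
      ∑ i, ∑ j, if i = j then 0 else |A i j| ^ p := by
  have hp0 : 0 < p := by linarith
  obtain ⟨P, hPs, hPP, hAP, htrace⟩ := A.exists_isSymm_mul_self_mul_eq_zero_trace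
  have h := two_mul_trace_le_mul_pFrameEnergy hp0 hp2 hdiag hAP hPs hPP
  rw [htrace, Fintype.card_fin, hrank] at h
  rwa [div_le_iff₀' (mul_pos (Real.rpow_pos_of_pos hp0 _) (Real.rpow_pos_of_pos (by linarith) _))]

/-- For `1 ≤ p < 2` and any real `N × N` matrix `A` of rank `d` with unit diagonal
entries, `E_p(A) ≥ 2(N-d) / (p^{p/2} (2-p)^{(2-p)/2})`. -/
theorem pFrameEnergy_lower_bound (N d : ℕ) (hN : 0 < N) (hd : 0 < d)
    (p : ℝ) (hp1 : 1 ≤ p) (hp2 : p < 2)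
    (A : Matrix (Fin N) (Fin N) ℝ) (hrank : A.rank = d) (hdiag : ∀ i, A i i = 1) :
    2 * ((N : ℝ) - (d : ℝ)) / (p ^ (p / 2) * (2 - p) ^ ((2 - p) / 2)) ≤
      ∑ i, ∑ j, if i = j then 0 else |A i j| ^ p :=
  pFrameEnergy_lower_bound_general N d p hp1 hp2 A hrank hdiag
end

section
/- Let x_1, …, x_N be unit vectors in ℝ^d. Then the sum of the cosines of all pairwise angles between the lines they span satisfies ∑_{1 ≤ i < j ≤ N} |⟨x_i, x_j⟩| ≥ N − d. -/
open RealInnerProductSpace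

lemma double_sum_erase {α : Type*} [DecidableEq α] (f : α → α → ℝ) (t : Finset α) (k : α)
    (hk : k ∈ t) (hdiag : f k k = 0) :
    ∑ a ∈ t, ∑ b ∈ t, f a b
      = (∑ a ∈ t.erase k, ∑ b ∈ t.erase k, f a b) + ∑ b ∈ t.erase k, (f k b + f b k) := by
  have hins : t = insert k (t.erase k) := (Finset.insert_erase hk).symm
  have hnotin : k ∉ t.erase k := Finset.notMem_erase _ _
  conv_lhs => rw [hins]
  rw [Finset.sum_insert hnotin]
  have hrow : ∀ a : α, ∑ b ∈ insert k (t.erase k), f a b = f a k + ∑ b ∈ t.erase k, f a b :=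
    fun a => Finset.sum_insert hnotin
  simp only [hrow]
  rw [Finset.sum_add_distrib, Finset.sum_add_distrib, hdiag]
  ring

lemma sum_abs_inner_ge_aux (N d : ℕ) (x : Fin N → EuclideanSpace ℝ (Fin d))
    (hx : ∀ i, ‖x i‖ = 1) (s : Finset (Fin N)) :
    (s.card : ℝ) - (d : ℝ) ≤ ∑ i ∈ s, ∑ j ∈ s, if i < j then |⟪x i, x j⟫| else 0 := by
  induction s using Finset.strongInduction with
  | _ s ih =>
  have hnonneg : ∀ (t : Finset (Fin N)),
      (0 : ℝ) ≤ ∑ i ∈ t, ∑ j ∈ t, if i < j then |⟪x i, x j⟫| else 0 := by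
    intro t
    apply Finset.sum_nonneg; intro i _
    apply Finset.sum_nonneg; intro j _
    split <;> positivity
  by_cases hcard : s.card ≤ d
  · calc (s.card : ℝ) - d ≤ 0 := by
          have : (s.card : ℝ) ≤ d := by exact_mod_cast hcard
          linarith
       _ ≤ _ := hnonneg s
  push_neg at hcard
  -- the restricted family is linearly dependent
  have hdep : ¬ LinearIndependent ℝ (fun j : ↥s => x ↑j) := by
    intro hli
    have := hli.fintype_card_le_finrank
    rw [finrank_euclideanSpace_fin, Fintype.card_coe] at this
    omega
  obtain ⟨g, hgsum, i₀, hgi₀⟩ := Fintype.not_linearIndependent_iff.mp hdep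
  have : Nonempty ↥s := ⟨i₀⟩
  obtain ⟨i, hi⟩ := Finite.exists_max (fun j : ↥s => |g j|)
  have hgi : 0 < |g i| := lt_of_lt_of_le (abs_pos.mpr hgi₀) (hi i₀)
  -- take inner product of the dependence with x i
  have hinner : (0 : ℝ) = ∑ j : ↥s, g j * ⟪x ↑i, x ↑j⟫ := by
    have h0 : ⟪x ↑i, ∑ j : ↥s, g j • x ↑j⟫ = (0 : ℝ) := by rw [hgsum, inner_zero_right]
    rw [inner_sum] at h0
    simp only [real_inner_smul_right] at h0
    exact h0.symm
  have hself : ⟪x ↑i, x ↑i⟫ = (1 : ℝ) := by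
    rw [real_inner_self_eq_norm_sq, hx]; norm_num
  have hgi_eq : g i = -∑ j ∈ Finset.univ.erase i, g j * ⟪x ↑i, x ↑j⟫ := by
    have h := Finset.sum_erase_add Finset.univ (fun j : ↥s => g j * ⟪x ↑i, x ↑j⟫) (Finset.mem_univ i)
    simp only [hself, mul_one] at h
    rw [← hinner] at h
    linarith
  -- hence the row sum of |inner| over s.erase i is at least 1
  have hrow : (1 : ℝ) ≤ ∑ j ∈ s.erase ↑i, |⟪x ↑i, x j⟫| := by
    have hb : |g i| ≤ ∑ j ∈ Finset.univ.erase i, |g j| * |⟪x ↑i, x ↑j⟫| := by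
      rw [hgi_eq, abs_neg]
      refine le_trans (Finset.abs_sum_le_sum_abs _ _) ?_
      apply le_of_eq
      exact Finset.sum_congr rfl fun j _ => abs_mul _ _
    have hb2 : ∑ j ∈ Finset.univ.erase i, |g j| * |⟪x ↑i, x ↑j⟫|
        ≤ |g i| * ∑ j ∈ Finset.univ.erase i, |⟪x ↑i, x ↑j⟫| := by
      rw [Finset.mul_sum]
      apply Finset.sum_le_sum
      intro j _
      exact mul_le_mul_of_nonneg_right (hi j) (abs_nonneg _)
    have key : (1 : ℝ) ≤ ∑ j ∈ Finset.univ.erase i, |⟪x ↑i, x ↑j⟫| := by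
      by_contra h
      push_neg at h
      have := hb.trans hb2
      nlinarith
    -- convert the sum over the subtype to a sum over s.erase ↑i
    have hconv : ∑ j ∈ Finset.univ.erase i, |⟪x ↑i, x ↑j⟫|
        = ∑ j ∈ s.erase ↑i, |⟪x ↑i, x j⟫| := by
      have h1 := Finset.sum_erase_add Finset.univ (fun j : ↥s => |⟪x ↑i, x ↑j⟫|) (Finset.mem_univ i)
      have h2 := Finset.sum_erase_add s (fun j => |⟪x ↑i, x j⟫|) i.2
      have h3 : ∑ j : ↥s, |⟪x ↑i, x ↑j⟫| = ∑ j ∈ s, |⟪x ↑i, x j⟫| :=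
        Finset.sum_coe_sort s (fun j => |⟪x ↑i, x j⟫|)
      rw [h3] at h1
      linarith
    rwa [hconv] at key
  -- decompose the double sum by removing i
  set e := s.erase ↑i with he
  have hins : s = insert (↑i : Fin N) e := (Finset.insert_erase i.2).symm
  have hinotin : (↑i : Fin N) ∉ e := Finset.notMem_erase _ _
  have hdecomp : ∑ a ∈ s, ∑ j ∈ s, (if a < j then |⟪x a, x j⟫| else 0)
      = (∑ a ∈ e, ∑ j ∈ e, if a < j then |⟪x a, x j⟫| else 0)
        + ∑ j ∈ e, |⟪x ↑i, x j⟫| := by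
    have hd := double_sum_erase (fun a b : Fin N => if a < b then |⟪x a, x b⟫| else 0) s ↑i i.2
      (by simp)
    rw [hd]
    congr 1
    apply Finset.sum_congr rfl
    intro j hj
    have hne : j ≠ ↑i := Finset.ne_of_mem_erase hj
    rcases lt_or_gt_of_ne hne with h | h
    · rw [if_neg (not_lt.mpr h.le), if_pos h, real_inner_comm]
      ring
    · rw [if_pos h, if_neg (not_lt.mpr h.le)]
      ring
  have hsub : e ⊂ s := Finset.erase_ssubset i.2
  have hIH := ih e hsub
  have hcard_e : (e.card : ℝ) = (s.card : ℝ) - 1 := by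
    rw [he, Finset.card_erase_of_mem i.2]
    have : 1 ≤ s.card := Finset.card_pos.mpr ⟨↑i, i.2⟩
    push_cast [Nat.cast_sub this]
    ring
  rw [hdecomp]
  rw [hcard_e] at hIH
  linarith

/-- The sum of the cosines of all pairwise angles between the lines spanned by `N` unit
vectors in `ℝ^d` is at least `N - d`. -/
theorem sum_abs_inner_ge (N d : ℕ) (x : Fin N → EuclideanSpace ℝ (Fin d))
    (hx : ∀ i, ‖x i‖ = 1) :
    (N : ℝ) - (d : ℝ) ≤ ∑ i, ∑ j, if i < j then |⟪x i, x j⟫| else 0 := by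
  have := sum_abs_inner_ge_aux N d x hx Finset.univ
  simpa using this
end

section
/- Let d ≤ N ≤ 2d be positive integers. Then there exist unit vectors x_1, …, x_N in ℝ^d with ∑_{1 ≤ i < j ≤ N} |⟨x_i, x_j⟩| = N − d; namely, a repeated orthonormal basis (taking each of N − d basis vectors twice and the remaining 2d − N basis vectors once) achieves this value, so the lower bound N − d on the sum of cosines of pairwise angles between N lines in ℝ^d is sharp for d ≤ N ≤ 2d. -/
open RealInnerProductSpace

/-- For `d ≤ N ≤ 2d` the lower bound `N - d` on the sum of cosines of pairwise angles
between `N` lines in `ℝ^d` is sharp: a repeated orthonormal basis (each of the first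
`N - d` basis vectors taken twice, the remaining `2d - N` once, i.e. `xᵢ = e_{i mod d}`)
achieves the value `N - d`. -/
theorem repeated_onb_achieves (N d : ℕ) (hd : 0 < d) (h1 : d ≤ N) (h2 : N ≤ 2 * d) :
    ∃ e : Fin d → EuclideanSpace ℝ (Fin d), Orthonormal ℝ e ∧
      ∑ i : Fin N, ∑ j : Fin N,
          (if i < j then
            |⟪e ⟨i.val % d, Nat.mod_lt _ hd⟩, e ⟨j.val % d, Nat.mod_lt _ hd⟩⟫|
          else 0)
        = (N : ℝ) - (d : ℝ) := by
  set e : Fin d → EuclideanSpace ℝ (Fin d) := ⇑(EuclideanSpace.basisFun (Fin d) ℝ) with he_def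
  have he : Orthonormal ℝ e := (EuclideanSpace.basisFun (Fin d) ℝ).orthonormal
  refine ⟨e, he, ?_⟩
  have hinner := orthonormal_iff_ite.mp he
  have key : ∀ i j : Fin N,
      (if i < j then
        |⟪e ⟨i.val % d, Nat.mod_lt _ hd⟩, e ⟨j.val % d, Nat.mod_lt _ hd⟩⟫|
      else 0) = if (i < j ∧ j.val = i.val + d) then (1 : ℝ) else 0 := by
    intro i j
    by_cases hij : i < j
    · rw [if_pos hij, hinner]
      by_cases hmod : (⟨i.val % d, Nat.mod_lt _ hd⟩ : Fin d) = ⟨j.val % d, Nat.mod_lt _ hd⟩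
      · have hm : i.val % d = j.val % d := Fin.mk_eq_mk.mp hmod
        have hdvd : d ∣ j.val - i.val := (Nat.modEq_iff_dvd' (le_of_lt hij)).mp hm
        obtain ⟨k, hk⟩ := hdvd
        have hlt : j.val - i.val < 2 * d := lt_of_le_of_lt (Nat.sub_le _ _) (lt_of_lt_of_le j.isLt h2)
        have hk2 : k < 2 := by
          by_contra hc
          push_neg at hc
          have : 2 * d ≤ d * k := by
            calc 2 * d = d * 2 := by ring
            _ ≤ d * k := Nat.mul_le_mul_left d hc
          omega
        have hkpos : 0 < k := by
          rcases Nat.eq_zero_or_pos k with h0 | h0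
          · exfalso; rw [h0, Nat.mul_zero] at hk
            have : i.val < j.val := hij
            omega
          · exact h0
        have hk1 : k = 1 := by omega
        have : j.val = i.val + d := by
          have : i.val < j.val := hij
          rw [hk1, Nat.mul_one] at hk
          omega
        rw [if_pos hmod, if_pos ⟨hij, this⟩]
        norm_num
      · have : ¬ j.val = i.val + d := by
          intro h
          apply hmod
          apply Fin.ext
          simp only [h]
          exact (Nat.add_mod_right _ _).symm
        rw [if_neg hmod, if_neg (by tauto)]
        norm_num
    · rw [if_neg hij, if_neg (by tauto)]
  rw [Finset.sum_congr rfl fun i _ => Finset.sum_congr rfl fun j _ => key i j]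
  have inner_sum : ∀ i : Fin N,
      (∑ j : Fin N, if (i < j ∧ j.val = i.val + d) then (1 : ℝ) else 0)
        = if i.val + d < N then (1 : ℝ) else 0 := by
    intro i
    by_cases hlt : i.val + d < N
    · rw [if_pos hlt]
      rw [Finset.sum_eq_single (⟨i.val + d, hlt⟩ : Fin N)]
      · rw [if_pos ⟨by simp [Fin.lt_def]; omega, rfl⟩]
      · intro j _ hne
        rw [if_neg]
        rintro ⟨-, hj⟩
        exact hne (Fin.ext hj)
      · intro h; exact absurd (Finset.mem_univ _) h
    · rw [if_neg hlt]
      apply Finset.sum_eq_zero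
      intro j _
      rw [if_neg]
      rintro ⟨-, hj⟩
      exact hlt (hj ▸ j.isLt)
  rw [Finset.sum_congr rfl fun i _ => inner_sum i]
  have hcard : (Finset.univ.filter fun i : Fin N => i.val + d < N).card = N - d := by
    have hx : N - d < N := by omega
    have : (Finset.univ.filter fun i : Fin N => i.val + d < N)
        = Finset.Iio (⟨N - d, hx⟩ : Fin N) := by
      ext i
      simp only [Finset.mem_filter, Finset.mem_univ, true_and, Finset.mem_Iio, Fin.lt_def]
      omega
    rw [this, Fin.card_Iio]
  rw [Finset.sum_boole, hcard, Nat.cast_sub h1]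
end

section
/- Let d ≥ 2 and 1 ≤ m < d be integers, set p_m = 2·log((2m+1)/(2m)) / log((m+1)/m), and let p ∈ [1, p_m]. Let A be a real (d+m)×(d+m) matrix of rank d with all diagonal entries equal to 1. Then E_p(A) = ∑_{i≠j} |A_{ij}|^p ≥ 2m. -/
/-!
Let `P` be the orthogonal projection onto `ker A`, so `tr P = m`. Since `A P = 0` and `A` has
unit diagonal, `P i i = -∑_{j ≠ i} A i j * P i j`, whence `m ≤ ∑_{i ≠ j} |A i j| |P i j|`.
Cauchy–Schwarz for `P` and for `1 - P` gives `P i j ^ 2 ≤ P i i * P j j` and, for `i ≠ j`,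
`P i j ^ 2 ≤ (1 - P i i) * (1 - P j j)`; splitting `|P i j| ^ q` between these two bounds and
using `∑_{j ≠ i} P i j ^ 2 = P i i - P i i ^ 2` gives `∑_{i ≠ j} |P i j| ^ q ≤ 2 ^ (1 - q) * m`
as soon as `q ≥ 3`. Young's inequality with the conjugate exponent `q` of `p` then turns the two
estimates into `E_p(A) ≥ 2 m` for `1 < p ≤ 3 / 2`, while `|P i j| ≤ 1 / 2` settles `p = 1`.
Finally `p_m ≤ 3 / 2`.
-/

open Finset Matrix

theorem two_mul_log_div_log_le_three_halves {m : ℝ} (hm : 1 ≤ m) :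
    2 * Real.log ((2 * m + 1) / (2 * m)) / Real.log ((m + 1) / m) ≤ 3 / 2 := by
  have hm0 : 0 < m := by linarith
  have hlog_pos : 0 < Real.log ((m + 1) / m) :=
    Real.log_pos <| (one_lt_div hm0).mpr (by linarith)
  have hpow : ((2 * m + 1) / (2 * m)) ^ 4 ≤ ((m + 1) / m) ^ 3 := by
    rw [div_pow, div_pow, div_le_div_iff₀ (by positivity) (by positivity)]
    nlinarith [pow_pos hm0 3, pow_pos hm0 4, pow_pos hm0 5, pow_pos hm0 6]
  have hlog := Real.log_le_log (by positivity) hpow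
  rw [Real.log_pow, Real.log_pow] at hlog
  rw [div_le_iff₀ hlog_pos]
  push_cast at hlog
  linarith

theorem abs_rpow_le_sq_mul_rpow_mul_rpow {t a b q : ℝ} (ha : t ^ 2 ≤ a) (hb : t ^ 2 ≤ b)
    (hq : 3 ≤ q) : |t| ^ q ≤ t ^ 2 * (a ^ ((q - 1) / 4) * b ^ ((q - 3) / 4)) := by
  rcases eq_or_ne t 0 with rfl | ht
  · rw [abs_zero, Real.zero_rpow (by linarith)]
    simp
  have ht2 : 0 < t ^ 2 := by positivity
  calc |t| ^ q = t ^ 2 * ((t ^ 2) ^ ((q - 1) / 4) * (t ^ 2) ^ ((q - 3) / 4)) := by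
        rw [← sq_abs, ← Real.rpow_natCast, ← Real.rpow_mul (abs_nonneg t),
          ← Real.rpow_mul (abs_nonneg t), ← Real.rpow_add (abs_pos.mpr ht),
          ← Real.rpow_add (abs_pos.mpr ht)]
        norm_num
        ring_nf
    _ ≤ t ^ 2 * (a ^ ((q - 1) / 4) * b ^ ((q - 3) / 4)) := by
        gcongr
        · exact Real.rpow_nonneg (ht2.le.trans ha) _
        · linarith

theorem sq_mul_rpow_mul_sub_sq_le {a q : ℝ} (ha0 : 0 ≤ a) (ha1 : a ≤ 1) (hq : 1 ≤ q) :
    (a ^ ((q - 1) / 4) * (1 - a) ^ ((q - 3) / 4)) ^ 2 * (a - a ^ 2) ≤ 2 ^ (1 - q) * a := by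
  rcases ha1.eq_or_lt with rfl | ha1
  · norm_num
    positivity
  have hb : 0 < 1 - a := by linarith
  have hkey : (a ^ ((q - 1) / 4) * (1 - a) ^ ((q - 3) / 4)) ^ 2 * (a - a ^ 2)
      = a * (a * (1 - a)) ^ ((q - 1) / 2) := by
    rw [Real.mul_rpow ha0 hb.le, mul_pow, ← Real.rpow_natCast, ← Real.rpow_natCast,
      ← Real.rpow_mul ha0, ← Real.rpow_mul hb.le,
      show (q - 1) / 2 = (q - 3) / 4 * ((2 : ℕ) : ℝ) + 1 by push_cast; ring,
      Real.rpow_add_one hb.ne']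
    ring_nf
  have hquarter : (1 / 4 : ℝ) ^ ((q - 1) / 2) = 2 ^ (1 - q) := by
    rw [show (1 / 4 : ℝ) = 2 ^ (-2 : ℝ) by norm_num, ← Real.rpow_mul zero_le_two]
    ring_nf
  rw [hkey, ← hquarter, mul_comm _ a]
  gcongr
  nlinarith [sq_nonneg (a - 1 / 2)]

theorem mul_le_rpow_div_add_rpow_div {x w p q : ℝ} (hx : 0 ≤ x) (hw : 0 ≤ w)
    (hpq : p.HolderConjugate q) :
    x * w ≤ x ^ p / (2 * p) + 2 ^ (q - 1) * w ^ q / q := by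
  have h := Real.young_inequality_of_nonneg (mul_nonneg hx (Real.rpow_nonneg zero_le_two (-p⁻¹)))
    (mul_nonneg hw (Real.rpow_nonneg zero_le_two p⁻¹)) hpq
  have hp : p ≠ 0 := hpq.ne_zero
  rw [Real.mul_rpow hx (by positivity), Real.mul_rpow hw (by positivity),
    ← Real.rpow_mul zero_le_two, ← Real.rpow_mul zero_le_two,
    neg_mul, inv_mul_cancel₀ hp, inv_mul_eq_div, hpq.symm.div_conj_eq_sub_one] at h
  calc x * w = x * 2 ^ (-p⁻¹) * (w * 2 ^ p⁻¹) := by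
        rw [mul_mul_mul_comm, ← Real.rpow_add two_pos, neg_add_cancel, Real.rpow_zero, mul_one]
    _ ≤ _ := h
    _ = _ := by rw [Real.rpow_neg_one]; ring

theorem two_mul_le_sum_rpow_of_le_sum_mul {ι : Type*} (s : Finset ι) {x w : ι → ℝ}
    {M p q : ℝ} (hpq : p.HolderConjugate q) (hx : ∀ i ∈ s, 0 ≤ x i) (hw : ∀ i ∈ s, 0 ≤ w i)
    (hM : M ≤ ∑ i ∈ s, x i * w i) (hwq : ∑ i ∈ s, w i ^ q ≤ 2 ^ (1 - q) * M) :
    2 * M ≤ ∑ i ∈ s, x i ^ p := by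
  have hyoung : M ≤ (∑ i ∈ s, x i ^ p) / (2 * p) + 2 ^ (q - 1) * (∑ i ∈ s, w i ^ q) / q := by
    refine hM.trans ?_
    rw [sum_div, mul_sum, sum_div, ← sum_add_distrib]
    exact sum_le_sum fun i hi => mul_le_rpow_div_add_rpow_div (hx i hi) (hw i hi) hpq
  have hcancel : 2 ^ (q - 1) * (∑ i ∈ s, w i ^ q) ≤ M := by
    calc 2 ^ (q - 1) * (∑ i ∈ s, w i ^ q) ≤ 2 ^ (q - 1) * (2 ^ (1 - q) * M) := by gcongr
      _ = M := by rw [← mul_assoc, ← Real.rpow_add two_pos]; simp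
  have hMq : 2 ^ (q - 1) * (∑ i ∈ s, w i ^ q) / q ≤ M - M / p := by
    rw [div_eq_mul_inv _ p, ← mul_one_sub, hpq.one_sub_inv, ← div_eq_mul_inv]
    exact div_le_div_of_nonneg_right hcancel hpq.symm.nonneg
  have hMp : M / p ≤ (∑ i ∈ s, x i ^ p) / 2 / p := by
    rw [div_div]
    linarith
  linarith [(div_le_div_iff_of_pos_right hpq.pos).mp hMp]

theorem sum_ite_eq_sum_sub {n : Type*} [Fintype n] [DecidableEq n] (f : n → ℝ) (i : n) :
    ∑ j, (if i = j then 0 else f j) = ∑ j, f j - f i := by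
  rw [← sum_erase_eq_sub (mem_univ i), sum_ite, sum_const_zero, zero_add, filter_ne]

theorem sum_offDiag_eq_sum_sum_ite {n : Type*} [Fintype n] [DecidableEq n] (f : n → n → ℝ) :
    ∑ x ∈ univ.offDiag, f x.1 x.2 = ∑ i, ∑ j, if i = j then 0 else f i j := by
  have h : univ.offDiag = (univ ×ˢ univ : Finset (n × n)).filter (fun x => x.1 ≠ x.2) := by
    ext
    simp
  rw [h, sum_filter, sum_product]
  simp only [ite_not]

theorem sum_sum_mul_mul_le_sum_sum_mul_sq {n : Type*} [Fintype n] {w : n → n → ℝ}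
    (hw : ∀ i j, 0 ≤ w i j) (hsymm : ∀ i j, w i j = w j i) (c : n → ℝ) :
    ∑ i, ∑ j, w i j * (c i * c j) ≤ ∑ i, ∑ j, w i j * c i ^ 2 := by
  have hswap : ∑ i, ∑ j, w i j * c j ^ 2 = ∑ i, ∑ j, w i j * c i ^ 2 := by
    rw [sum_comm]
    simp only [hsymm]
  calc ∑ i, ∑ j, w i j * (c i * c j)
      ≤ ∑ i, ∑ j, (w i j * c i ^ 2 + w i j * c j ^ 2) / 2 := by
        gcongr with i _ j _
        nlinarith [mul_nonneg (hw i j) (sq_nonneg (c i - c j))]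
    _ = ∑ i, ∑ j, w i j * c i ^ 2 := by
        simp only [← sum_div, sum_add_distrib, hswap]
        ring

namespace IsStarProjection

variable {n : Type*} [Fintype n] {P : Matrix n n ℝ}

theorem apply_comm (hP : IsStarProjection P) (i j : n) : P j i = P i j := by
  simpa using congrFun₂ hP.isSelfAdjoint i j

theorem apply_eq_sum_mul (hP : IsStarProjection P) (i j : n) : P i j = ∑ k, P i k * P j k := by
  conv_lhs => rw [← hP.isIdempotentElem.eq]
  simp only [mul_apply, hP.apply_comm]

theorem sum_sq_apply (hP : IsStarProjection P) (i : n) : ∑ j, P i j ^ 2 = P i i := by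
  rw [hP.apply_eq_sum_mul i i]
  simp only [sq]

theorem diag_nonneg (hP : IsStarProjection P) (i : n) : 0 ≤ P i i :=
  hP.sum_sq_apply i ▸ sum_nonneg fun j _ => sq_nonneg (P i j)

theorem sq_apply_le (hP : IsStarProjection P) (i j : n) : P i j ^ 2 ≤ P i i * P j j := by
  rw [← hP.sum_sq_apply i, ← hP.sum_sq_apply j, hP.apply_eq_sum_mul i j]
  exact sum_mul_sq_le_sq_mul_sq _ _ _

variable [DecidableEq n]

theorem diag_le_one (hP : IsStarProjection P) (i : n) : P i i ≤ 1 := by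
  simpa using hP.one_sub.diag_nonneg i

theorem sq_apply_le_one_sub (hP : IsStarProjection P) {i j : n} (hij : i ≠ j) :
    P i j ^ 2 ≤ (1 - P i i) * (1 - P j j) := by
  simpa [one_apply, hij] using hP.one_sub.sq_apply_le i j

theorem abs_apply_le_half (hP : IsStarProjection P) {i j : n} (hij : i ≠ j) :
    |P i j| ≤ 1 / 2 := by
  have hi := hP.diag_nonneg i
  have hi' := hP.diag_le_one i
  have hj := hP.diag_nonneg j
  have hj' := hP.diag_le_one j
  have hi4 : P i i * (1 - P i i) ≤ 1 / 4 := by nlinarith [sq_nonneg (P i i - 1 / 2)]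
  have hj4 : P j j * (1 - P j j) ≤ 1 / 4 := by nlinarith [sq_nonneg (P j j - 1 / 2)]
  have h4 : P i j ^ 2 * P i j ^ 2 ≤ 1 / 4 * (1 / 4) := calc
    P i j ^ 2 * P i j ^ 2 ≤ (P i i * P j j) * ((1 - P i i) * (1 - P j j)) :=
      mul_le_mul (hP.sq_apply_le i j) (hP.sq_apply_le_one_sub hij) (sq_nonneg _) (by positivity)
    _ = (P i i * (1 - P i i)) * (P j j * (1 - P j j)) := by ring
    _ ≤ 1 / 4 * (1 / 4) := mul_le_mul hi4 hj4 (by nlinarith) (by norm_num)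
  have h2 : P i j ^ 2 ≤ 1 / 4 := by nlinarith [sq_nonneg (P i j)]
  nlinarith [abs_nonneg (P i j), sq_abs (P i j)]

theorem sum_ite_sq_apply (hP : IsStarProjection P) (i : n) :
    ∑ j, (if i = j then 0 else P i j ^ 2) = P i i - P i i ^ 2 := by
  rw [sum_ite_eq_sum_sub, hP.sum_sq_apply]

theorem sum_ite_abs_rpow_le (hP : IsStarProjection P) {q : ℝ} (hq : 3 ≤ q) :
    ∑ i, ∑ j, (if i = j then 0 else |P i j| ^ q) ≤ 2 ^ (1 - q) * P.trace := by
  -- `c i * c j` bounds `|P i j| ^ (q - 2)` by spending a `(q - 1) / 4` power of `P i j ^ 2` on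
  -- `P i i * P j j` and a `(q - 3) / 4` power on `(1 - P i i) * (1 - P j j)`: hence `q ≥ 3`.
  let c : n → ℝ := fun i => P i i ^ ((q - 1) / 4) * (1 - P i i) ^ ((q - 3) / 4)
  let w : n → n → ℝ := fun i j => if i = j then 0 else P i j ^ 2
  have hw : ∀ i j, 0 ≤ w i j := fun i j => by positivity
  have hsymm : ∀ i j, w i j = w j i := fun i j => by simp only [w, eq_comm, hP.apply_comm]
  calc ∑ i, ∑ j, (if i = j then 0 else |P i j| ^ q) ≤ ∑ i, ∑ j, w i j * (c i * c j) := by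
        gcongr with i _ j _
        by_cases hij : i = j
        · simp [w, hij]
        simp only [w, c, if_neg hij, mul_mul_mul_comm, ← Real.mul_rpow (hP.diag_nonneg i)
          (hP.diag_nonneg j), ← Real.mul_rpow (sub_nonneg.2 (hP.diag_le_one i))
          (sub_nonneg.2 (hP.diag_le_one j))]
        exact abs_rpow_le_sq_mul_rpow_mul_rpow (hP.sq_apply_le i j) (hP.sq_apply_le_one_sub hij) hq
    _ ≤ ∑ i, ∑ j, w i j * c i ^ 2 := sum_sum_mul_mul_le_sum_sum_mul_sq hw hsymm c
    _ = ∑ i, c i ^ 2 * (P i i - P i i ^ 2) := by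
        simp only [← sum_mul, w, hP.sum_ite_sq_apply, mul_comm]
    _ ≤ ∑ i, 2 ^ (1 - q) * P i i := sum_le_sum fun i _ =>
        sq_mul_rpow_mul_sub_sq_le (hP.diag_nonneg i) (hP.diag_le_one i) (by linarith)
    _ = 2 ^ (1 - q) * P.trace := by rw [← mul_sum]; rfl

theorem trace_le_sum_ite_abs_mul (hP : IsStarProjection P) {A : Matrix n n ℝ}
    (hAP : A * P = 0) (hA : ∀ i, A i i = 1) :
    P.trace ≤ ∑ i, ∑ j, if i = j then 0 else |A i j| * |P i j| := by
  refine sum_le_sum fun i _ => ?_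
  have hrow : ∑ j, A i j * P i j = 0 := by
    simpa [mul_apply, hP.apply_comm] using congrFun₂ hAP i i
  have hdiag : P i i = ∑ j, (if i = j then 0 else -(A i j * P i j)) := by
    rw [sum_ite_eq_sum_sub, sum_neg_distrib, hrow, hA]
    ring
  rw [diag_apply, hdiag]
  gcongr with j
  split_ifs
  · rfl
  · exact (neg_le_abs _).trans (abs_mul _ _).le

theorem two_mul_trace_le_sum_ite_abs_rpow (hP : IsStarProjection P) {A : Matrix n n ℝ}
    (hAP : A * P = 0) (hA : ∀ i, A i i = 1) {p : ℝ} (hp1 : 1 ≤ p) (hp : p ≤ 3 / 2) :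
    2 * P.trace ≤ ∑ i, ∑ j, if i = j then 0 else |A i j| ^ p := by
  have htr := hP.trace_le_sum_ite_abs_mul hAP hA
  rcases hp1.eq_or_lt with rfl | hp1
  · calc 2 * P.trace ≤ 2 * ∑ i, ∑ j, if i = j then 0 else |A i j| * |P i j| := by gcongr
      _ ≤ 2 * ∑ i, ∑ j, if i = j then 0 else |A i j| * (1 / 2) := by
          gcongr with i _ j _
          split_ifs with hij
          · rfl
          · exact mul_le_mul_of_nonneg_left (hP.abs_apply_le_half hij) (abs_nonneg _)
      _ = ∑ i, ∑ j, if i = j then 0 else |A i j| ^ (1 : ℝ) := by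
          simp only [mul_sum, Real.rpow_one]
          congr! 2 with i _ j _
          split_ifs <;> ring
  have hpq := Real.HolderConjugate.conjExponent hp1
  have hq : 3 ≤ p.conjExponent := by
    rw [Real.conjExponent, le_div_iff₀ (by linarith)]
    linarith
  have hPq := hP.sum_ite_abs_rpow_le hq
  rw [← sum_offDiag_eq_sum_sum_ite] at htr hPq ⊢
  exact two_mul_le_sum_rpow_of_le_sum_mul _ hpq (fun _ _ => abs_nonneg _)
    (fun _ _ => abs_nonneg _) htr hPq

end IsStarProjection

theorem Matrix.exists_isStarProjection_mul_eq_zero_trace_add_rank_eq {n : Type*} [Fintype n]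
    [DecidableEq n] (A : Matrix n n ℝ) :
    ∃ P : Matrix n n ℝ, IsStarProjection P ∧ A * P = 0 ∧ P.trace + A.rank = Fintype.card n := by
  let T := toEuclideanCLM (n := n) (𝕜 := ℝ)
  let TA := toEuclideanLin A
  let K := LinearMap.ker TA
  obtain ⟨P, hP⟩ : ∃ P, T P = K.starProjection := EquivLike.surjective T _
  refine ⟨P, ⟨?_, ?_⟩, ?_, ?_⟩
  · exact EquivLike.injective T <| by rw [map_mul, hP, K.isIdempotentElem_starProjection.eq]
  · exact EquivLike.injective T <| by
      rw [map_star, hP, (isSelfAdjoint_starProjection K).star_eq]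
  · refine EquivLike.injective T ?_
    rw [map_mul, hP, map_zero]
    ext1 x
    exact (K.starProjection_apply_mem x : _)
  · have htr : P.trace = Module.finrank ℝ K := by
      rw [← trace_toLin_eq P (EuclideanSpace.basisFun n ℝ).toBasis,
        ← toEuclideanLin_eq_toLin_orthonormal, ← coe_toEuclideanCLM_eq_toEuclideanLin, hP]
      exact LinearMap.IsProj.trace
        ⟨K.starProjection_apply_mem, fun x hx => K.starProjection_eq_self_iff.mpr hx⟩
    have hrank : A.rank = Module.finrank ℝ (LinearMap.range TA) := by
      rw [rank_eq_finrank_range_toLin A (EuclideanSpace.basisFun n ℝ).toBasis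
        (EuclideanSpace.basisFun n ℝ).toBasis, ← toEuclideanLin_eq_toLin_orthonormal]
    rw [htr, hrank, ← Nat.cast_add, add_comm, LinearMap.finrank_range_add_finrank_ker TA,
      finrank_euclideanSpace]

theorem pFrameEnergy_d_plus_m_general (d m : ℕ) (hm : 1 ≤ m)
    (p : ℝ) (hp1 : 1 ≤ p)
    (hp2 : p ≤ 2 * Real.log ((2 * (m : ℝ) + 1) / (2 * (m : ℝ))) /
        Real.log (((m : ℝ) + 1) / (m : ℝ)))
    (A : Matrix (Fin (d + m)) (Fin (d + m)) ℝ) (hrank : A.rank = d)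
    (hdiag : ∀ i, A i i = 1) :
    2 * (m : ℝ) ≤ ∑ i, ∑ j, if i = j then 0 else |A i j| ^ p := by
  obtain ⟨P, hP, hAP, htr⟩ := A.exists_isStarProjection_mul_eq_zero_trace_add_rank_eq
  have hPtr : P.trace = m := by
    rw [hrank, Fintype.card_fin, Nat.cast_add] at htr
    linarith
  have hp : p ≤ 3 / 2 := hp2.trans (two_mul_log_div_log_le_three_halves (by exact_mod_cast hm))
  exact hPtr ▸ hP.two_mul_trace_le_sum_ite_abs_rpow hAP hdiag hp1 hp

/-- For `1 ≤ m < d`, `p ∈ [1, p_m]` with `p_m = 2 log((2m+1)/(2m)) / log((m+1)/m)`, and any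
real `(d+m) × (d+m)` matrix `A` of rank `d` with unit diagonal entries, `E_p(A) ≥ 2m`. -/
theorem pFrameEnergy_d_plus_m (d m : ℕ) (hd : 2 ≤ d) (hm : 1 ≤ m) (hmd : m < d)
    (p : ℝ) (hp1 : 1 ≤ p)
    (hp2 : p ≤ 2 * Real.log ((2 * (m : ℝ) + 1) / (2 * (m : ℝ))) /
        Real.log (((m : ℝ) + 1) / (m : ℝ)))
    (A : Matrix (Fin (d + m)) (Fin (d + m)) ℝ) (hrank : A.rank = d)
    (hdiag : ∀ i, A i i = 1) :
    2 * (m : ℝ) ≤ ∑ i, ∑ j, if i = j then 0 else |A i j| ^ p :=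
  pFrameEnergy_d_plus_m_general d m hm p hp1 hp2 A hrank hdiag
end

section
/- Let p ∈ [1, 2], let m ≥ 1 be an integer and N an integer with N > m, and set α = (1/m)(1/2 − p/4). Then the minimum M(1/m, p, N) of ∑_{i=1}^N f(t_i), where f(t) = (t/(1/m − t))^{p/2}, over all tuples (t_1, …, t_N) with t_i ∈ [0, 1/m) and ∑ t_i = 1, is attained at a tuple which, after permuting coordinates, has one of the following two forms: (i) t_1 = … = t_k = 1/k and t_{k+1} = … = t_N = 0 for some k with 1/k ≥ α; or (ii) t_1 = … = t_k = x, t_{k+1} = 1 − kx, and t_{k+2} = … = t_N = 0 for some k and some x with x ≥ α and 0 < 1 − kx < α. -/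
/-!
With `c = 1/m` and `q = p/2`, the sign of the second derivative of `t ↦ (t/(c - t))^q` is the sign
of `2t - (1 - q)c`, so this function is strictly concave on `[0, α]` and strictly convex on
`[α, c)`, where `α = c(1 - q)/2`. A minimizer exists because the function blows up at `c`. At a
minimizer no two coordinates can be replaced by two others with the same sum and a smaller total:
by strict convexity all coordinates `≥ α` are equal, and by strict concavity no two coordinates
lie in `(0, α)`, since two such coordinates with sum `s` could be pushed apart to
`max 0 (s - α)` and `min α s`. Sorting the coordinates decreasingly gives the two forms.
-/

open Real Set Filter Topology
open scoped Finset

noncomputable def ratioPow (c q t : ℝ) : ℝ := (t / (c - t)) ^ q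

section RatioPow

variable {c q t : ℝ}

lemma ratioPow_pos (ht : 0 < t) (htc : t < c) : 0 < ratioPow c q t :=
  rpow_pos_of_pos (div_pos ht (sub_pos.2 htc)) q

lemma ratioPow_nonneg (ht : 0 ≤ t) (htc : t < c) : 0 ≤ ratioPow c q t :=
  rpow_nonneg (div_nonneg ht (sub_nonneg.2 htc.le)) q

lemma continuousOn_ratioPow (hq : 0 ≤ q) : ContinuousOn (ratioPow c q) (Iio c) :=
  ((continuousOn_id' _).div (continuousOn_const.sub (continuousOn_id' _))
    fun _ hs => (sub_pos.2 (Set.mem_Iio.1 hs)).ne').rpow_const fun _ _ => Or.inr hq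

lemma tendsto_ratioPow_nhdsLT (hc : 0 < c) (hq : 0 < q) :
    Tendsto (ratioPow c q) (𝓝[<] c) atTop := by
  have hsub : Tendsto (fun s => c - s) (𝓝[<] c) (𝓝[>] 0) := by
    refine tendsto_nhdsWithin_of_tendsto_nhds_of_eventually_within _ ?_ ?_
    · simpa using ((continuous_sub_left c).tendsto c).mono_left nhdsWithin_le_nhds
    · filter_upwards [self_mem_nhdsWithin] with s hs using sub_pos.2 (Set.mem_Iio.1 hs)
  have hratio : Tendsto (fun s => s / (c - s)) (𝓝[<] c) atTop :=
    (tendsto_nhdsWithin_of_tendsto_nhds tendsto_id).pos_mul_atTop hc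
      (tendsto_inv_nhdsGT_zero.comp hsub)
  exact (tendsto_rpow_atTop hq).comp hratio

lemma hasDerivAt_ratioPow (ht : 0 < t) (htc : t < c) :
    HasDerivAt (ratioPow c q) (q * c * ratioPow c q t / (t * (c - t))) t := by
  have hct : c - t ≠ 0 := (sub_pos.2 htc).ne'
  have hratio : HasDerivAt (fun s => s / (c - s)) (c / (c - t) ^ 2) t :=
    ((hasDerivAt_id' t).div ((hasDerivAt_id' t).const_sub c) hct).congr_deriv
      (by field_simp; ring)
  refine (hratio.rpow_const (Or.inl (div_pos ht (sub_pos.2 htc)).ne')).congr_deriv ?_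
  rw [ratioPow, rpow_sub_one (div_pos ht (sub_pos.2 htc)).ne']
  field_simp

lemma iterate_deriv_two_ratioPow (ht : 0 < t) (htc : t < c) :
    deriv^[2] (ratioPow c q) t =
      q * c * ratioPow c q t * (2 * t - (1 - q) * c) / (t * (c - t)) ^ 2 := by
  have hct : c - t ≠ 0 := (sub_pos.2 htc).ne'
  have hderiv : deriv (ratioPow c q) =ᶠ[𝓝 t]
      fun s => q * c * ratioPow c q s / (s * (c - s)) := by
    filter_upwards [isOpen_Ioo.mem_nhds ⟨ht, htc⟩] with s hs
    exact (hasDerivAt_ratioPow hs.1 hs.2).deriv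
  have hden : HasDerivAt (fun s => s * (c - s)) (c - 2 * t) t :=
    ((hasDerivAt_id' t).mul ((hasDerivAt_id' t).const_sub c)).congr_deriv (by ring)
  have h := (((hasDerivAt_ratioPow ht htc).const_mul (q * c)).div hden
    (mul_ne_zero ht.ne' hct)).congr_of_eventuallyEq hderiv
  rw [Function.iterate_succ_apply, Function.iterate_one, h.deriv]
  field_simp
  ring

lemma strictConvexOn_ratioPow (hc : 0 < c) (hq : 0 < q) (hq1 : q ≤ 1) :
    StrictConvexOn ℝ (Ico (c * (1 - q) / 2) c) (ratioPow c q) := by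
  refine strictConvexOn_of_deriv2_pos (convex_Ico _ _)
    ((continuousOn_ratioPow hq.le).mono fun _ hs => hs.2) fun s hs => ?_
  rw [interior_Ico] at hs
  have hs0 : 0 < s := lt_of_le_of_lt (by nlinarith) hs.1
  have hcs : 0 < c - s := sub_pos.2 hs.2
  rw [iterate_deriv_two_ratioPow hs0 hs.2]
  have := ratioPow_pos (q := q) hs0 hs.2
  exact div_pos (mul_pos (by positivity) (by linarith [hs.1])) (by positivity)

lemma strictConcaveOn_ratioPow (hc : 0 < c) (hq : 0 < q) :
    StrictConcaveOn ℝ (Icc 0 (c * (1 - q) / 2)) (ratioPow c q) := by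
  have hαc : c * (1 - q) / 2 < c := by nlinarith
  refine strictConcaveOn_of_deriv2_neg (convex_Icc _ _)
    ((continuousOn_ratioPow hq.le).mono fun _ hs => hs.2.trans_lt hαc) fun s hs => ?_
  rw [interior_Icc] at hs
  have hsc : s < c := hs.2.trans hαc
  have hcs : 0 < c - s := sub_pos.2 hsc
  rw [iterate_deriv_two_ratioPow hs.1 hsc]
  have := ratioPow_pos (q := q) hs.1 hsc
  have := hs.1
  exact div_neg_of_neg_of_pos (mul_neg_of_pos_of_neg (by positivity) (by linarith [hs.2]))
    (by positivity)

end RatioPow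

def cappedSimplex (ι : Type*) [Fintype ι] (c : ℝ) : Set (ι → ℝ) :=
  {t | (∀ i, 0 ≤ t i ∧ t i < c) ∧ ∑ i, t i = 1}

lemma const_mem_cappedSimplex {ι : Type*} [Fintype ι] {c : ℝ} (hι : 0 < Fintype.card ι)
    (hc : 1 / (Fintype.card ι : ℝ) < c) :
    (fun _ => 1 / (Fintype.card ι : ℝ)) ∈ cappedSimplex ι c := by
  refine ⟨fun _ => ⟨by positivity, hc⟩, ?_⟩
  rw [Finset.sum_const, Finset.card_univ, nsmul_eq_mul]
  field_simp

lemma StrictConcaveOn.add_lt_add_of_mem_Ioo {D : Set ℝ} {f : ℝ → ℝ} {a b x y : ℝ}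
    (hf : StrictConcaveOn ℝ D f) (ha : a ∈ D) (hb : b ∈ D) (hx : x ∈ Ioo a b)
    (hxy : x + y = a + b) : f a + f b < f x + f y := by
  have hab : 0 < b - a := by linarith [hx.1, hx.2]
  set θ := (b - x) / (b - a)
  have hθ : θ * (b - a) = b - x := div_mul_cancel₀ _ hab.ne'
  have hθ0 : 0 < θ := div_pos (by linarith [hx.2]) hab
  have hθ1 : θ < 1 := (div_lt_one hab).2 (by linarith [hx.1])
  have hne : a ≠ b := (sub_pos.1 hab).ne
  have h₁ := hf.2 ha hb hne hθ0 (sub_pos.2 hθ1) (add_sub_cancel θ 1)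
  have h₂ := hf.2 ha hb hne (sub_pos.2 hθ1) hθ0 (sub_add_cancel 1 θ)
  simp only [smul_eq_mul] at h₁ h₂
  rw [show θ * a + (1 - θ) * b = x by linear_combination -hθ] at h₁
  rw [show (1 - θ) * a + θ * b = y by linear_combination hθ - hxy] at h₂
  linarith

lemma sum_comp_update_add {ι α β : Type*} [Fintype ι] [DecidableEq ι] [AddCommMonoid β]
    (g : α → β) (f : ι → α) (i : ι) (u : α) :
    ∑ k, g (Function.update f i u k) + g (f i) = ∑ k, g (f k) + g u := by
  rw [← Finset.add_sum_erase _ _ (Finset.mem_univ i),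
    ← Finset.add_sum_erase _ _ (Finset.mem_univ i), Function.update_self,
    Finset.sum_congr rfl fun k hk =>
      congrArg g (Function.update_of_ne (Finset.ne_of_mem_erase hk) u f)]
  abel

lemma sum_comp_update_update_add {ι α β : Type*} [Fintype ι] [DecidableEq ι] [AddCommMonoid β]
    (g : α → β) (f : ι → α) {i j : ι} (hij : i ≠ j) (u v : α) :
    ∑ k, g (Function.update (Function.update f i u) j v k) + (g (f i) + g (f j)) =
      ∑ k, g (f k) + (g u + g v) := by
  have h := sum_comp_update_add g (Function.update f i u) j v
  rw [Function.update_of_ne hij.symm] at h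
  rw [← add_assoc, add_right_comm, h, add_right_comm, sum_comp_update_add, add_assoc]

section CappedSimplex

variable {ι : Type*} [Fintype ι] {c : ℝ} {g : ℝ → ℝ} {t : ι → ℝ}

lemma exists_isMinOn_sum_cappedSimplex (hg : ContinuousOn g (Ico 0 c))
    (hg0 : ∀ x ∈ Ico 0 c, 0 ≤ g x) (hgc : Tendsto g (𝓝[<] c) atTop)
    (hne : (cappedSimplex ι c).Nonempty) :
    ∃ t ∈ cappedSimplex ι c, IsMinOn (fun s => ∑ i, g (s i)) (cappedSimplex ι c) t := by
  obtain ⟨t₀, ht₀⟩ := hne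
  set F : (ι → ℝ) → ℝ := fun s => ∑ i, g (s i)
  obtain ⟨b, hbc, hb⟩ : ∃ b ∈ Iio c, Ioo b c ⊆ {x | F t₀ < g x} :=
    mem_nhdsLT_iff_exists_Ioo_subset.1 (hgc.eventually_gt_atTop (F t₀))
  have hlarge : ∀ s ∈ cappedSimplex ι c, ∀ i, b < s i → F t₀ < F s := fun s hs i hi =>
    (hb ⟨hi, (hs.1 i).2⟩).trans_le <| Finset.single_le_sum
      (fun j _ => hg0 _ ⟨(hs.1 j).1, (hs.1 j).2⟩) (Finset.mem_univ i)
  set K := (Set.univ.pi fun _ : ι => Icc 0 b) ∩ {s | ∑ i, s i = 1}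
  have hKS : K ⊆ cappedSimplex ι c := fun s hs =>
    ⟨fun i => ⟨(hs.1 i (Set.mem_univ i)).1, (hs.1 i (Set.mem_univ i)).2.trans_lt hbc⟩, hs.2⟩
  have hK : IsCompact K := (isCompact_univ_pi fun _ => isCompact_Icc).inter_right <|
    isClosed_eq (continuous_finsetSum _ fun i _ => continuous_apply i) continuous_const
  have ht₀K : t₀ ∈ K :=
    ⟨fun i _ => ⟨(ht₀.1 i).1, not_lt.1 fun h => (hlarge t₀ ht₀ i h).false⟩, ht₀.2⟩
  have hF : ContinuousOn F K := continuousOn_finsetSum _ fun i _ =>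
    hg.comp (continuous_apply i).continuousOn fun s hs => ⟨((hKS hs).1 i).1, ((hKS hs).1 i).2⟩
  obtain ⟨t, htK, htmin⟩ := hK.exists_isMinOn ⟨t₀, ht₀K⟩ hF
  refine ⟨t, hKS htK, fun s hs => ?_⟩
  by_cases hsb : ∀ i, s i ≤ b
  · exact htmin ⟨fun i _ => ⟨(hs.1 i).1, hsb i⟩, hs.2⟩
  · obtain ⟨i, hi⟩ := not_forall.1 hsb
    exact (htmin ht₀K).trans (hlarge s hs i (not_le.1 hi)).le

variable (ht : t ∈ cappedSimplex ι c)
  (hmin : IsMinOn (fun s => ∑ i, g (s i)) (cappedSimplex ι c) t)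
include ht hmin

lemma add_le_add_of_isMinOn_sum {i j : ι} (hij : i ≠ j) {u v : ℝ} (hu : u ∈ Ico 0 c)
    (hv : v ∈ Ico 0 c) (huv : u + v = t i + t j) : g (t i) + g (t j) ≤ g u + g v := by
  classical
  set s := Function.update (Function.update t i u) j v
  have hs : s ∈ cappedSimplex ι c := by
    refine ⟨fun k => ?_, ?_⟩
    · rcases eq_or_ne k j with rfl | hkj
      · simpa [s] using hv
      rcases eq_or_ne k i with rfl | hki
      · simpa [s, hkj] using hu
      · simpa [s, hkj, hki] using ht.1 k
    · have := sum_comp_update_update_add id t hij u v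
      simp only [id, ht.2] at this
      linarith
  have hle : ∑ k, g (t k) ≤ ∑ k, g (s k) := hmin hs
  have := sum_comp_update_update_add g t hij u v
  linarith

lemma eq_of_isMinOn_sum_of_strictConvexOn {D : Set ℝ} (hD : D ⊆ Ico 0 c)
    (hg : StrictConvexOn ℝ D g) {i j : ι} (hi : t i ∈ D) (hj : t j ∈ D) : t i = t j := by
  by_contra hne
  have hij : i ≠ j := fun h => hne (congrArg t h)
  have hmid : (t i + t j) / 2 ∈ D := by
    convert hg.1 hi hj (by norm_num : (0 : ℝ) ≤ 1 / 2) (by norm_num : (0 : ℝ) ≤ 1 / 2)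
      (by norm_num) using 1
    simp only [smul_eq_mul]
    ring
  have hlt := hg.2 hi hj hne (by norm_num : (0 : ℝ) < 1 / 2) (by norm_num : (0 : ℝ) < 1 / 2)
    (by norm_num)
  have hle := add_le_add_of_isMinOn_sum ht hmin hij (hD hmid) (hD hmid) (add_halves _)
  simp only [smul_eq_mul] at hlt
  rw [show 1 / 2 * t i + 1 / 2 * t j = (t i + t j) / 2 by ring] at hlt
  linarith

lemma eq_of_isMinOn_sum_of_strictConcaveOn {α : ℝ} (hαc : α < c)
    (hg : StrictConcaveOn ℝ (Icc 0 α) g) {i j : ι} (hi : t i ∈ Ioo 0 α)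
    (hj : t j ∈ Ioo 0 α) : i = j := by
  by_contra hij
  have hα : 0 ≤ α := hi.1.le.trans hi.2.le
  have ha : max 0 (t i + t j - α) ∈ Icc 0 α :=
    ⟨le_max_left _ _, max_le hα (by linarith [hi.2, hj.2])⟩
  have hb : min α (t i + t j) ∈ Icc 0 α :=
    ⟨le_min hα (by linarith [hi.1, hj.1]), min_le_left _ _⟩
  have hab : max 0 (t i + t j - α) + min α (t i + t j) = t i + t j := by
    rcases le_total (t i + t j) α with h | h
    · rw [max_eq_left (by linarith), min_eq_right h, zero_add]
    · rw [max_eq_right (by linarith), min_eq_left h]; ring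
  have hlt := hg.add_lt_add_of_mem_Ioo ha hb
    ⟨max_lt hi.1 (by linarith [hj.2]), lt_min hi.2 (by linarith [hj.1])⟩ hab.symm
  have hle := add_le_add_of_isMinOn_sum ht hmin hij ⟨ha.1, ha.2.trans_lt hαc⟩
    ⟨hb.1, hb.2.trans_lt hαc⟩ hab
  linarith

end CappedSimplex

def IsBlockForm {N : ℕ} (α : ℝ) (u : Fin N → ℝ) : Prop :=
  (∃ k : ℕ, 0 < k ∧ α ≤ 1 / (k : ℝ) ∧
    ∀ i : Fin N, u i = if (i : ℕ) < k then 1 / (k : ℝ) else 0) ∨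
  (∃ k : ℕ, ∃ x : ℝ, α ≤ x ∧ 0 < 1 - (k : ℝ) * x ∧ 1 - (k : ℝ) * x < α ∧
    ∀ i : Fin N, u i =
      if (i : ℕ) < k then x else if (i : ℕ) = k then 1 - (k : ℝ) * x else 0)

lemma Antitone.lt_card_filter_le_iff {β : Type*} [Preorder β] [DecidableLE β] {n : ℕ}
    {u : Fin n → β} (hu : Antitone u) (a : β) (i : Fin n) :
    (i : ℕ) < #{j | a ≤ u j} ↔ a ≤ u i := by
  constructor
  · intro hi
    by_contra h
    have hsub : ({j | a ≤ u j} : Finset (Fin n)) ⊆ Finset.Iio i := fun j hj => by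
      simp only [Finset.mem_filter, Finset.mem_univ, true_and] at hj
      exact Finset.mem_Iio.2 (lt_of_not_ge fun hij => h (hj.trans (hu hij)))
    exact (Finset.card_le_card hsub).not_gt (by rwa [Fin.card_Iio])
  · intro h
    have hsub : Finset.Iic i ⊆ ({j | a ≤ u j} : Finset (Fin n)) := fun j hj => by
      simpa using h.trans (hu (Finset.mem_Iic.1 hj))
    simpa [Fin.card_Iic] using Finset.card_le_card hsub

lemma Antitone.eq_zero_of_card_filter_le_lt {N : ℕ} {α : ℝ} {u : Fin N → ℝ}
    (hu : Antitone u) (hu0 : ∀ i, 0 ≤ u i)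
    (hsmall : ∀ i j, u i ∈ Ioo 0 α → u j ∈ Ioo 0 α → i = j) {i : Fin N}
    (hi : #{j | α ≤ u j} < (i : ℕ)) : u i = 0 := by
  set j : Fin N := ⟨_, hi.trans i.2⟩
  have hji : j < i := hi
  have hjα : u j < α := lt_of_not_ge fun h => (lt_irrefl _ ((hu.lt_card_filter_le_iff α j).2 h))
  refine (hu0 i).eq_or_lt.elim Eq.symm fun hpos => ?_
  have hij := hsmall i j ⟨hpos, (hu hji.le).trans_lt hjα⟩ ⟨hpos.trans_le (hu hji.le), hjα⟩
  exact absurd hji (by rw [hij]; exact lt_irrefl _)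

lemma isBlockForm_of_antitone {N : ℕ} {α : ℝ} {u : Fin N → ℝ} (hu : Antitone u)
    (hu0 : ∀ i, 0 ≤ u i) (hsum : ∑ i, u i = 1)
    (hlarge : ∀ i j, α ≤ u i → α ≤ u j → u i = u j)
    (hsmall : ∀ i j, u i ∈ Ioo 0 α → u j ∈ Ioo 0 α → i = j) : IsBlockForm α u := by
  set k := #{j | α ≤ u j}
  have hA := hu.lt_card_filter_le_iff α
  obtain ⟨x, hαx, hx⟩ : ∃ x, α ≤ x ∧ ∀ i, α ≤ u i → u i = x := by
    by_cases h : ∃ i, α ≤ u i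
    · obtain ⟨i, hi⟩ := h
      exact ⟨u i, hi, fun j hj => hlarge j i hj hi⟩
    · exact ⟨α, le_rfl, fun i hi => (h ⟨i, hi⟩).elim⟩
  have hkα : ∀ j : Fin N, (j : ℕ) = k → u j < α := fun j hj =>
    lt_of_not_ge fun h => ((hA j).2 h).ne hj
  have htail : ∀ i : Fin N, k < (i : ℕ) → u i = 0 := fun i =>
    hu.eq_zero_of_card_filter_le_lt hu0 hsmall
  have hsplit : ∑ i, u i = k * x + ∑ i ∈ {j | ¬ α ≤ u j}, u i := by
    rw [← Finset.sum_filter_add_sum_filter_not Finset.univ (fun j => α ≤ u j),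
      Finset.sum_congr rfl fun i hi => hx i (Finset.mem_filter.1 hi).2, Finset.sum_const,
      nsmul_eq_mul]
  by_cases hy : ∃ j : Fin N, (j : ℕ) = k ∧ 0 < u j
  · obtain ⟨j, hjk, hj⟩ := hy
    have hjα := hkα j hjk
    have hrest : ∑ i ∈ {j | ¬ α ≤ u j}, u i = u j := by
      refine Finset.sum_eq_single_of_mem j (by simpa using hjα) fun i hi hij => htail i ?_
      have : ¬ (i : ℕ) < k := fun h => absurd ((hA i).1 h) (Finset.mem_filter.1 hi).2
      exact lt_of_le_of_ne (by omega) (fun h => hij (Fin.ext (by omega)))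
    have hyj : u j = 1 - k * x := by linarith
    refine Or.inr ⟨k, x, hαx, hyj ▸ hj, hyj ▸ hjα, fun i => ?_⟩
    split_ifs with hik hik'
    · exact hx i ((hA i).1 hik)
    · rw [← hyj, Fin.ext (hik'.trans hjk.symm)]
    · exact htail i (by omega)
  · push Not at hy
    have hzero : ∀ i : Fin N, ¬ (i : ℕ) < k → u i = 0 := fun i hik =>
      (eq_or_ne (i : ℕ) k).elim (fun h => le_antisymm (hy i h) (hu0 i))
        fun h => htail i (by omega)
    have hkx : k * x = 1 := by
      rwa [hsplit, Finset.sum_eq_zero fun i hi => hzero i fun h =>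
        absurd ((hA i).1 h) (Finset.mem_filter.1 hi).2, add_zero] at hsum
    have hk0 : 0 < k := Nat.pos_of_ne_zero fun h => by simp [h] at hkx
    have hxk : x = 1 / k := by field_simp; linarith
    refine Or.inl ⟨k, hk0, hxk ▸ hαx, fun i => ?_⟩
    split_ifs with hik
    · rw [← hxk]; exact hx i ((hA i).1 hik)
    · exact hzero i hik

lemma exists_perm_isBlockForm {N : ℕ} {α : ℝ} {t : Fin N → ℝ}
    (ht0 : ∀ i, 0 ≤ t i) (hsum : ∑ i, t i = 1)
    (hlarge : ∀ i j, α ≤ t i → α ≤ t j → t i = t j)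
    (hsmall : ∀ i j, t i ∈ Ioo 0 α → t j ∈ Ioo 0 α → i = j) :
    ∃ σ : Equiv.Perm (Fin N), IsBlockForm α (t ∘ σ) := by
  set σ := Tuple.sort (OrderDual.toDual ∘ t)
  refine ⟨σ, isBlockForm_of_antitone (monotone_toDual_comp_iff.1 (Tuple.monotone_sort _))
    (fun i => ht0 _) ((Equiv.sum_comp σ t).trans hsum) (fun i j => hlarge _ _)
    fun i j hi hj => σ.injective (hsmall _ _ hi hj)⟩

/-- For `p ∈ [1, 2]`, `m ≥ 1`, `N > m` and `α = (1/m)(1/2 - p/4)`, the minimum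
`M(1/m, p, N)` of `∑ᵢ (tᵢ/(1/m - tᵢ))^{p/2}` over tuples with `tᵢ ∈ [0, 1/m)` and
`∑ tᵢ = 1` is attained at a tuple which, after permuting coordinates, has one of the
forms: (i) `t₁ = ⋯ = t_k = 1/k`, rest `0`, with `1/k ≥ α`; or (ii) `t₁ = ⋯ = t_k = x`,
`t_{k+1} = 1 - kx`, rest `0`, with `x ≥ α` and `0 < 1 - kx < α`. -/
theorem M_minimizer_structure (N m : ℕ) (hm : 1 ≤ m) (hmN : m < N)
    (p : ℝ) (hp1 : 1 ≤ p) (hp2 : p ≤ 2) :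
    ∃ t : Fin N → ℝ,
      (∀ i, 0 ≤ t i ∧ t i < 1 / (m : ℝ)) ∧ (∑ i, t i = 1) ∧
      (∀ s : Fin N → ℝ, (∀ i, 0 ≤ s i ∧ s i < 1 / (m : ℝ)) → (∑ i, s i = 1) →
        ∑ i, (t i / (1 / (m : ℝ) - t i)) ^ (p / 2) ≤
          ∑ i, (s i / (1 / (m : ℝ) - s i)) ^ (p / 2)) ∧
      ∃ σ : Equiv.Perm (Fin N),
        (∃ k : ℕ, 0 < k ∧ 1 / (m : ℝ) * (1 / 2 - p / 4) ≤ 1 / (k : ℝ) ∧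
          ∀ i : Fin N, t (σ i) = if (i : ℕ) < k then 1 / (k : ℝ) else 0) ∨
        (∃ k : ℕ, ∃ x : ℝ, 1 / (m : ℝ) * (1 / 2 - p / 4) ≤ x ∧
          0 < 1 - (k : ℝ) * x ∧ 1 - (k : ℝ) * x < 1 / (m : ℝ) * (1 / 2 - p / 4) ∧
          ∀ i : Fin N, t (σ i) =
            if (i : ℕ) < k then x else if (i : ℕ) = k then 1 - (k : ℝ) * x else 0) := by
  have hm0 : (0 : ℝ) < m := Nat.cast_pos.2 hm
  have hc : (0 : ℝ) < 1 / m := one_div_pos.2 hm0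
  have hq : 0 < p / 2 := by linarith
  have hq1 : p / 2 ≤ 1 := by linarith
  have hα0 : 0 ≤ 1 / (m : ℝ) * (1 - p / 2) / 2 := by
    have := sub_nonneg.2 hq1; positivity
  have hαc : 1 / (m : ℝ) * (1 - p / 2) / 2 < 1 / m := by nlinarith
  have hne : (cappedSimplex (Fin N) (1 / m)).Nonempty := ⟨_, const_mem_cappedSimplex
    (by rw [Fintype.card_fin]; omega)
    (by rw [Fintype.card_fin]; exact one_div_lt_one_div_of_lt hm0 (Nat.cast_lt.2 hmN))⟩
  obtain ⟨t, ht, hmin⟩ := exists_isMinOn_sum_cappedSimplex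
    ((continuousOn_ratioPow hq.le).mono Ico_subset_Iio_self)
    (fun x hx => ratioPow_nonneg hx.1 hx.2) (tendsto_ratioPow_nhdsLT hc hq) hne
  refine ⟨t, ht.1, ht.2, fun s hs hsum => hmin ⟨hs, hsum⟩, ?_⟩
  rw [show 1 / (m : ℝ) * (1 / 2 - p / 4) = 1 / m * (1 - p / 2) / 2 by ring]
  exact exists_perm_isBlockForm (fun i => (ht.1 i).1) ht.2
    (fun i j hi hj => eq_of_isMinOn_sum_of_strictConvexOn ht hmin (Ico_subset_Ico_left hα0)
      (strictConvexOn_ratioPow hc hq hq1) ⟨hi, (ht.1 i).2⟩ ⟨hj, (ht.1 j).2⟩)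
    (fun i j hi hj => eq_of_isMinOn_sum_of_strictConcaveOn ht hmin hαc
      (strictConcaveOn_ratioPow hc hq) hi hj)
end

section
/- Let m ≥ 1 be an integer and set p_m = 2·log((2m+1)/(2m)) / log((m+1)/m) and F_m(x) = x · (m/(x − m))^{p_m/2} for x > m. Then for every integer k > m one has F_m(k) ≥ 2m, and equality holds for k = 2m and k = 2m + 1; that is, the minimum of F_m over integers greater than m equals 2m. -/
/-!
For `a > c > 0` the concave Bernoulli inequality at exponent `(a - c) / a` gives
`((x - c) / (a - c)) ^ ((a - c) / a) ≤ x / a`, hence `a (c/(a-c))^q ≤ x (c/(x-c))^q` whenever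
`x ≤ a` and `q ≥ (a - c) / a`, or `x ≥ a` and `q ≤ (a - c) / a`. With `c = m` and `q = p_m / 2`,
the choice of `p_m` makes `F(2m) = F(2m+1) = 2m`, so it remains to show
`1/2 ≤ q ≤ (m+1)/(2m+1)`. Both follow from splitting
`log((m+1)/m) = log((2m+1)/(2m)) + log((2m+2)/(2m+1))` and `1 - 1/y ≤ log y ≤ y - 1`.
-/

open Real

section PowerLaw

variable {c a x q : ℝ}

theorem rpow_sub_div_sub_le_div (hc : 0 < c) (ha : c < a) (hx : c < x) :
    ((x - c) / (a - c)) ^ ((a - c) / a) ≤ x / a := by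
  have ha0 : 0 < a := hc.trans ha
  have hac : 0 < a - c := sub_pos.mpr ha
  have key := rpow_one_add_le_one_add_mul_self (s := (x - a) / (a - c))
    (by rw [le_div_iff₀ hac]; linarith) (div_nonneg hac.le ha0.le)
    (div_le_one_of_le₀ (by linarith) ha0.le)
  convert key using 2
  · field_simp; ring
  · field_simp; ring

theorem mul_div_sub_rpow_le_of_rpow_le (hc : 0 < c) (ha : c < a) (hx : c < x)
    (h : ((x - c) / (a - c)) ^ q ≤ x / a) :
    a * (c / (a - c)) ^ q ≤ x * (c / (x - c)) ^ q := by
  have ha0 : 0 < a := hc.trans ha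
  have hxc : 0 < x - c := sub_pos.mpr hx
  have hac : 0 < a - c := sub_pos.mpr ha
  have hsplit : c / (a - c) = c / (x - c) * ((x - c) / (a - c)) := by field_simp
  rw [hsplit, mul_rpow (by positivity) (by positivity)]
  calc a * ((c / (x - c)) ^ q * ((x - c) / (a - c)) ^ q)
      ≤ a * ((c / (x - c)) ^ q * (x / a)) := by gcongr
    _ = x * (c / (x - c)) ^ q := by field_simp

theorem mul_div_sub_rpow_le_of_le (hc : 0 < c) (hx : c < x) (hxa : x ≤ a)
    (hq : (a - c) / a ≤ q) :
    a * (c / (a - c)) ^ q ≤ x * (c / (x - c)) ^ q := by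
  have ha : c < a := hx.trans_le hxa
  refine mul_div_sub_rpow_le_of_rpow_le hc ha hx ?_
  refine (rpow_le_rpow_of_exponent_ge (div_pos (sub_pos.mpr hx) (sub_pos.mpr ha))
    ((div_le_one (sub_pos.mpr ha)).mpr (by linarith)) hq).trans ?_
  exact rpow_sub_div_sub_le_div hc ha hx

theorem mul_div_sub_rpow_le_of_ge (hc : 0 < c) (ha : c < a) (hax : a ≤ x)
    (hq : q ≤ (a - c) / a) :
    a * (c / (a - c)) ^ q ≤ x * (c / (x - c)) ^ q := by
  have hx : c < x := ha.trans_le hax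
  refine mul_div_sub_rpow_le_of_rpow_le hc ha hx ?_
  refine (rpow_le_rpow_of_exponent_le
    ((one_le_div (sub_pos.mpr ha)).mpr (by linarith)) hq).trans ?_
  exact rpow_sub_div_sub_le_div hc ha hx

end PowerLaw

section Exponent

variable {c : ℝ}

theorem log_add_one_div_self (hc : 0 < c) :
    log ((c + 1) / c) = log ((2 * c + 1) / (2 * c)) + log ((2 * c + 2) / (2 * c + 1)) := by
  rw [← log_mul (by positivity) (by positivity)]
  congr 1
  field_simp

theorem half_le_log_div_log (hc : 0 < c) :
    1 / 2 ≤ log ((2 * c + 1) / (2 * c)) / log ((c + 1) / c) := by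
  rw [le_div_iff₀ (log_pos (by rw [one_lt_div hc]; linarith)), log_add_one_div_self hc]
  have : log ((2 * c + 2) / (2 * c + 1)) ≤ log ((2 * c + 1) / (2 * c)) := by
    refine log_le_log (by positivity) ?_
    rw [div_le_div_iff₀ (by positivity) (by positivity)]
    nlinarith
  linarith

theorem log_div_log_le (hc : 0 < c) :
    log ((2 * c + 1) / (2 * c)) / log ((c + 1) / c) ≤ (c + 1) / (2 * c + 1) := by
  rw [div_le_div_iff₀ (log_pos (by rw [one_lt_div hc]; linarith)) (by positivity),
    log_add_one_div_self hc]
  have hA := log_le_sub_one_of_pos (x := (2 * c + 1) / (2 * c)) (by positivity)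
  have hB := one_sub_inv_le_log_of_pos (x := (2 * c + 2) / (2 * c + 1)) (by positivity)
  have hA' : c * log ((2 * c + 1) / (2 * c)) ≤ 1 / 2 := by
    calc _ ≤ c * ((2 * c + 1) / (2 * c) - 1) := by gcongr
      _ = 1 / 2 := by field_simp; ring
  have hB' : 1 / 2 ≤ (c + 1) * log ((2 * c + 2) / (2 * c + 1)) := by
    calc 1 / 2 = (c + 1) * (1 - ((2 * c + 2) / (2 * c + 1))⁻¹) := by field_simp; ring
      _ ≤ _ := by gcongr
  nlinarith

end Exponent

theorem div_add_one_rpow_log_div_log {c : ℝ} (hc : 0 < c) :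
    (c / (c + 1)) ^ (log ((2 * c + 1) / (2 * c)) / log ((c + 1) / c)) = 2 * c / (2 * c + 1) := by
  rw [← inv_div, inv_rpow (by positivity), log_div_log,
    rpow_logb (by positivity) (by rw [ne_eq, div_eq_one_iff_eq hc.ne']; linarith)
      (by positivity), inv_div]

/-- For `m ≥ 1`, `p_m = 2 log((2m+1)/(2m)) / log((m+1)/m)` and
`F_m(x) = x (m/(x-m))^{p_m/2}`, one has `F_m(k) ≥ 2m` for every integer `k > m`,
with equality for `k = 2m` and `k = 2m + 1`; i.e. the minimum of `F_m` over the
integers greater than `m` equals `2m`. -/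
theorem Fm_min_over_integers (m : ℕ) (hm : 1 ≤ m)
    (pm : ℝ)
    (hpm : pm = 2 * Real.log ((2 * (m : ℝ) + 1) / (2 * (m : ℝ))) /
        Real.log (((m : ℝ) + 1) / (m : ℝ)))
    (F : ℝ → ℝ) (hF : ∀ x : ℝ, F x = x * ((m : ℝ) / (x - (m : ℝ))) ^ (pm / 2)) :
    (∀ k : ℕ, m < k → 2 * (m : ℝ) ≤ F (k : ℝ)) ∧
      F (2 * (m : ℝ)) = 2 * (m : ℝ) ∧ F (2 * (m : ℝ) + 1) = 2 * (m : ℝ) := by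
  have hc : (0 : ℝ) < m := by exact_mod_cast hm
  have hq : pm / 2 = log ((2 * m + 1) / (2 * m)) / log ((m + 1) / m) := by rw [hpm]; ring
  have hF2m : F (2 * m) = 2 * m := by
    rw [hF, show 2 * (m : ℝ) - m = m by ring, div_self hc.ne', one_rpow, mul_one]
  have hF2m1 : F (2 * m + 1) = 2 * m := by
    rw [hF, hq, show 2 * (m : ℝ) + 1 - m = m + 1 by ring, div_add_one_rpow_log_div_log hc]
    field_simp
  refine ⟨fun k hk => ?_, hF2m, hF2m1⟩
  have hmk : (m : ℝ) < k := by exact_mod_cast hk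
  rcases le_or_gt k (2 * m) with hk2 | hk2
  · calc 2 * (m : ℝ) = F (2 * m) := hF2m.symm
      _ ≤ F k := by
        rw [hF, hF]
        refine mul_div_sub_rpow_le_of_le hc hmk (by exact_mod_cast hk2) ?_
        rw [hq, show (2 * (m : ℝ) - m) / (2 * m) = 1 / 2 by field_simp; ring]
        exact half_le_log_div_log hc
  · calc 2 * (m : ℝ) = F (2 * m + 1) := hF2m1.symm
      _ ≤ F k := by
        rw [hF, hF]
        refine mul_div_sub_rpow_le_of_ge hc (by linarith) (by exact_mod_cast hk2) ?_
        rw [hq, show 2 * (m : ℝ) + 1 - m = m + 1 by ring]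
        exact log_div_log_le hc
end

section
/- Let x_1, …, x_N be unit vectors in ℝ². Then ∑_{i,j=1}^N arccos|⟨x_i, x_j⟩| ≤ πN²/4 if N is even, and ∑_{i,j=1}^N arccos|⟨x_i, x_j⟩| ≤ π(N² − 1)/4 if N is odd (the sum being over all ordered pairs (i, j), including i = j). -/
/-!
Write `x i = (cos θᵢ, sin θᵢ)`. The angle between the lines spanned by `x i` and `x j` is half
the angle between the unit vectors of angles `2θᵢ` and `2θⱼ`, and by Crofton's formula on the
circle the latter is the measure of the set of directions `u ∈ [0, π)` whose line through the
origin separates the two points. Exchanging sum and integral, it suffices to count, for a fixed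
line, the ordered pairs it separates: with `P` points strictly on one side and `M` on the other,
there are `2PM ≤ 2⌊N²/4⌋` of them. Hence the sum is at most `π⌊N²/4⌋`.
-/

open MeasureTheory Real Finset RealInnerProductSpace

/-- `1` if the points of angles `p` and `q` on the unit circle lie strictly on opposite sides of
the line through the origin with direction angle `u`, and `0` otherwise. -/
noncomputable def sepIndicator (p q u : ℝ) : ℝ :=
  if sin (p - u) * sin (q - u) < 0 then 1 else 0

lemma measurable_sepIndicator (p q : ℝ) : Measurable (sepIndicator p q) :=
  Measurable.ite (measurableSet_lt (by fun_prop) measurable_const) measurable_const measurable_const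

lemma intervalIntegrable_sepIndicator (p q a b : ℝ) :
    IntervalIntegrable (sepIndicator p q) volume a b := by
  refine (intervalIntegrable_const (c := (1 : ℝ))).mono_fun
    (measurable_sepIndicator p q).aestronglyMeasurable (ae_of_all _ fun u => ?_)
  dsimp only [sepIndicator]
  split_ifs <;> simp

lemma sepIndicator_periodic (p q : ℝ) : Function.Periodic (sepIndicator p q) π := by
  intro u
  simp only [sepIndicator, sub_add_eq_sub_sub, sin_sub_pi, neg_mul_neg]

lemma sepIndicator_int_mul_two_pi_add (k : ℤ) (p q : ℝ) :
    sepIndicator (2 * k * π + p) q = sepIndicator p q := by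
  ext u
  rw [sepIndicator, sepIndicator, show 2 * k * π + p - u = p - u + k * (2 * π) by ring,
    sin_add_int_mul_two_pi]

lemma integral_sepIndicator_neg (p : ℝ) :
    ∫ u in 0..π, sepIndicator (-p) 0 u = ∫ u in 0..π, sepIndicator p 0 u := by
  have hneg : ∀ u, sepIndicator (-p) 0 u = sepIndicator p 0 (-u) := fun u => by
    rw [sepIndicator, sepIndicator, show -p - u = -(p - -u) by ring, sin_neg, zero_sub,
      zero_sub, sin_neg, neg_neg, neg_mul_neg]
  simp only [hneg, intervalIntegral.integral_comp_neg (sepIndicator p 0), neg_zero]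
  simpa using (sepIndicator_periodic p 0).intervalIntegral_add_eq (-π) 0

lemma integral_sepIndicator_of_mem_Icc {d : ℝ} (h0 : 0 ≤ d) (hπ : d ≤ π) :
    ∫ u in 0..π, sepIndicator d 0 u = d := by
  have hsep : ∫ u in 0..d, sepIndicator d 0 u = d := by
    rw [intervalIntegral.integral_congr_Ioo_of_le h0 (g := fun _ => 1) fun u hu => ?_]
    · simp
    have : 0 < sin (d - u) := sin_pos_of_pos_of_lt_pi (by linarith [hu.2]) (by linarith [hu.1])
    have : 0 < sin u := sin_pos_of_pos_of_lt_pi hu.1 (by linarith [hu.2])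
    simp only [sepIndicator, zero_sub, sin_neg]
    rw [if_pos (by nlinarith)]
  have hnosep : ∫ u in d..π, sepIndicator d 0 u = 0 := by
    rw [intervalIntegral.integral_congr_Ioo_of_le hπ (g := fun _ => 0) fun u hu => ?_]
    · simp
    have : sin (d - u) < 0 := sin_neg_of_neg_of_neg_pi_lt (by linarith [hu.1]) (by linarith [hu.2])
    have : 0 < sin u := sin_pos_of_pos_of_lt_pi (by linarith [hu.1]) hu.2
    simp only [sepIndicator, zero_sub, sin_neg]
    rw [if_neg (by nlinarith)]
  rw [← intervalIntegral.integral_add_adjacent_intervals (intervalIntegrable_sepIndicator ..)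
    (intervalIntegrable_sepIndicator ..), hsep, hnosep, add_zero]

lemma integral_sepIndicator_zero (p : ℝ) :
    ∫ u in 0..π, sepIndicator p 0 u = arccos (cos p) := by
  have h0 := arccos_nonneg (cos p)
  have hπ := arccos_le_pi (cos p)
  -- `p ≡ ± arccos (cos p) (mod 2π)`
  obtain ⟨k, hp | hp⟩ := cos_eq_cos_iff.1 (cos_arccos (neg_one_le_cos p) (cos_le_one p))
  · rw [hp, sepIndicator_int_mul_two_pi_add, integral_sepIndicator_of_mem_Icc h0 hπ, ← hp]
  · rw [hp, sub_eq_add_neg, sepIndicator_int_mul_two_pi_add, integral_sepIndicator_neg,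
      integral_sepIndicator_of_mem_Icc h0 hπ, ← sub_eq_add_neg, ← hp]

lemma integral_sepIndicator (p q : ℝ) :
    ∫ u in 0..π, sepIndicator p q u = arccos (cos (p - q)) := by
  have hshift : ∀ u, sepIndicator p q (u + q) = sepIndicator (p - q) 0 u := fun u => by
    rw [sepIndicator, sepIndicator, sub_add_eq_sub_sub, sub_add_eq_sub_sub_swap, sub_self,
      sub_right_comm]
  rw [← integral_sepIndicator_zero, ← funext hshift, intervalIntegral.integral_comp_add_right,
    zero_add, add_comm π]
  simpa using (sepIndicator_periodic p q).intervalIntegral_add_eq 0 q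

lemma sepIndicator_eq (p q u : ℝ) :
    sepIndicator p q u =
      (if 0 < sin (p - u) then 1 else 0) * (if sin (q - u) < 0 then 1 else 0) +
      (if sin (p - u) < 0 then 1 else 0) * (if 0 < sin (q - u) then 1 else 0) := by
  simp only [sepIndicator, mul_neg_iff]
  split_ifs <;> first | linarith | tauto

lemma sum_sum_sepIndicator {ι : Type*} [Fintype ι] (φ : ι → ℝ) (u : ℝ) :
    ∑ i, ∑ j, sepIndicator (φ i) (φ j) u =
      2 * #{i | 0 < sin (φ i - u)} * #{i | sin (φ i - u) < 0} := by
  simp only [sepIndicator_eq, sum_add_distrib, ← sum_mul_sum, sum_boole]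
  ring

lemma Nat.mul_le_sq_div_four {a b n : ℕ} (h : a + b ≤ n) : a * b ≤ n ^ 2 / 4 := by
  rw [Nat.le_div_iff_mul_le four_pos, mul_comm, ← mul_assoc]
  exact (four_mul_le_sq_add a b).trans (Nat.pow_le_pow_left h 2)

lemma sum_sum_sepIndicator_le {ι : Type*} [Fintype ι] (φ : ι → ℝ) (u : ℝ) :
    ∑ i, ∑ j, sepIndicator (φ i) (φ j) u ≤ 2 * (Fintype.card ι ^ 2 / 4 : ℕ) := by
  classical
  have hdisj : Disjoint (α := Finset ι) {i | 0 < sin (φ i - u)} {i | sin (φ i - u) < 0} :=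
    disjoint_filter.2 fun _ _ h => h.asymm
  have hcard := (card_union_of_disjoint hdisj).symm.trans_le (card_le_univ _)
  rw [sum_sum_sepIndicator, mul_assoc]
  exact_mod_cast Nat.mul_le_mul_left 2 (Nat.mul_le_sq_div_four hcard)

lemma sum_sum_arccos_cos_sub_le {ι : Type*} [Fintype ι] (φ : ι → ℝ) :
    ∑ i, ∑ j, arccos (cos (φ i - φ j)) ≤ 2 * (Fintype.card ι ^ 2 / 4 : ℕ) * π := by
  have hint : ∀ i, IntervalIntegrable (fun u => ∑ j, sepIndicator (φ i) (φ j) u) volume 0 π :=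
    fun i => by simpa only [sum_fn] using
      IntervalIntegrable.sum univ fun j _ => intervalIntegrable_sepIndicator (φ i) (φ j) 0 π
  calc ∑ i, ∑ j, arccos (cos (φ i - φ j))
      = ∫ u in 0..π, ∑ i, ∑ j, sepIndicator (φ i) (φ j) u := by
        rw [intervalIntegral.integral_finsetSum fun i _ => hint i]
        refine sum_congr rfl fun i _ => ?_
        rw [intervalIntegral.integral_finsetSum fun j _ => intervalIntegrable_sepIndicator ..]
        simp only [integral_sepIndicator]
    _ ≤ ∫ _ in 0..π, (2 * (Fintype.card ι ^ 2 / 4 : ℕ) : ℝ) :=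
        intervalIntegral.integral_mono_on pi_pos.le
          (by simpa only [sum_fn] using IntervalIntegrable.sum univ fun i _ => hint i)
          intervalIntegrable_const fun u _ => sum_sum_sepIndicator_le φ u
    _ = 2 * (Fintype.card ι ^ 2 / 4 : ℕ) * π := by simp; ring

lemma arccos_abs_cos (x : ℝ) : arccos |cos x| = arccos (cos (2 * x)) / 2 := by
  have h0 := arccos_nonneg |cos x|
  have hπ := arccos_le_pi_div_two.2 (abs_nonneg (cos x))
  have hcos : cos (2 * arccos |cos x|) = cos (2 * x) := by
    rw [cos_two_mul, cos_arccos (by linarith [abs_nonneg (cos x)]) (abs_cos_le_one x), sq_abs,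
      ← cos_two_mul]
  rw [← hcos, arccos_cos (by linarith) (by linarith), mul_div_cancel_left₀ _ two_ne_zero]

lemma EuclideanSpace.exists_eq_cos_sin {x : EuclideanSpace ℝ (Fin 2)} (hx : ‖x‖ = 1) :
    ∃ θ, x 0 = cos θ ∧ x 1 = sin θ := by
  have hsq : x 0 ^ 2 + x 1 ^ 2 = 1 := by
    simpa [Fin.sum_univ_two, hx] using (EuclideanSpace.real_norm_sq_eq x).symm
  have hz : ‖(⟨x 0, x 1⟩ : ℂ)‖ = 1 := by
    rw [← pow_eq_one_iff_of_nonneg (norm_nonneg _) two_ne_zero, Complex.sq_norm,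
      Complex.normSq_mk, ← hsq]
    ring
  obtain ⟨θ, hθ⟩ := (Complex.norm_eq_one_iff _).1 hz
  exact ⟨θ, by simpa using congrArg Complex.re hθ.symm, by simpa using congrArg Complex.im hθ.symm⟩

lemma exists_inner_eq_cos_sub {ι : Type*} {x : ι → EuclideanSpace ℝ (Fin 2)}
    (hx : ∀ i, ‖x i‖ = 1) : ∃ θ : ι → ℝ, ∀ i j, ⟪x i, x j⟫ = cos (θ i - θ j) := by
  choose θ hcos hsin using fun i => EuclideanSpace.exists_eq_cos_sin (hx i)
  refine ⟨θ, fun i j => ?_⟩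
  simp only [PiLp.inner_apply, RCLike.inner_apply, conj_trivial, Fin.sum_univ_two, hcos, hsin,
    cos_sub]
  ring

theorem sum_sum_arccos_abs_inner_le {ι : Type*} [Fintype ι] {x : ι → EuclideanSpace ℝ (Fin 2)}
    (hx : ∀ i, ‖x i‖ = 1) :
    ∑ i, ∑ j, arccos |⟪x i, x j⟫| ≤ π * (Fintype.card ι ^ 2 / 4 : ℕ) := by
  obtain ⟨θ, hθ⟩ := exists_inner_eq_cos_sub hx
  have h := sum_sum_arccos_cos_sub_le (fun i => 2 * θ i)
  simp only [hθ, arccos_abs_cos, ← sum_div, mul_sub]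
  linarith

lemma Nat.cast_sq_div_four_of_even {n : ℕ} (hn : Even n) : ((n ^ 2 / 4 : ℕ) : ℝ) = n ^ 2 / 4 := by
  obtain ⟨k, rfl⟩ := hn
  rw [show (k + k) ^ 2 / 4 = k ^ 2 by rw [← two_mul, mul_pow]; norm_num]
  push_cast
  ring

lemma Nat.cast_sq_div_four_of_odd {n : ℕ} (hn : Odd n) :
    ((n ^ 2 / 4 : ℕ) : ℝ) = (n ^ 2 - 1) / 4 := by
  obtain ⟨k, rfl⟩ := hn
  rw [show (2 * k + 1) ^ 2 / 4 = k ^ 2 + k by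
    rw [show (2 * k + 1) ^ 2 = 1 + 4 * (k ^ 2 + k) by ring]; omega]
  push_cast
  ring

/-- Fejes Tóth's problem in the plane: for unit vectors `x₁, …, x_N` in `ℝ²`, the sum of
all pairwise line angles (over ordered pairs, including `i = j`) is at most `πN²/4` for
even `N` and at most `π(N² - 1)/4` for odd `N`. -/
theorem fejes_toth_plane (N : ℕ) (x : Fin N → EuclideanSpace ℝ (Fin 2))
    (hx : ∀ i, ‖x i‖ = 1) :
    (Even N → ∑ i, ∑ j, Real.arccos |⟪x i, x j⟫| ≤ Real.pi * (N : ℝ) ^ 2 / 4) ∧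
    (Odd N → ∑ i, ∑ j, Real.arccos |⟪x i, x j⟫| ≤ Real.pi * ((N : ℝ) ^ 2 - 1) / 4) := by
  have h := sum_sum_arccos_abs_inner_le hx
  rw [Fintype.card_fin] at h
  refine ⟨fun hN => ?_, fun hN => ?_⟩
  · rwa [Nat.cast_sq_div_four_of_even hN, ← mul_div_assoc] at h
  · rwa [Nat.cast_sq_div_four_of_odd hN, ← mul_div_assoc] at h
end

section
/- Let x_1, …, x_N be unit vectors in ℝ² with Gram matrix A (so A_{ij} = ⟨x_i, x_j⟩), and let p ∈ (0, 1.3]. Then E_p(A) = ∑_{i≠j} |A_{ij}|^p ≥ N(N−2)/2 if N is even, and E_p(A) ≥ (N−1)²/2 if N is odd. -/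
/-!
Identify `ℝ²` with `ℂ`, so that `⟪zᵢ, zⱼ⟫ = Re (zⱼ * conj zᵢ)`. The elementary bound
`|t| ^ p ≥ t² + (2 - p) / 2 · t² (1 - t²)` (for `|t| ≤ 1`, `p ≤ 2`), summed over all pairs, gives
`E_p ≥ N² / 2 - N + ‖∑ zᵢ²‖² / 2 + (2 - p) / 16 · (N² - ‖∑ zᵢ⁴‖²)`, and the even case follows.

For odd `N ≥ 5`, put `wᵢ = zᵢ²` and rotate the `wᵢ` so that `∑ wᵢ²` is a nonnegative real; with
`μ = ∑ (Im wᵢ)²` the last term becomes `(2 - p) / 4 · μ (N - μ)`, which suffices when `μ > 1`.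
When `μ ≤ 1`, the signs of the `Re wᵢ` have an odd, hence nonzero, sum, and superadditivity of
`s ↦ 1 - √(1 - s)` gives `(∑ Re wᵢ)² ≥ 1 - μ`. For `N = 3` the three inner products satisfy the
Gram relation `a² + b² + c² = 1 + 2abc`, and since `E_p` only grows as `p` decreases, a direct
estimate at `p = 13 / 10` finishes.
-/

open ComplexConjugate RealInnerProductSpace

theorem sq_add_mul_le_abs_rpow {p t : ℝ} (hp : p ≤ 2) (ht : |t| ≤ 1) :
    t ^ 2 + (2 - p) / 2 * (t ^ 2 * (1 - t ^ 2)) ≤ |t| ^ p := by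
  obtain rfl | ht0 := eq_or_ne t 0
  · simpa using Real.rpow_nonneg le_rfl p
  have ha := abs_pos.mpr ht0
  have hexp : 1 + (2 - p) * (1 - |t|) ≤ |t| ^ (p - 2) := by
    rw [Real.rpow_def_of_pos ha]
    nlinarith [Real.add_one_le_exp (Real.log |t| * (p - 2)), Real.log_le_sub_one_of_pos ha]
  calc t ^ 2 + (2 - p) / 2 * (t ^ 2 * (1 - t ^ 2))
      = |t| ^ 2 * (1 + (2 - p) / 2 * (1 - |t| ^ 2)) := by rw [sq_abs]; ring
    _ ≤ |t| ^ 2 * |t| ^ (p - 2) := by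
        gcongr
        nlinarith [mul_nonneg (sub_nonneg.2 hp) (sq_nonneg (1 - |t|))]
    _ = |t| ^ p := by rw [← Real.rpow_natCast, ← Real.rpow_add ha]; norm_num

theorem rpow_div_natCast_le_of_pow_le {x y : ℝ} (hx : 0 ≤ x) (hy : 0 ≤ y) {m n : ℕ} (hn : n ≠ 0)
    (h : x ^ m ≤ y ^ n) : x ^ ((m : ℝ) / n) ≤ y := by
  rw [div_eq_mul_inv, Real.rpow_mul hx, Real.rpow_natCast, ← Real.pow_rpow_inv_natCast hy hn]
  gcongr

theorem sq_le_mul_rpow_of_le {x : ℝ} (hx0 : 0 ≤ x) (hx : x ≤ 0.54) :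
    x ^ 2 ≤ 0.685 * x ^ (13 / 10 : ℝ) := by
  have h54 : (0.54 : ℝ) ^ ((7 : ℕ) / (10 : ℕ) : ℝ) ≤ 0.685 :=
    rpow_div_natCast_le_of_pow_le (by norm_num) (by norm_num) (by norm_num) (by norm_num)
  push_cast at h54
  have hsplit : x ^ 2 = x ^ (13 / 10 : ℝ) * x ^ (7 / 10 : ℝ) := by
    rw [← Real.rpow_add' hx0 (by norm_num), ← Real.rpow_natCast]; norm_num
  rw [hsplit, mul_comm (0.685 : ℝ)]
  gcongr
  exact (Real.rpow_le_rpow hx0 hx (by norm_num)).trans h54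

theorem mul_le_rpow_of_le {ε : ℝ} (hε0 : 0 ≤ ε) (hε : ε ≤ 0.46) :
    13 / 10 * ε ≤ ε ^ (13 / 20 : ℝ) := by
  have h46 : (0.46 : ℝ) ^ ((7 : ℕ) / (20 : ℕ) : ℝ) ≤ 10 / 13 :=
    rpow_div_natCast_le_of_pow_le (by norm_num) (by norm_num) (by norm_num) (by norm_num)
  push_cast at h46
  have hsmall : ε ^ (7 / 20 : ℝ) ≤ 10 / 13 :=
    (Real.rpow_le_rpow hε0 hε (by norm_num)).trans h46
  have hsplit : ε = ε ^ (13 / 20 : ℝ) * ε ^ (7 / 20 : ℝ) := by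
    rw [← Real.rpow_add' hε0 (by norm_num)]; norm_num
  nlinarith [Real.rpow_nonneg hε0 (13 / 20 : ℝ)]

/- Split at `α = 0.54`. Below it, `α² + β² + γ² ≥ 1 - 2 · 0.54³ ≥ 0.685`. Above it, Bernoulli bounds
`α ^ (13/10)` and subadditivity of `s ↦ s ^ (13/20)` bounds `β ^ (13/10) + γ ^ (13/10)`. -/
theorem one_le_rpow_add_rpow_add_rpow_of_le {α β γ : ℝ} (hβ0 : 0 ≤ β) (hγ0 : 0 ≤ γ)
    (hα1 : α ≤ 1) (hβα : β ≤ α) (hγα : γ ≤ α) (h : 1 ≤ α ^ 2 + β ^ 2 + γ ^ 2 + 2 * (α * β * γ)) :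
    1 ≤ α ^ (13 / 10 : ℝ) + β ^ (13 / 10 : ℝ) + γ ^ (13 / 10 : ℝ) := by
  have hα0 := hβ0.trans hβα
  rcases le_or_gt α 0.54 with hα | hα
  · have hprod : α * β * γ ≤ 0.54 ^ 3 := by
      have := hβα.trans hα; have := hγα.trans hα
      calc α * β * γ ≤ 0.54 * 0.54 * 0.54 := by gcongr
        _ = 0.54 ^ 3 := by ring
    nlinarith [sq_le_mul_rpow_of_le hα0 hα, sq_le_mul_rpow_of_le hβ0 (hβα.trans hα),
      sq_le_mul_rpow_of_le hγ0 (hγα.trans hα)]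
  · set ε := 1 - α
    have hε0 : 0 ≤ ε := by linarith
    -- `2 β γ ≤ β² + γ²` turns the constraint into `1 - α² ≤ (1 + α)(β² + γ²)`.
    have hβγ : ε ≤ β ^ 2 + γ ^ 2 := by nlinarith [mul_nonneg hα0 (sq_nonneg (β - γ))]
    have hsub : ε ^ (13 / 20 : ℝ) ≤ β ^ (13 / 10 : ℝ) + γ ^ (13 / 10 : ℝ) := by
      have hpow : ∀ x : ℝ, 0 ≤ x → (x ^ 2) ^ (13 / 20 : ℝ) = x ^ (13 / 10 : ℝ) := fun x hx => by
        rw [← Real.rpow_natCast, ← Real.rpow_mul hx]; norm_num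
      calc ε ^ (13 / 20 : ℝ) ≤ (β ^ 2 + γ ^ 2) ^ (13 / 20 : ℝ) := by gcongr
        _ ≤ (β ^ 2) ^ (13 / 20 : ℝ) + (γ ^ 2) ^ (13 / 20 : ℝ) :=
            Real.rpow_add_le_add_rpow (sq_nonneg β) (sq_nonneg γ) (by norm_num) (by norm_num)
        _ = β ^ (13 / 10 : ℝ) + γ ^ (13 / 10 : ℝ) := by rw [hpow β hβ0, hpow γ hγ0]
    have hbern : 1 - 13 / 10 * ε ≤ α ^ (13 / 10 : ℝ) := by
      have := one_add_mul_self_le_rpow_one_add (by linarith : (-1 : ℝ) ≤ -ε)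
        (by norm_num : (1 : ℝ) ≤ 13 / 10)
      rw [show 1 + -ε = α by ring] at this
      linarith
    linarith [mul_le_rpow_of_le hε0 (by linarith)]

theorem one_le_rpow_add_rpow_add_rpow {α β γ p : ℝ} (hp : p ≤ 13 / 10) (hα0 : 0 ≤ α)
    (hβ0 : 0 ≤ β) (hγ0 : 0 ≤ γ) (hα1 : α ≤ 1) (hβ1 : β ≤ 1) (hγ1 : γ ≤ 1)
    (h : 1 ≤ α ^ 2 + β ^ 2 + γ ^ 2 + 2 * (α * β * γ)) : 1 ≤ α ^ p + β ^ p + γ ^ p := by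
  have hmono : ∀ x : ℝ, 0 ≤ x → x ≤ 1 → x ^ (13 / 10 : ℝ) ≤ x ^ p := fun x hx0 hx1 =>
    Real.rpow_le_rpow_of_exponent_ge_of_imp hx0 hx1 hp fun _ h => by norm_num at h
  suffices 1 ≤ α ^ (13 / 10 : ℝ) + β ^ (13 / 10 : ℝ) + γ ^ (13 / 10 : ℝ) by
    linarith [hmono α hα0 hα1, hmono β hβ0 hβ1, hmono γ hγ0 hγ1]
  wlog hmax : β ≤ α ∧ γ ≤ α generalizing α β γ
  · rw [not_and_or, not_le, not_le] at hmax
    rcases le_total β γ with hβγ | hγβ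
    · have := this (α := γ) (β := β) (γ := α) hγ0 hβ0 hα0 hγ1 hβ1 hα1 (by linarith)
        ⟨hβγ, by rcases hmax with h | h <;> linarith⟩
      linarith
    · have := this (α := β) (β := α) (γ := γ) hβ0 hα0 hγ0 hβ1 hα1 hγ1 (by linarith)
        ⟨by rcases hmax with h | h <;> linarith, hγβ⟩
      linarith
  exact one_le_rpow_add_rpow_add_rpow_of_le hβ0 hγ0 hα1 hmax.1 hmax.2 h

theorem one_add_sqrt_one_sub_add_le {x y : ℝ} (hx : 0 ≤ x) (hy : 0 ≤ y) (hxy : x + y ≤ 1) :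
    1 + √(1 - (x + y)) ≤ √(1 - x) + √(1 - y) := by
  have hmul : √(1 - (x + y)) ≤ √(1 - x) * √(1 - y) := by
    rw [← Real.sqrt_mul (by linarith)]
    exact Real.sqrt_le_sqrt (by nlinarith)
  have hx' := Real.sq_sqrt (show 0 ≤ 1 - x by linarith)
  have hy' := Real.sq_sqrt (show 0 ≤ 1 - y by linarith)
  have hxy' := Real.sq_sqrt (show 0 ≤ 1 - (x + y) by linarith)
  refine le_of_pow_le_pow_left₀ two_ne_zero (by positivity) ?_
  nlinarith

theorem sum_one_sub_sqrt_one_sub_le {ι : Type*} (s : Finset ι) (f : ι → ℝ)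
    (h0 : ∀ i ∈ s, 0 ≤ f i) (h1 : ∑ i ∈ s, f i ≤ 1) :
    ∑ i ∈ s, (1 - √(1 - f i)) ≤ 1 - √(1 - ∑ i ∈ s, f i) := by
  induction s using Finset.cons_induction with
  | empty => simp
  | cons a s _ ih =>
    rw [Finset.forall_mem_cons] at h0
    rw [Finset.sum_cons] at h1 ⊢
    rw [Finset.sum_cons]
    have hs0 : 0 ≤ ∑ i ∈ s, f i := Finset.sum_nonneg h0.2
    have := one_add_sqrt_one_sub_add_le h0.1 hs0 h1
    linarith [ih h0.2 (by linarith)]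

theorem one_sub_sum_le_abs_sum_of_odd {ι : Type*} [Fintype ι] (hodd : Odd (Fintype.card ι))
    (c : ι → ℝ) (hc : ∀ i, |c i| ≤ 1) : 1 - ∑ i, (1 - |c i|) ≤ |∑ i, c i| := by
  set ε : ι → ℤ := fun i => if 0 ≤ c i then 1 else -1
  have hεc : ∀ i, c i = ε i - ε i * (1 - |c i|) := fun i => by
    by_cases h : 0 ≤ c i <;> simp [ε, h, abs_of_nonneg, abs_of_neg, not_le.mp]
  -- `∑ ε ≡ card ι ≡ 1 (mod 2)`, so the sum of the signs is a nonzero integer.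
  have hε : 1 ≤ |∑ i, (ε i : ℝ)| := by
    have hne : ∑ i, ε i ≠ 0 := fun h0 => by
      have h2 := congrArg (fun n : ℤ => (n : ZMod 2)) h0
      have hone : ∀ i, (ε i : ZMod 2) = 1 := fun i => by by_cases h : 0 ≤ c i <;> simp [ε, h]
      simp only [Int.cast_sum, hone, Finset.sum_const, Finset.card_univ, nsmul_eq_mul, mul_one,
        Int.cast_zero, (ZMod.natCast_eq_one_iff_odd).2 hodd] at h2
      exact one_ne_zero h2
    exact_mod_cast Int.one_le_abs hne
  have herr : |∑ i, (ε i : ℝ) * (1 - |c i|)| ≤ ∑ i, (1 - |c i|) := by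
    refine (Finset.abs_sum_le_sum_abs _ _).trans (Finset.sum_le_sum fun i _ => ?_)
    have : |(ε i : ℝ)| = 1 := by by_cases h : 0 ≤ c i <;> simp [ε, h]
    rw [abs_mul, this, one_mul, abs_of_nonneg (by linarith [hc i])]
  have hsum : ∑ i, c i = ∑ i, (ε i : ℝ) - ∑ i, (ε i : ℝ) * (1 - |c i|) := by
    rw [← Finset.sum_sub_distrib]; exact Finset.sum_congr rfl fun i _ => hεc i
  rw [hsum]
  linarith [abs_sub_abs_le_abs_sub (∑ i, (ε i : ℝ)) (∑ i, (ε i : ℝ) * (1 - |c i|))]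

theorem one_sub_sum_sq_le_sq_sum_of_odd {ι : Type*} [Fintype ι] (hodd : Odd (Fintype.card ι))
    (c s : ι → ℝ) (hcs : ∀ i, c i ^ 2 + s i ^ 2 = 1) (hs : ∑ i, s i ^ 2 ≤ 1) :
    1 - ∑ i, s i ^ 2 ≤ (∑ i, c i) ^ 2 := by
  have habs : ∀ i, |c i| = √(1 - s i ^ 2) := fun i => by
    rw [← Real.sqrt_sq_eq_abs, ← hcs i, add_sub_cancel_right]
  have hc1 : ∀ i, |c i| ≤ 1 := fun i => by
    rw [habs]; exact Real.sqrt_le_one.mpr (by linarith [sq_nonneg (s i)])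
  have hparity := one_sub_sum_le_abs_sum_of_odd hodd c hc1
  have hconvex := sum_one_sub_sqrt_one_sub_le Finset.univ (fun i => s i ^ 2)
    (fun i _ => sq_nonneg (s i)) hs
  simp only [← habs] at hconvex
  have hroot : √(1 - ∑ i, s i ^ 2) ≤ |∑ i, c i| := by linarith
  calc 1 - ∑ i, s i ^ 2 = √(1 - ∑ i, s i ^ 2) ^ 2 := (Real.sq_sqrt (by linarith)).symm
    _ ≤ |∑ i, c i| ^ 2 := by gcongr
    _ = (∑ i, c i) ^ 2 := sq_abs _

theorem half_add_re_sq_add_le_abs_re_rpow {c : ℂ} (hc : ‖c‖ = 1) {p : ℝ} (hp : p ≤ 2) :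
    1 / 2 + (c ^ 2).re / 2 + (2 - p) / 16 * (1 - (c ^ 4).re) ≤ |c.re| ^ p := by
  have hn : c.re ^ 2 + c.im ^ 2 = 1 := by
    have := Complex.normSq_apply c
    rw [← Complex.sq_norm, hc] at this
    linarith
  have h2 : (c ^ 2).re = c.re ^ 2 - c.im ^ 2 := by simp [sq]
  have h4 : (c ^ 4).re = (c.re ^ 2 - c.im ^ 2) ^ 2 - (2 * c.re * c.im) ^ 2 := by
    rw [show c ^ 4 = (c ^ 2) ^ 2 by ring]; simp [sq]; ring
  convert sq_add_mul_le_abs_rpow hp ((Complex.abs_re_le_norm c).trans hc.le) using 1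
  rw [h2, h4]
  linear_combination (-1 / 2 + (2 - p) / 16 * (8 * c.re ^ 2 - 2 - (c.re ^ 2 + c.im ^ 2 - 1))) * hn

theorem sum_sum_re_mul_conj {ι : Type*} [Fintype ι] (f : ι → ℂ) :
    ∑ i, ∑ j, (f j * conj (f i)).re = ‖∑ i, f i‖ ^ 2 := by
  simp_rw [← Complex.re_sum, mul_comm (f _), ← Finset.sum_mul_sum, ← map_sum, Complex.conj_mul']
  norm_cast

noncomputable def planeFrameEnergy {ι : Type*} [Fintype ι] [DecidableEq ι] (p : ℝ) (z : ι → ℂ) :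
    ℝ :=
  ∑ i, ∑ j, if i = j then 0 else |⟪z i, z j⟫| ^ p

theorem planeFrameEnergy_eq_sum_sub_card {ι : Type*} [Fintype ι] [DecidableEq ι] (p : ℝ)
    (z : ι → ℂ) (hz : ∀ i, ‖z i‖ = 1) :
    planeFrameEnergy p z = ∑ i, ∑ j, |⟪z i, z j⟫| ^ p - Fintype.card ι := by
  have hdiag : ∀ i, |⟪z i, z i⟫| ^ p = 1 := fun i => by simp [hz]
  simp only [planeFrameEnergy, Finset.sum_ite, Finset.sum_const_zero, zero_add, Finset.filter_ne,
    Finset.sum_erase_eq_sub (Finset.mem_univ _), hdiag, Finset.sum_sub_distrib, Finset.sum_const,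
    Finset.card_univ, nsmul_eq_mul, mul_one]

theorem lowerBound_le_planeFrameEnergy {ι : Type*} [Fintype ι] [DecidableEq ι] (z : ι → ℂ)
    (hz : ∀ i, ‖z i‖ = 1) {p : ℝ} (hp : p ≤ 2) :
    (Fintype.card ι : ℝ) ^ 2 / 2 - Fintype.card ι + ‖∑ i, z i ^ 2‖ ^ 2 / 2
      + (2 - p) / 16 * ((Fintype.card ι : ℝ) ^ 2 - ‖∑ i, z i ^ 4‖ ^ 2)
      ≤ planeFrameEnergy p z := by
  have hpt : ∀ i j, 1 / 2 + (z j ^ 2 * conj (z i ^ 2)).re / 2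
      + (2 - p) / 16 * (1 - (z j ^ 4 * conj (z i ^ 4)).re) ≤ |⟪z i, z j⟫| ^ p := fun i j => by
    have hc : ‖z j * conj (z i)‖ = 1 := by simp [hz]
    simpa [Complex.inner, mul_pow, ← map_pow] using half_add_re_sq_add_le_abs_re_rpow hc hp
  have hsum := Finset.sum_le_sum fun i (_ : i ∈ Finset.univ) =>
    Finset.sum_le_sum fun j (_ : j ∈ Finset.univ) => hpt i j
  simp only [Finset.sum_add_distrib, ← Finset.sum_div, Finset.sum_sub_distrib, ← Finset.mul_sum,
    sum_sum_re_mul_conj, Finset.sum_const, Finset.card_univ, nsmul_eq_mul] at hsum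
  rw [planeFrameEnergy_eq_sum_sub_card p z hz]
  linarith

theorem Complex.exists_norm_eq_one_sq_mul_eq_norm (B : ℂ) :
    ∃ ζ : ℂ, ‖ζ‖ = 1 ∧ ζ ^ 2 * B = ‖B‖ := by
  refine ⟨Complex.exp (↑(-B.arg / 2) * Complex.I), Complex.norm_exp_ofReal_mul_I _, ?_⟩
  have hB := Complex.norm_mul_exp_arg_mul_I B
  set θ := B.arg
  set r := ‖B‖
  rw [← hB, ← Complex.exp_nat_mul, mul_left_comm, ← Complex.exp_add]
  convert mul_one (r : ℂ) using 2
  rw [← Complex.exp_zero]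
  push_cast
  ring_nf

theorem one_le_norm_sum_sq_add_of_sum_sq_eq_norm {ι : Type*} [Fintype ι]
    (hodd : Odd (Fintype.card ι)) (hcard : 5 ≤ Fintype.card ι) (w : ι → ℂ) (hw : ∀ i, ‖w i‖ = 1)
    (hreal : ∑ i, w i ^ 2 = ‖∑ i, w i ^ 2‖) {q : ℝ} (hq : 7 / 10 ≤ q) :
    1 ≤ ‖∑ i, w i‖ ^ 2 + q / 8 * ((Fintype.card ι : ℝ) ^ 2 - ‖∑ i, w i ^ 2‖ ^ 2) := by
  set N : ℝ := (Fintype.card ι : ℝ)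
  have hN : (5 : ℝ) ≤ N := by simp only [N]; exact_mod_cast hcard
  have hunit : ∀ i, (w i).re ^ 2 + (w i).im ^ 2 = 1 := fun i => by
    have := Complex.normSq_apply (w i)
    rw [← Complex.sq_norm, hw i] at this
    linarith
  set μ := ∑ i, (w i).im ^ 2
  have hμ0 : 0 ≤ μ := Finset.sum_nonneg fun i _ => sq_nonneg _
  have hnorm : ‖∑ i, w i ^ 2‖ = N - 2 * μ := by
    have hre2 : ∀ i, (w i ^ 2).re = 1 - 2 * (w i).im ^ 2 := fun i => by
      simp only [sq, Complex.mul_re]; linarith [hunit i]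
    conv_lhs => rw [← Complex.ofReal_re ‖_‖, ← hreal]
    rw [Complex.re_sum, Finset.sum_congr rfl fun i _ => hre2 i, Finset.sum_sub_distrib,
      ← Finset.mul_sum]
    simp [N, μ]
  have hμN : 2 * μ ≤ N := by linarith [norm_nonneg (∑ i, w i ^ 2)]
  have hre : (∑ i, (w i).re) ^ 2 ≤ ‖∑ i, w i‖ ^ 2 := by
    rw [← Complex.re_sum, Complex.sq_norm, sq]
    exact Complex.re_sq_le_normSq _
  have hgap : N ^ 2 - ‖∑ i, w i ^ 2‖ ^ 2 = 4 * (μ * (N - μ)) := by rw [hnorm]; ring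
  have hq' : 7 / 10 * (μ * (N - μ)) ≤ q * (μ * (N - μ)) :=
    mul_le_mul_of_nonneg_right hq (mul_nonneg hμ0 (by linarith))
  rw [hgap]
  -- `μ (N - μ)` is at least `4 μ` when `μ ≤ 1`, and at least `N - 1` when `1 < μ ≤ N / 2`.
  rcases le_or_gt μ 1 with hμ1 | hμ1
  · have := one_sub_sum_sq_le_sq_sum_of_odd hodd (fun i => (w i).re) (fun i => (w i).im) hunit hμ1
    nlinarith
  · nlinarith [mul_nonneg (sub_nonneg.2 hμ1.le) (by linarith : 0 ≤ N - 1 - μ)]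

theorem one_le_norm_sum_sq_add_of_odd {ι : Type*} [Fintype ι] (hodd : Odd (Fintype.card ι))
    (hcard : 5 ≤ Fintype.card ι) (w : ι → ℂ) (hw : ∀ i, ‖w i‖ = 1) {q : ℝ} (hq : 7 / 10 ≤ q) :
    1 ≤ ‖∑ i, w i‖ ^ 2 + q / 8 * ((Fintype.card ι : ℝ) ^ 2 - ‖∑ i, w i ^ 2‖ ^ 2) := by
  obtain ⟨ζ, hζ, hrot⟩ := Complex.exists_norm_eq_one_sq_mul_eq_norm (∑ i, w i ^ 2)
  have hsum : ∑ i, ζ * w i = ζ * ∑ i, w i := (Finset.mul_sum _ _ _).symm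
  have hsum2 : ∑ i, (ζ * w i) ^ 2 = ζ ^ 2 * ∑ i, w i ^ 2 := by
    simp only [mul_pow, Finset.mul_sum]
  have := one_le_norm_sum_sq_add_of_sum_sq_eq_norm hodd hcard (fun i => ζ * w i)
    (fun i => by simp [hζ, hw]) (by rw [hsum2, hrot]; simp) hq
  simpa only [hsum, hsum2, hrot, norm_mul, hζ, one_mul, Complex.norm_real, Real.norm_eq_abs,
    abs_norm] using this

theorem re_sq_add_re_sq_add_re_mul_sq {a b : ℂ} (ha : ‖a‖ = 1) (hb : ‖b‖ = 1) :
    a.re ^ 2 + b.re ^ 2 + (a * b).re ^ 2 = 1 + 2 * (a.re * b.re * (a * b).re) := by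
  have ha' := Complex.normSq_apply a
  have hb' := Complex.normSq_apply b
  rw [← Complex.sq_norm, ha] at ha'
  rw [← Complex.sq_norm, hb] at hb'
  rw [Complex.mul_re]
  linear_combination (-b.im ^ 2) * ha' - (1 - a.re ^ 2) * hb'

theorem two_le_planeFrameEnergy_fin_three (z : Fin 3 → ℂ) (hz : ∀ i, ‖z i‖ = 1) {p : ℝ}
    (hp : p ≤ 13 / 10) : 2 ≤ planeFrameEnergy p z := by
  set a := z 1 * conj (z 0)
  set b := z 2 * conj (z 1)
  have ha : ‖a‖ = 1 := by simp [a, hz]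
  have hb : ‖b‖ = 1 := by simp [b, hz]
  have hab : a * b = z 2 * conj (z 0) := by
    have : z 1 * conj (z 1) = 1 := by rw [Complex.mul_conj', hz]; simp
    linear_combination (z 2 * conj (z 0)) * this
  have h01 : ⟪z 0, z 1⟫ = a.re := Complex.inner _ _
  have h12 : ⟪z 1, z 2⟫ = b.re := Complex.inner _ _
  have h02 : ⟪z 0, z 2⟫ = (a * b).re := by rw [hab]; exact Complex.inner _ _
  have hE : planeFrameEnergy p z = 2 * (|a.re| ^ p + |b.re| ^ p + |(a * b).re| ^ p) := by
    simp only [planeFrameEnergy, Fin.sum_univ_three]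
    simp only [Fin.isValue, Fin.reduceEq, if_true, if_false]
    rw [real_inner_comm (z 0) (z 1), real_inner_comm (z 0) (z 2), real_inner_comm (z 1) (z 2), h01,
      h12, h02]
    ring
  have hgram := re_sq_add_re_sq_add_re_mul_sq ha hb
  have hre1 : ∀ c : ℂ, ‖c‖ = 1 → |c.re| ≤ 1 := fun c hc => (Complex.abs_re_le_norm c).trans hc.le
  have key := one_le_rpow_add_rpow_add_rpow hp (abs_nonneg a.re) (abs_nonneg b.re)
    (abs_nonneg (a * b).re) (hre1 a ha) (hre1 b hb) (hre1 _ (by simp [ha, hb])) (by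
      rw [sq_abs, sq_abs, sq_abs, ← abs_mul, ← abs_mul]
      linarith [neg_abs_le (a.re * b.re * (a * b).re)])
  linarith

theorem pFrameEnergy_plane_general (N : ℕ) (x : Fin N → EuclideanSpace ℝ (Fin 2))
    (hx : ∀ i, ‖x i‖ = 1) (p : ℝ) (hp : p ≤ 1.3) :
    (Even N →
      (N : ℝ) * ((N : ℝ) - 2) / 2 ≤ ∑ i, ∑ j, if i = j then 0 else |⟪x i, x j⟫| ^ p) ∧
    (Odd N →
      ((N : ℝ) - 1) ^ 2 / 2 ≤ ∑ i, ∑ j, if i = j then 0 else |⟪x i, x j⟫| ^ p) := by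
  set z : Fin N → ℂ := fun i => Complex.orthonormalBasisOneI.repr.symm (x i)
  have hz : ∀ i, ‖z i‖ = 1 := fun i => (LinearIsometryEquiv.norm_map _ _).trans (hx i)
  have hE : (∑ i, ∑ j, if i = j then 0 else |⟪x i, x j⟫| ^ p) = planeFrameEnergy p z := by
    simp only [planeFrameEnergy, z, LinearIsometryEquiv.inner_map_map]
  have hp' : p ≤ 13 / 10 := by norm_num at hp; linarith
  have hbound := lowerBound_le_planeFrameEnergy z hz (by linarith : p ≤ 2)
  rw [Fintype.card_fin] at hbound
  rw [hE]
  refine ⟨fun _ => ?_, fun hodd => ?_⟩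
  · have h4 : ‖∑ i, z i ^ 4‖ ≤ N := (norm_sum_le _ _).trans (by simp [hz])
    have hgap : 0 ≤ (2 - p) / 16 * ((N : ℝ) ^ 2 - ‖∑ i, z i ^ 4‖ ^ 2) :=
      mul_nonneg (by linarith) (sub_nonneg.2 (pow_le_pow_left₀ (norm_nonneg _) h4 2))
    nlinarith [sq_nonneg ‖∑ i, z i ^ 2‖]
  obtain rfl | rfl | hN : N = 1 ∨ N = 3 ∨ 5 ≤ N := by obtain ⟨k, rfl⟩ := hodd; omega
  · simp [planeFrameEnergy]
  · norm_num
    exact two_le_planeFrameEnergy_fin_three z hz hp'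
  · have := one_le_norm_sum_sq_add_of_odd (by simpa using hodd) (by simpa using hN)
      (fun i => z i ^ 2) (by simp [hz]) (q := 2 - p) (by linarith)
    simp only [← pow_mul, Fintype.card_fin] at this
    norm_num at this
    linarith

/-- For the Gram matrix `A` of `N` unit vectors in the plane and `p ∈ (0, 1.3]`, the
`p`-frame energy satisfies `E_p(A) ≥ N(N-2)/2` for even `N` and `E_p(A) ≥ (N-1)²/2`
for odd `N`. -/
theorem pFrameEnergy_plane (N : ℕ) (x : Fin N → EuclideanSpace ℝ (Fin 2))
    (hx : ∀ i, ‖x i‖ = 1) (p : ℝ) (hp0 : 0 < p) (hp : p ≤ 1.3) :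
    (Even N →
      (N : ℝ) * ((N : ℝ) - 2) / 2 ≤ ∑ i, ∑ j, if i = j then 0 else |⟪x i, x j⟫| ^ p) ∧
    (Odd N →
      ((N : ℝ) - 1) ^ 2 / 2 ≤ ∑ i, ∑ j, if i = j then 0 else |⟪x i, x j⟫| ^ p) :=
  pFrameEnergy_plane_general N x hx p hp
end

section
/- Let u, v, w be unit vectors in ℝ². Suppose arccos|⟨u, v⟩| ≥ 1.34, arccos|⟨u, w⟩| ≤ arccos|⟨u, v⟩|, and arccos|⟨v, w⟩| ≤ arccos|⟨u, v⟩| (i.e., the angle between the lines of u and v is at least 1.34 and is the largest among the three pairwise line angles). Then |⟨u, w⟩|^{1.3} + |⟨v, w⟩|^{1.3} ≥ 1. -/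
/-!
Put `a = |⟪u, w⟫|`, `b = |⟪v, w⟫|`, `c = |⟪u, v⟫|`. Three unit vectors in the plane have a
vanishing Gram determinant, which gives `1 ≤ a² + b² + c² + 2abc`, while the angle hypotheses say
`c ≤ a`, `c ≤ b` and `c ≤ cos 1.34 < 0.231`. The resulting real inequality is proved by bounding
`x ^ 1.3` from below by tangent lines, on a few intervals for the smaller of `a` and `b`.
-/

open RealInnerProductSpace Module

theorem inner_sq_add_inner_sq_add_inner_sq_of_finrank_eq_two {E : Type*}
    [NormedAddCommGroup E] [InnerProductSpace ℝ E] [Fact (finrank ℝ E = 2)] {u v w : E}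
    (hu : ‖u‖ = 1) (hv : ‖v‖ = 1) (hw : ‖w‖ = 1) :
    ⟪u, w⟫ ^ 2 + ⟪v, w⟫ ^ 2 + ⟪u, v⟫ ^ 2 = 1 + 2 * ⟪u, w⟫ * ⟪v, w⟫ * ⟪u, v⟫ := by
  have : FiniteDimensional ℝ E := .of_fact_finrank_eq_succ 1
  set o : Orientation ℝ E (Fin 2) := (finBasisOfFinrankEq ℝ E Fact.out).orientation
  -- coordinates of `u` and `v` in the orthonormal frame `(w, J w)`
  have huv := o.inner_mul_inner_add_areaForm_mul_areaForm w u v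
  have hwu := o.inner_sq_add_areaForm_sq w u
  have hwv := o.inner_sq_add_areaForm_sq w v
  rw [hw, one_pow, one_mul] at huv hwu hwv
  rw [hu] at hwu
  rw [hv] at hwv
  rw [real_inner_comm w u, real_inner_comm w v]
  linear_combination (⟪w, u⟫ * ⟪w, v⟫ - o.areaForm w u * o.areaForm w v - ⟪u, v⟫) * huv
    + o.areaForm w v ^ 2 * hwu + (1 - ⟪w, u⟫ ^ 2) * hwv

theorem abs_real_inner_le_one_of_norm_eq_one {E : Type*} [NormedAddCommGroup E]
    [InnerProductSpace ℝ E] {x y : E} (hx : ‖x‖ = 1) (hy : ‖y‖ = 1) : |⟪x, y⟫| ≤ 1 := by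
  simpa [hx, hy] using abs_real_inner_le_norm x y

theorem Real.le_cos_of_le_arccos {x t : ℝ} (hx : x ∈ Set.Icc (-1) 1) (ht : 0 ≤ t)
    (h : t ≤ arccos x) : x ≤ cos t := by
  have := cos_le_cos_of_nonneg_of_le_pi ht (arccos_le_pi x) h
  rwa [cos_arccos hx.1 hx.2] at this

theorem Real.cos_one_point_three_four_le : cos 1.34 ≤ 231 / 1000 := by
  rw [← sin_pi_div_two_sub]
  have := sin_le (x := Real.pi / 2 - 1.34) (by linarith [pi_gt_three])
  linarith [pi_lt_d4]

theorem Real.rpow_add_mul_sub_le_rpow {p x y : ℝ} (hp : 1 ≤ p) (hx : 0 ≤ x) (hy : 0 < y) :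
    y ^ p + p * y ^ (p - 1) * (x - y) ≤ x ^ p := by
  have hbern := one_add_mul_self_le_rpow_one_add
    (by linarith [div_nonneg hx hy.le] : -1 ≤ x / y - 1) hp
  rw [add_sub_cancel, Real.div_rpow hx hy.le, le_div_iff₀ (by positivity)] at hbern
  rw [Real.rpow_sub_one hy.ne']
  calc y ^ p + p * (y ^ p / y) * (x - y) = (1 + p * (x / y - 1)) * y ^ p := by field_simp
    _ ≤ x ^ p := hbern

/-- The tangent line to `x ↦ x ^ 1.3` at `x = k ^ 10`, where its coefficients are polynomial
in `k`. -/
theorem tangent_le_rpow_thirteen_tenths {k x : ℝ} (hk : 0 < k) (hx : 0 ≤ x) :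
    13 / 10 * k ^ 3 * x - 3 / 10 * k ^ 13 ≤ x ^ (1.3 : ℝ) := by
  have hpow : ∀ e n : ℝ, 10 * e = n → (k ^ 10) ^ e = k ^ n := fun e n h => by
    rw [← Real.rpow_natCast_mul hk.le]; push_cast; rw [h]
  have := Real.rpow_add_mul_sub_le_rpow (by norm_num : (1 : ℝ) ≤ 1.3) hx (pow_pos hk 10)
  rw [hpow _ 13 (by norm_num), hpow _ 3 (by norm_num)] at this
  norm_num at this
  linarith

theorem four_mul_sq_le_rpow {a : ℝ} (ha : 0 ≤ a) (ha' : a ≤ 1 / 8) :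
    4 * a ^ 2 ≤ a ^ (1.3 : ℝ) := by
  have hsplit : a ^ 2 = a ^ (1.3 : ℝ) * a ^ (0.7 : ℝ) := by
    rw [← Real.rpow_add' ha (by norm_num)]; norm_num
  have h07 : a ^ (0.7 : ℝ) ≤ 1 / 4 := calc
    a ^ (0.7 : ℝ) ≤ (1 / 8) ^ (0.7 : ℝ) := Real.rpow_le_rpow ha ha' (by norm_num)
    _ ≤ (1 / 8) ^ (2 / 3 : ℝ) :=
      Real.rpow_le_rpow_of_exponent_ge (by norm_num) (by norm_num) (by norm_num)
    _ = 1 / 4 := by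
      rw [show (1 / 8 : ℝ) = (1 / 2) ^ 3 by norm_num, ← Real.rpow_natCast_mul (by norm_num)]
      norm_num
  nlinarith [Real.rpow_nonneg ha (1.3 : ℝ)]

theorem one_le_rpow_add_rpow_of_tangents {a b m ka kb : ℝ} (ha : 0 ≤ a) (hb : 0 ≤ b)
    (hka : 0 < ka) (hkb : 0 < kb) (hm : 1 - m ^ 2 ≤ b ^ 2)
    (hcell : (1 + 3 / 10 * ka ^ 13 + 3 / 10 * kb ^ 13 - 13 / 10 * ka ^ 3 * a) ^ 2 ≤
      (13 / 10 * kb ^ 3) ^ 2 * (1 - m ^ 2)) :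
    1 ≤ a ^ (1.3 : ℝ) + b ^ (1.3 : ℝ) := by
  have hRb : 1 + 3 / 10 * ka ^ 13 + 3 / 10 * kb ^ 13 - 13 / 10 * ka ^ 3 * a ≤
      13 / 10 * kb ^ 3 * b := by
    refine abs_le_of_sq_le_sq' ?_ (by positivity) |>.2
    nlinarith [pow_pos hkb 3]
  linarith [tangent_le_rpow_thirteen_tenths hka ha, tangent_le_rpow_thirteen_tenths hkb hb]

theorem one_le_rpow_add_rpow_of_le {a b c : ℝ} (hc : 0 ≤ c) (hca : c ≤ a) (hab : a ≤ b)
    (hb : b ≤ 1) (hc' : c ≤ 231 / 1000) (h : 1 ≤ a ^ 2 + b ^ 2 + c ^ 2 + 2 * a * b * c) :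
    1 ≤ a ^ (1.3 : ℝ) + b ^ (1.3 : ℝ) := by
  have ha : 0 ≤ a := hc.trans hca
  have hb0 : 0 ≤ b := ha.trans hab
  rcases le_or_gt (1 / 2) a with ha2 | ha2
  · have hS : 1 - c ≤ a ^ 2 + b ^ 2 := by nlinarith [mul_nonneg hc (sq_nonneg (a - b))]
    have hsum : 1174 / 1000 ≤ a + b := by
      nlinarith [mul_nonneg (sub_nonneg.2 ha2) (sub_nonneg.2 (ha2.trans hab))]
    linarith [tangent_le_rpow_thirteen_tenths (by norm_num : (0 : ℝ) < 19 / 20) ha,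
      tangent_le_rpow_thirteen_tenths (by norm_num : (0 : ℝ) < 19 / 20) hb0]
  have hac : 1 - (a + c) ^ 2 ≤ b ^ 2 := by
    nlinarith [mul_nonneg (mul_nonneg ha hc) (sub_nonneg.2 hb)]
  rcases le_or_gt a (1 / 8) with ha8 | ha8
  · have hb13 : b ^ 2 ≤ b ^ (1.3 : ℝ) := by
      simpa using
        Real.rpow_le_rpow_of_exponent_ge' hb0 hb (by norm_num) (by norm_num : (1.3 : ℝ) ≤ 2)
    nlinarith [four_mul_sq_le_rpow ha ha8]
  -- Cut points and tangent points `k ^ 10` were found numerically. The margin is smallest at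
  -- `a = 0.231`, where the binding bound on `c` switches from `c ≤ a` to `c ≤ 0.231`.
  rcases le_or_gt a (231 / 1000) with ha1 | ha1
  · refine one_le_rpow_add_rpow_of_tangents (m := 2 * a) (ka := 17 / 20) (kb := 1) ha hb0
      (by norm_num) one_pos (by nlinarith) ?_
    nlinarith [mul_nonneg (sub_nonneg.2 ha8.le) (sub_nonneg.2 ha1)]
  rcases le_or_gt a (35 / 100) with ha3 | ha3
  · refine one_le_rpow_add_rpow_of_tangents (m := a + 231 / 1000) (ka := 17 / 20) (kb := 1)
      ha hb0 (by norm_num) one_pos (by nlinarith) ?_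
    nlinarith [mul_nonneg (sub_nonneg.2 ha1.le) (sub_nonneg.2 ha3)]
  · refine one_le_rpow_add_rpow_of_tangents (m := a + 231 / 1000) (ka := 9 / 10) (kb := 19 / 20)
      ha hb0 (by norm_num) (by norm_num) (by nlinarith) ?_
    nlinarith [mul_nonneg (sub_nonneg.2 ha3.le) (sub_nonneg.2 ha2.le)]

theorem one_le_rpow_add_rpow {a b c : ℝ} (hc : 0 ≤ c) (hca : c ≤ a) (hcb : c ≤ b)
    (ha : a ≤ 1) (hb : b ≤ 1) (hc' : c ≤ 231 / 1000)
    (h : 1 ≤ a ^ 2 + b ^ 2 + c ^ 2 + 2 * a * b * c) :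
    1 ≤ a ^ (1.3 : ℝ) + b ^ (1.3 : ℝ) := by
  rcases le_total a b with hab | hba
  · exact one_le_rpow_add_rpow_of_le hc hca hab hb hc' h
  · rw [add_comm]
    exact one_le_rpow_add_rpow_of_le hc hcb hba ha hc' (by linarith)

/-- If `u, v, w` are unit vectors in the plane such that the angle between the lines of
`u` and `v` is at least `1.34` and is the largest of the three pairwise line angles, then
`|⟪u, w⟫|^{1.3} + |⟪v, w⟫|^{1.3} ≥ 1`. -/
theorem two_almost_orthogonal (u v w : EuclideanSpace ℝ (Fin 2))
    (hu : ‖u‖ = 1) (hv : ‖v‖ = 1) (hw : ‖w‖ = 1)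
    (huv : 1.34 ≤ Real.arccos |⟪u, v⟫|)
    (huw : Real.arccos |⟪u, w⟫| ≤ Real.arccos |⟪u, v⟫|)
    (hvw : Real.arccos |⟪v, w⟫| ≤ Real.arccos |⟪u, v⟫|) :
    1 ≤ |⟪u, w⟫| ^ (1.3 : ℝ) + |⟪v, w⟫| ^ (1.3 : ℝ) := by
  have : Fact (finrank ℝ (EuclideanSpace ℝ (Fin 2)) = 2) := ⟨finrank_euclideanSpace_fin⟩
  have mem {x y : EuclideanSpace ℝ (Fin 2)} (hx : ‖x‖ = 1) (hy : ‖y‖ = 1) :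
      |⟪x, y⟫| ∈ Set.Icc (-1) 1 :=
    ⟨by linarith [abs_nonneg ⟪x, y⟫], abs_real_inner_le_one_of_norm_eq_one hx hy⟩
  have hca := (Real.strictAntiOn_arccos.le_iff_ge (mem hu hw) (mem hu hv)).1 huw
  have hcb := (Real.strictAntiOn_arccos.le_iff_ge (mem hv hw) (mem hu hv)).1 hvw
  have hc := (Real.le_cos_of_le_arccos (mem hu hv) (by norm_num) huv).trans
    Real.cos_one_point_three_four_le
  have hgram : 1 ≤ |⟪u, w⟫| ^ 2 + |⟪v, w⟫| ^ 2 + |⟪u, v⟫| ^ 2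
      + 2 * |⟪u, w⟫| * |⟪v, w⟫| * |⟪u, v⟫| := by
    have := neg_abs_le (⟪u, w⟫ * ⟪v, w⟫ * ⟪u, v⟫)
    rw [abs_mul, abs_mul] at this
    simp only [sq_abs]
    linarith [inner_sq_add_inner_sq_add_inner_sq_of_finrank_eq_two hu hv hw]
  exact one_le_rpow_add_rpow (abs_nonneg _) hca hcb
    (abs_real_inner_le_one_of_norm_eq_one hu hw) (abs_real_inner_le_one_of_norm_eq_one hv hw) hc
    hgram
end

section
/- Let d ≥ 2 and let μ be any Borel probability measure on the unit sphere S^{d−1} ⊂ ℝ^d. Then the second-moment simplex energy satisfies ∫∫_{S^{d−1}×S^{d−1}} (⟨x, y⟩ + 1/d)² dμ(x) dμ(y) ≥ (d+1)/d². -/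
open RealInnerProductSpace MeasureTheory

/-!
Both moments of `⟪x, y⟫` are squared norms of means: `∫∫ ⟪x, y⟫ = ‖∫ x‖² ≥ 0`, and
`∫∫ ⟪x, y⟫² = ‖A‖²` for `A = ∫ x ⊗ x`, since `⟪x, y⟫² = ⟪x ⊗ x, y ⊗ y⟫`. On the unit sphere `A` has
trace `⟪A, I⟫ = 1`, so Cauchy–Schwarz against the identity `I` (with `‖I‖² = d`) gives `‖A‖² ≥ 1/d`.
Expanding `(⟪x, y⟫ + 1/d)²` then bounds the energy below by `1/d + 1/d²`.
-/

theorem integral_integral_inner_eq_norm_sq {X E : Type*} [MeasurableSpace X]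
    [NormedAddCommGroup E] [InnerProductSpace ℝ E] [CompleteSpace E]
    {μ : Measure X} {f : X → E} (hf : Integrable f μ) :
    ∫ x, ∫ y, ⟪f x, f y⟫ ∂μ ∂μ = ‖∫ x, f x ∂μ‖ ^ 2 := by
  simp_rw [integral_inner hf, real_inner_comm (∫ x, f x ∂μ), integral_inner hf]
  exact real_inner_self_eq_norm_sq _

theorem integral_integral_add_sq {X : Type*} [TopologicalSpace X] [CompactSpace X]
    [SecondCountableTopology X] [MeasurableSpace X] [BorelSpace X]
    (μ : Measure X) [IsProbabilityMeasure μ] {K : X → X → ℝ}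
    (hK : Continuous (Function.uncurry K)) (c : ℝ) :
    ∫ x, ∫ y, (K x y + c) ^ 2 ∂μ ∂μ =
      ∫ x, ∫ y, K x y ^ 2 ∂μ ∂μ + 2 * c * ∫ x, ∫ y, K x y ∂μ ∂μ + c ^ 2 := by
  have hint {F : X × X → ℝ} (hF : Continuous F) : Integrable F (μ.prod μ) :=
    hF.integrable_of_hasCompactSupport (.of_compactSpace F)
  replace hK : Continuous fun p : X × X => K p.1 p.2 := hK
  rw [← integral_prod (fun p => (K p.1 p.2 + c) ^ 2) (hint (by fun_prop)),
    ← integral_prod (fun p => K p.1 p.2 ^ 2) (hint (by fun_prop)),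
    ← integral_prod (fun p => K p.1 p.2) (hint hK)]
  simp_rw [add_sq, mul_right_comm 2 _ c]
  rw [integral_add (hint (by fun_prop)) (hint (by fun_prop)),
    integral_add (hint (by fun_prop)) (hint (by fun_prop)), integral_const_mul, integral_const]
  simp

namespace EuclideanSpace

variable {ι : Type*}

def tensorSq (x : EuclideanSpace ℝ ι) : EuclideanSpace ℝ (ι × ι) :=
  WithLp.toLp 2 fun p => x p.1 * x p.2

@[continuity, fun_prop]
theorem continuous_tensorSq : Continuous (tensorSq (ι := ι)) := by
  unfold tensorSq; fun_prop

theorem inner_tensorSq [Fintype ι] (x y : EuclideanSpace ℝ ι) :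
    ⟪tensorSq x, tensorSq y⟫ = ⟪x, y⟫ ^ 2 := by
  simp only [tensorSq, PiLp.inner_apply, RCLike.inner_apply, conj_trivial, Fintype.sum_prod_type,
    sq, Finset.sum_mul_sum]
  exact Finset.sum_congr rfl fun i _ => Finset.sum_congr rfl fun j _ => by ring

theorem inner_tensorSq_sum_basisFun [Fintype ι] [DecidableEq ι] (x : EuclideanSpace ℝ ι) :
    ⟪tensorSq x, ∑ i, tensorSq (basisFun ι ℝ i)⟫ = ‖x‖ ^ 2 := by
  simp_rw [inner_sum, inner_tensorSq, sq]
  rw [← real_inner_self_eq_norm_mul_norm, ← (basisFun ι ℝ).sum_inner_mul_inner x x]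
  simp only [real_inner_comm]

theorem norm_sq_sum_tensorSq_basisFun [Fintype ι] [DecidableEq ι] :
    ‖∑ i, tensorSq (basisFun ι ℝ i)‖ ^ 2 = Fintype.card ι := by
  rw [← real_inner_self_eq_norm_sq]
  nth_rw 1 [sum_inner]
  simp only [inner_tensorSq_sum_basisFun, (basisFun ι ℝ).orthonormal.1, one_pow, Finset.sum_const,
    Finset.card_univ, nsmul_eq_mul, mul_one]

end EuclideanSpace

open EuclideanSpace Metric

theorem one_div_card_le_integral_integral_inner_sq {ι : Type*} [Fintype ι]
    (μ : Measure (sphere (0 : EuclideanSpace ℝ ι) 1)) [IsProbabilityMeasure μ] :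
    1 / Fintype.card ι ≤ ∫ x, ∫ y, ⟪(x : EuclideanSpace ℝ ι), y⟫ ^ 2 ∂μ ∂μ := by
  classical
  set A := ∫ x, tensorSq (x : EuclideanSpace ℝ ι) ∂μ
  set I := ∑ i, tensorSq (basisFun ι ℝ i)
  have hT : Integrable (fun x : sphere (0 : EuclideanSpace ℝ ι) 1 =>
      tensorSq (x : EuclideanSpace ℝ ι)) μ :=
    (by fun_prop : Continuous _).integrable_of_hasCompactSupport (.of_compactSpace _)
  have hA : ∫ x, ∫ y, ⟪(x : EuclideanSpace ℝ ι), y⟫ ^ 2 ∂μ ∂μ = ‖A‖ ^ 2 := by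
    simp_rw [← inner_tensorSq]
    exact integral_integral_inner_eq_norm_sq hT
  have htrace : ⟪A, I⟫ = 1 := by
    rw [real_inner_comm, ← integral_inner hT]
    simp_rw [real_inner_comm _ I, I, inner_tensorSq_sum_basisFun, norm_eq_of_mem_sphere]
    simp
  have hCS : ⟪A, I⟫ ^ 2 ≤ ‖A‖ ^ 2 * ‖I‖ ^ 2 := by
    rw [← mul_pow]
    exact sq_le_sq' (neg_le_of_abs_le (abs_real_inner_le_norm A I)) (real_inner_le_norm A I)
  rw [htrace, norm_sq_sum_tensorSq_basisFun, one_pow] at hCS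
  rw [hA]
  exact div_le_of_le_mul₀ (by positivity) (by positivity) hCS

theorem simplex_energy_two_general (d : ℕ)
    (μ : Measure (Metric.sphere (0 : EuclideanSpace ℝ (Fin d)) 1))
    [IsProbabilityMeasure μ] :
    ((d : ℝ) + 1) / (d : ℝ) ^ 2 ≤
      ∫ x, ∫ y,
        (⟪(x : EuclideanSpace ℝ (Fin d)), (y : EuclideanSpace ℝ (Fin d))⟫ + 1 / (d : ℝ)) ^ 2
        ∂μ ∂μ := by
  have hval : Integrable (fun x : sphere (0 : EuclideanSpace ℝ (Fin d)) 1 =>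
      (x : EuclideanSpace ℝ (Fin d))) μ :=
    continuous_subtype_val.integrable_of_hasCompactSupport (.of_compactSpace _)
  rw [integral_integral_add_sq μ (K := fun x y => ⟪(x : EuclideanSpace ℝ (Fin d)), y⟫)
    (by fun_prop) (1 / d), integral_integral_inner_eq_norm_sq hval]
  have hquad := one_div_card_le_integral_integral_inner_sq μ
  rw [Fintype.card_fin] at hquad
  calc ((d : ℝ) + 1) / (d : ℝ) ^ 2 = 1 / d + 0 + (1 / d) ^ 2 := by
        rw [add_div, sq, div_self_mul_self']; ring
    _ ≤ _ := by gcongr; positivity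

/-- For any Borel probability measure `μ` on the unit sphere `S^{d-1} ⊂ ℝ^d`, `d ≥ 2`,
the energy `∫∫ (⟪x, y⟫ + 1/d)² dμ(x) dμ(y)` is at least `(d+1)/d²`. -/
theorem simplex_energy_two (d : ℕ) (hd : 2 ≤ d)
    (μ : Measure (Metric.sphere (0 : EuclideanSpace ℝ (Fin d)) 1))
    [IsProbabilityMeasure μ] :
    ((d : ℝ) + 1) / (d : ℝ) ^ 2 ≤
      ∫ x, ∫ y,
        (⟪(x : EuclideanSpace ℝ (Fin d)), (y : EuclideanSpace ℝ (Fin d))⟫ + 1 / (d : ℝ)) ^ 2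
        ∂μ ∂μ :=
  simplex_energy_two_general d μ
end

section
/- Let d ≥ 2, p ∈ (0, 2], and let μ be any Borel probability measure on the unit sphere S^{d−1} ⊂ ℝ^d. Then ∫∫_{S^{d−1}×S^{d−1}} |⟨x, y⟩ + 1/d|^p dμ(x) dμ(y) ≥ (d+1)^{p−1}/d^p, and equality holds when μ is the uniform (counting) probability measure on the d+1 vertices φ_1, …, φ_{d+1} of a regular simplex inscribed in S^{d−1} (unit vectors with ⟨φ_i, φ_j⟩ = −1/d for i ≠ j). In particular, the uniform distribution over the vertices of a regular simplex minimizes the energy I^Δ_{d,p}. -/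
/-!
Lifting `x ∈ S^{d-1}` to `x̃ = (x, 1/√d) ∈ ℝ^{d+1}` turns the kernel into `|⟪x̃, ỹ⟫|^p`, where all
`x̃` have squared norm `s = (d+1)/d`. For equal-norm vectors in `ℝⁿ` and `p ≤ 2`, the bound
`|t| ≤ s` gives `|t|^p ≥ s^(p-2) t²`, and the frame-potential bound `∫∫ ⟪x̃, ỹ⟫² ≥ s²/n` follows
from Cauchy–Schwarz against the identity matrix in the space of the tensors `x̃ x̃ᵀ`. Together they
give `∫∫ |⟪x̃, ỹ⟫|^p ≥ s^p/n` with `n = d+1`, which the simplex attains because its lifts are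
orthogonal.
-/

open RealInnerProductSpace MeasureTheory
open scoped ENNReal

namespace EuclideanSpace

variable {ι : Type*}

def outer (u : EuclideanSpace ℝ ι) : EuclideanSpace ℝ (ι × ι) :=
  WithLp.toLp 2 fun ij => u ij.1 * u ij.2

lemma inner_outer [Fintype ι] (u w : EuclideanSpace ℝ ι) : ⟪outer u, outer w⟫ = ⟪u, w⟫ ^ 2 := by
  simp only [outer, PiLp.inner_apply, RCLike.inner_apply, conj_trivial, sq, Finset.sum_mul_sum,
    Fintype.sum_prod_type]
  exact Finset.sum_congr rfl fun _ _ => Finset.sum_congr rfl fun _ _ => by ring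

lemma continuous_outer : Continuous (outer (ι := ι)) :=
  (PiLp.continuous_toLp 2 _).comp <| continuous_pi fun ij =>
    (PiLp.continuous_apply 2 _ ij.1).mul (PiLp.continuous_apply 2 _ ij.2)

lemma inner_sum_outer_single_outer [Fintype ι] [DecidableEq ι] (u : EuclideanSpace ℝ ι) :
    ⟪∑ i, outer (single i 1), outer u⟫ = ‖u‖ ^ 2 := by
  simp [sum_inner, inner_outer, real_norm_sq_eq, inner_single_left]

lemma norm_sum_outer_single_sq [Fintype ι] [DecidableEq ι] :
    ‖∑ i : ι, outer (single i (1 : ℝ))‖ ^ 2 = Fintype.card ι := by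
  rw [← real_inner_self_eq_norm_sq, inner_sum]
  simp [inner_sum_outer_single_outer]

def optionCons (a : ℝ) (u : EuclideanSpace ℝ ι) : EuclideanSpace ℝ (Option ι) :=
  WithLp.toLp 2 fun i => i.elim a u

lemma inner_optionCons [Fintype ι] (a b : ℝ) (u w : EuclideanSpace ℝ ι) :
    ⟪optionCons a u, optionCons b w⟫ = ⟪u, w⟫ + a * b := by
  simp [optionCons, PiLp.inner_apply, Fintype.sum_option, add_comm, mul_comm]

lemma continuous_optionCons (a : ℝ) : Continuous (optionCons (ι := ι) a) :=
  (PiLp.continuous_toLp 2 _).comp <| continuous_pi fun i =>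
    i.rec continuous_const fun j => PiLp.continuous_apply 2 _ j

end EuclideanSpace

lemma sq_div_norm_sq_le_integral_integral_inner {X E : Type*} [MeasurableSpace X]
    [NormedAddCommGroup E] [InnerProductSpace ℝ E] [CompleteSpace E]
    {μ : Measure X} [IsProbabilityMeasure μ] {ψ : X → E} (hψ : Integrable ψ μ) (v : E) {c : ℝ}
    (hc : ∀ x, ⟪v, ψ x⟫ = c) :
    c ^ 2 / ‖v‖ ^ 2 ≤ ∫ x, ∫ y, ⟪ψ x, ψ y⟫ ∂μ ∂μ := by
  set m := ∫ x, ψ x ∂μ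
  have hm : ∫ x, ∫ y, ⟪ψ x, ψ y⟫ ∂μ ∂μ = ‖m‖ ^ 2 := by
    have hinner : ∀ x, ∫ y, ⟪ψ x, ψ y⟫ ∂μ = ⟪m, ψ x⟫ := fun x => by
      rw [integral_inner hψ, real_inner_comm]
    simp only [hinner, integral_inner hψ, m, real_inner_self_eq_norm_sq]
  have hvm : ⟪v, m⟫ = c := by simp [m, ← integral_inner hψ, hc]
  rw [hm]
  refine div_le_of_le_mul₀ (by positivity) (by positivity) ?_
  rw [← hvm, ← mul_pow, mul_comm]
  exact sq_le_sq' (neg_le_of_abs_le (abs_real_inner_le_norm v m)) (real_inner_le_norm v m)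

lemma rpow_sub_two_mul_sq_le_abs_rpow {t M p : ℝ} (ht : |t| ≤ M) (hp : p ≤ 2) :
    M ^ (p - 2) * t ^ 2 ≤ |t| ^ p := by
  rcases (abs_nonneg t).eq_or_lt with h0 | hpos
  · rw [← sq_abs, ← h0]
    simpa using Real.rpow_nonneg le_rfl p
  · calc M ^ (p - 2) * t ^ 2 ≤ |t| ^ (p - 2) * |t| ^ (2 : ℝ) := by
          rw [Real.rpow_two, sq_abs]
          exact mul_le_mul_of_nonneg_right
            (Real.rpow_le_rpow_of_nonpos hpos ht (by linarith)) (sq_nonneg t)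
      _ = |t| ^ p := by rw [← Real.rpow_add hpos]; ring_nf

lemma integral_integral_mono_of_continuous {X Y : Type*} [TopologicalSpace X] [CompactSpace X]
    [SecondCountableTopology X] [MeasurableSpace X] [OpensMeasurableSpace X]
    [TopologicalSpace Y] [CompactSpace Y] [SecondCountableTopology Y] [MeasurableSpace Y]
    [OpensMeasurableSpace Y] {μ : Measure X} {ν : Measure Y} [IsFiniteMeasure μ]
    [IsFiniteMeasure ν] {F G : X → Y → ℝ} (hF : Continuous (Function.uncurry F))
    (hG : Continuous (Function.uncurry G)) (h : ∀ x y, F x y ≤ G x y) :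
    ∫ x, ∫ y, F x y ∂ν ∂μ ≤ ∫ x, ∫ y, G x y ∂ν ∂μ := by
  have hFi := hF.integrable_of_hasCompactSupport (HasCompactSupport.of_compactSpace _)
    (μ := μ.prod ν)
  have hGi := hG.integrable_of_hasCompactSupport (HasCompactSupport.of_compactSpace _)
    (μ := μ.prod ν)
  rw [integral_integral hFi, integral_integral hGi]
  exact integral_mono hFi hGi fun z => h z.1 z.2

section FramePotential

variable {X ι : Type*} [TopologicalSpace X] [CompactSpace X] [MeasurableSpace X]
  [OpensMeasurableSpace X] [Fintype ι] (μ : Measure X) [IsProbabilityMeasure μ]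
  {f : X → EuclideanSpace ℝ ι} {s : ℝ}

lemma sq_div_card_le_integral_integral_inner_sq (hf : Continuous f)
    (hs : ∀ x, ‖f x‖ ^ 2 = s) :
    s ^ 2 / Fintype.card ι ≤ ∫ x, ∫ y, ⟪f x, f y⟫ ^ 2 ∂μ ∂μ := by
  classical
  have hψ : Integrable (fun x => EuclideanSpace.outer (f x)) μ :=
    (EuclideanSpace.continuous_outer.comp hf).integrable_of_hasCompactSupport
      (HasCompactSupport.of_compactSpace _)
  have := sq_div_norm_sq_le_integral_integral_inner hψ
    (∑ i, EuclideanSpace.outer (EuclideanSpace.single i 1)) (c := s)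
    fun x => by rw [EuclideanSpace.inner_sum_outer_single_outer, hs]
  simpa only [EuclideanSpace.norm_sum_outer_single_sq, EuclideanSpace.inner_outer] using this

lemma rpow_div_card_le_integral_integral_abs_inner_rpow [SecondCountableTopology X]
    (hf : Continuous f) (hs : ∀ x, ‖f x‖ ^ 2 = s) {p : ℝ} (hp0 : 0 < p) (hp2 : p ≤ 2) :
    s ^ p / Fintype.card ι ≤ ∫ x, ∫ y, |⟪f x, f y⟫| ^ p ∂μ ∂μ := by
  obtain ⟨x₀⟩ := nonempty_of_isProbabilityMeasure μ
  have hs0 : 0 ≤ s := hs x₀ ▸ sq_nonneg _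
  have hbound : ∀ x y, |⟪f x, f y⟫| ≤ s := fun x y => by
    nlinarith [abs_real_inner_le_norm (f x) (f y), hs x, hs y, sq_nonneg (‖f x‖ - ‖f y‖)]
  have hinner : Continuous fun z : X × X => ⟪f z.1, f z.2⟫ :=
    (hf.comp continuous_fst).inner (hf.comp continuous_snd)
  calc s ^ p / Fintype.card ι = s ^ (p - 2) * (s ^ 2 / Fintype.card ι) := by
        rw [← mul_div_assoc, ← Real.rpow_natCast, ← Real.rpow_add' hs0 (by simp; linarith)]
        norm_num
    _ ≤ s ^ (p - 2) * ∫ x, ∫ y, ⟪f x, f y⟫ ^ 2 ∂μ ∂μ := by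
        gcongr
        exact sq_div_card_le_integral_integral_inner_sq μ hf hs
    _ = ∫ x, ∫ y, s ^ (p - 2) * ⟪f x, f y⟫ ^ 2 ∂μ ∂μ := by
        simp only [integral_const_mul]
    _ ≤ ∫ x, ∫ y, |⟪f x, f y⟫| ^ p ∂μ ∂μ :=
        integral_integral_mono_of_continuous (continuous_const.mul (hinner.pow 2))
          (hinner.abs.rpow_const fun _ => Or.inr hp0.le)
          fun x y => rpow_sub_two_mul_sq_le_abs_rpow (hbound x y) hp2

end FramePotential

lemma integral_smul_sum_dirac {X E ι : Type*} [MeasurableSpace X] [MeasurableSingletonClass X]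
    [NormedAddCommGroup E] [NormedSpace ℝ E] [CompleteSpace E] [Fintype ι] (c : ℝ≥0∞)
    (φ : ι → X) (f : X → E) :
    ∫ x, f x ∂(c • ∑ i, Measure.dirac (φ i)) = c.toReal • ∑ i, f (φ i) := by
  rw [integral_smul_measure, integral_finsetSum_measure fun i _ => integrable_dirac (by simp)]
  simp only [integral_dirac]

lemma sum_abs_inner_add_inv_rpow_of_simplex {d : ℕ} (hd : (0 : ℝ) < d) {p : ℝ} (hp0 : 0 < p)
    {ι : Type*} [Fintype ι] {φ : ι → Metric.sphere (0 : EuclideanSpace ℝ (Fin d)) 1}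
    (hφ : ∀ i j, i ≠ j →
      ⟪(φ i : EuclideanSpace ℝ (Fin d)), (φ j : EuclideanSpace ℝ (Fin d))⟫ = -(1 / (d : ℝ)))
    (i : ι) :
    ∑ j, |⟪(φ i : EuclideanSpace ℝ (Fin d)), φ j⟫ + 1 / d| ^ p = ((d + 1) / d) ^ p := by
  rw [Finset.sum_eq_single i (fun j _ hji => by simp [hφ i j (Ne.symm hji), hp0.ne']) (by simp),
    real_inner_self_eq_norm_sq, norm_eq_of_mem_sphere, abs_of_pos (by positivity)]
  congr 1
  field_simp

lemma add_one_div_rpow_div_add_one {d : ℝ} (hd : 0 < d) (p : ℝ) :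
    ((d + 1) / d) ^ p / (d + 1) = (d + 1) ^ (p - 1) / d ^ p := by
  have hd1 : 0 < d + 1 := by linarith
  rw [Real.div_rpow hd1.le hd.le, Real.rpow_sub_one hd1.ne']
  ring

/-- For `d ≥ 2` and `p ∈ (0, 2]`, every Borel probability measure `μ` on `S^{d-1}` has
energy `∫∫ |⟪x, y⟫ + 1/d|^p dμ dμ ≥ (d+1)^{p-1}/d^p`, with equality for the uniform
(counting) probability measure on the `d+1` vertices of a regular simplex inscribed in
the sphere; so the uniform distribution over a regular simplex minimizes `I^Δ_{d,p}`. -/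
theorem simplex_minimizes_energy (d : ℕ) (hd : 2 ≤ d) (p : ℝ) (hp0 : 0 < p)
    (hp2 : p ≤ 2) :
    (∀ μ : Measure (Metric.sphere (0 : EuclideanSpace ℝ (Fin d)) 1),
      IsProbabilityMeasure μ →
      ((d : ℝ) + 1) ^ (p - 1) / (d : ℝ) ^ p ≤
        ∫ x, ∫ y,
          |⟪(x : EuclideanSpace ℝ (Fin d)), (y : EuclideanSpace ℝ (Fin d))⟫ + 1 / (d : ℝ)| ^ p
          ∂μ ∂μ) ∧
    (∀ φ : Fin (d + 1) → Metric.sphere (0 : EuclideanSpace ℝ (Fin d)) 1,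
      (∀ i j, i ≠ j →
        ⟪(φ i : EuclideanSpace ℝ (Fin d)), (φ j : EuclideanSpace ℝ (Fin d))⟫ = -(1 / (d : ℝ))) →
      (∫ x, ∫ y,
          |⟪(x : EuclideanSpace ℝ (Fin d)), (y : EuclideanSpace ℝ (Fin d))⟫ + 1 / (d : ℝ)| ^ p
          ∂(((d : ℝ≥0∞) + 1)⁻¹ • ∑ i, Measure.dirac (φ i))
          ∂(((d : ℝ≥0∞) + 1)⁻¹ • ∑ i, Measure.dirac (φ i))) =
        ((d : ℝ) + 1) ^ (p - 1) / (d : ℝ) ^ p) := by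
  have hd0 : (0 : ℝ) < d := Nat.cast_pos.mpr (by omega)
  rw [← add_one_div_rpow_div_add_one hd0]
  refine ⟨fun μ _ => ?_, fun φ hφ => ?_⟩
  · let lift (x : Metric.sphere (0 : EuclideanSpace ℝ (Fin d)) 1) :=
      EuclideanSpace.optionCons √(1 / d) (x : EuclideanSpace ℝ (Fin d))
    have hlift : ∀ x y, ⟪lift x, lift y⟫ = ⟪(x : EuclideanSpace ℝ (Fin d)), y⟫ + 1 / d :=
      fun x y => by rw [EuclideanSpace.inner_optionCons, Real.mul_self_sqrt (by positivity)]
    have hlift_norm : ∀ x, ‖lift x‖ ^ 2 = (d + 1) / d := fun x => by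
      rw [← real_inner_self_eq_norm_sq, hlift, real_inner_self_eq_norm_sq, norm_eq_of_mem_sphere]
      field_simp
    have hcont : Continuous lift :=
      (EuclideanSpace.continuous_optionCons _).comp continuous_subtype_val
    simpa only [hlift, Fintype.card_option, Fintype.card_fin, Nat.cast_add, Nat.cast_one] using
      rpow_div_card_le_integral_integral_abs_inner_rpow μ hcont hlift_norm hp0 hp2
  · have hc : (((d : ℝ≥0∞) + 1)⁻¹).toReal = ((d : ℝ) + 1)⁻¹ := by
      rw [ENNReal.toReal_inv]; norm_cast
    simp only [integral_smul_sum_dirac, smul_eq_mul, ← Finset.mul_sum,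
      sum_abs_inner_add_inv_rpow_of_simplex hd0 hp0 hφ, hc, Finset.sum_const, Finset.card_univ,
      Fintype.card_fin, nsmul_eq_mul, Nat.cast_add, Nat.cast_one]
    field_simp
end
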